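/- arXiv:2402.12019 — 7 statements merged into one kernel-verified Lean document; each statement's English description precedes it below -/
import Mathlib

section
/- On a path graph, any walk starting at vertex v_s that visits both v_a and v_b (with a ≤ s ≤ b) has length at least min(s - a, b - s) + (b - a). Moreover, this bound is achieved: there is a walk of exactly this length visiting all vertices in the interval [v_a, v_b]. -/
lemma path_walk_step_bound (w : ℕ → ℕ)
    (hstep : ∀ t, w (t + 1) = w t ∨ w (t + 1) = w t + 1 ∨ w t = w (t + 1) + 1) :
    ∀ p k, w (p + k) ≤ w p + k ∧ w p ≤ w (p + k) + k := by
  intro p k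
  induction k with
  | zero => simp
  | succ k ih =>
    have h2 := hstep (p + k)
    have h3 : p + (k + 1) = p + k + 1 := rfl
    rw [h3]
    omega

/-- lower bound and achievability for a walk on a path graph
visiting `v_a` and `v_b` from start `v_s` with `a ≤ s ≤ b`. -/
theorem path_walk_visit_bound (n a b s : ℕ)
    (ha : 1 ≤ a) (hb : b ≤ n) (has : a ≤ s) (hsb : s ≤ b) :
    (∀ (w : ℕ → ℕ) (L : ℕ),
        w 0 = s →
        (∀ t, w (t + 1) = w t ∨ w (t + 1) = w t + 1 ∨ w t = w (t + 1) + 1) →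
        (∀ t, 1 ≤ w t ∧ w t ≤ n) →
        (∃ u ≤ L, w u = a) → (∃ u ≤ L, w u = b) →
        min (s - a) (b - s) + (b - a) ≤ L) ∧
    (∃ w : ℕ → ℕ,
        w 0 = s ∧
        (∀ t, w (t + 1) = w t ∨ w (t + 1) = w t + 1 ∨ w t = w (t + 1) + 1) ∧
        (∀ t, 1 ≤ w t ∧ w t ≤ n) ∧
        (∀ x, a ≤ x → x ≤ b →
          ∃ u ≤ min (s - a) (b - s) + (b - a), w u = x)) := by
  constructor
  · rintro w L h0 hstep hrange ⟨p, hpL, hpa⟩ ⟨q, hqL, hqb⟩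
    have H := path_walk_step_bound w hstep
    have H1 := H 0 p
    have H2 := H 0 q
    rw [Nat.zero_add] at H1 H2
    rw [h0, hpa] at H1
    rw [h0, hqb] at H2
    rcases le_total p q with hpq | hqp
    · have H3 := H p (q - p)
      rw [Nat.add_sub_cancel' hpq, hpa, hqb] at H3
      omega
    · have H3 := H q (p - q)
      rw [Nat.add_sub_cancel' hqp, hqb, hpa] at H3
      omega
  · rcases le_total (s - a) (b - s) with h | h
    · refine ⟨fun t => if t ≤ s - a then s - t else min (a + t - (s - a)) b,
        by simp, ?_, ?_, ?_⟩
      · intro t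
        dsimp only
        split_ifs <;> omega
      · intro t
        dsimp only
        split_ifs <;> omega
      · intro x hax hxb
        refine ⟨s - a + (x - a), by omega, ?_⟩
        dsimp only
        split_ifs <;> omega
    · refine ⟨fun t => if t ≤ b - s then s + t else max (b + (b - s) - t) a,
        by simp, ?_, ?_, ?_⟩
      · intro t
        dsimp only
        split_ifs <;> omega
      · intro t
        dsimp only
        split_ifs <;> omega
      · intro x hax hxb
        refine ⟨b - s + (b - x), by omega, ?_⟩
        dsimp only
        split_ifs <;> omega
end

section
/- Let S = {s_1,...,s_m} be a multiset of positive integers whose sum is divisible by k. There exists a partition of S into k subsets S_1,...,S_k with Σ_{s∈S_i} s = (Σ_{s∈S} s)/k for all i if and only if, on the complete graph with vertex set V^R ∪ V^T where |V^R| = k and |V^T| = m, with task t_i of duration s_i − 1 at the i-th vertex of V^T and robot R_i starting at the i-th vertex of V^R, there exists a task-completing collision-free set of k schedules with time span (Σ_{s∈S} s)/k. -/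
namespace SchedAux

variable {m : ℕ} (s : Fin m → ℕ)

lemma closed_sum (C : Finset (Fin m)) {j : Fin m} (hj : j ∈ C) :
    ∑ j' ∈ C.filter (fun j' => j' ≤ j), s j'
      = (∑ j' ∈ C.filter (fun j' => j' < j), s j') + s j := by
  have h : C.filter (fun j' => j' ≤ j)
      = insert j (C.filter (fun j' => j' < j)) := by
    ext x
    simp only [Finset.mem_filter, Finset.mem_insert]
    constructor
    · rintro ⟨hx, hxle⟩
      rcases lt_or_eq_of_le hxle with h' | h'
      · exact Or.inr ⟨hx, h'⟩
      · exact Or.inl h'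
    · rintro (rfl | ⟨hx, hxlt⟩)
      · exact ⟨hj, le_refl _⟩
      · exact ⟨hx, le_of_lt hxlt⟩
  rw [h, Finset.sum_insert (by simp)]
  ring

lemma prefix_mono (C : Finset (Fin m)) {j j' : Fin m} (hj : j ∈ C) (hlt : j < j') :
    (∑ x ∈ C.filter (fun x => x < j), s x) + s j
      ≤ ∑ x ∈ C.filter (fun x => x < j'), s x := by
  rw [← closed_sum s C hj]
  apply Finset.sum_le_sum_of_subset
  intro x hx
  simp only [Finset.mem_filter] at hx ⊢
  exact ⟨hx.1, lt_of_le_of_lt hx.2 hlt⟩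

lemma pick_unique (C : Finset (Fin m)) {t : ℕ} {j j' : Fin m}
    (hj : j ∈ C) (hj' : j' ∈ C)
    (h1 : (∑ x ∈ C.filter (fun x => x < j), s x) < t)
    (h2 : t ≤ (∑ x ∈ C.filter (fun x => x < j), s x) + s j)
    (h1' : (∑ x ∈ C.filter (fun x => x < j'), s x) < t)
    (h2' : t ≤ (∑ x ∈ C.filter (fun x => x < j'), s x) + s j') :
    j = j' := by
  rcases lt_trichotomy j j' with h | h | h
  · have := prefix_mono s C hj h; omega
  · exact h
  · have := prefix_mono s C hj' h; omega

lemma pick_exists (C : Finset (Fin m)) {N t : ℕ}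
    (hsum : ∑ x ∈ C, s x = N) (ht1 : 1 ≤ t) (htN : t ≤ N) :
    ∃ j ∈ C, (∑ x ∈ C.filter (fun x => x < j), s x) < t ∧
      t ≤ (∑ x ∈ C.filter (fun x => x < j), s x) + s j := by
  have hC : C.Nonempty := by
    rcases C.eq_empty_or_nonempty with rfl | h
    · simp at hsum; omega
    · exact h
  set jm := C.max' hC with hjm
  have hjmC : jm ∈ C := C.max'_mem hC
  have hclosed : ∑ x ∈ C.filter (fun x => x ≤ jm), s x = N := by
    rw [← hsum]
    congr 1
    apply Finset.filter_true_of_mem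
    intro x hx
    exact C.le_max' x hx
  have hjmD : t ≤ (∑ x ∈ C.filter (fun x => x < jm), s x) + s jm := by
    rw [← closed_sum s C hjmC, hclosed]; exact htN
  set D := C.filter (fun j => t ≤ (∑ x ∈ C.filter (fun x => x < j), s x) + s j) with hD
  have hDne : D.Nonempty := ⟨jm, by simp only [hD, Finset.mem_filter]; exact ⟨hjmC, hjmD⟩⟩
  set j0 := D.min' hDne with hj0
  have hj0D : j0 ∈ D := D.min'_mem hDne
  simp only [hD, Finset.mem_filter] at hj0D
  refine ⟨j0, hj0D.1, ?_, hj0D.2⟩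
  by_contra hcon
  push_neg at hcon
  have hEne : (C.filter (fun x => x < j0)).Nonempty := by
    rcases (C.filter (fun x => x < j0)).eq_empty_or_nonempty with he | h
    · rw [he] at hcon; simp at hcon; omega
    · exact h
  set j1 := (C.filter (fun x => x < j0)).max' hEne with hj1
  have hj1mem : j1 ∈ C.filter (fun x => x < j0) := Finset.max'_mem _ _
  simp only [Finset.mem_filter] at hj1mem
  have hEeq : C.filter (fun x => x ≤ j1) = C.filter (fun x => x < j0) := by
    ext x
    simp only [Finset.mem_filter]
    constructor
    · rintro ⟨hx, hxle⟩
      exact ⟨hx, lt_of_le_of_lt hxle hj1mem.2⟩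
    · rintro ⟨hx, hxlt⟩
      exact ⟨hx, Finset.le_max' _ x (by simp [Finset.mem_filter, hx, hxlt])⟩
  have hj1D : j1 ∈ D := by
    simp only [hD, Finset.mem_filter]
    refine ⟨hj1mem.1, ?_⟩
    have := closed_sum s C hj1mem.1
    rw [hEeq] at this
    omega
  have := D.min'_le j1 hj1D
  rw [← hj0] at this
  exact absurd hj1mem.2 (not_lt.mpr this)

end SchedAux

open SchedAux



/-- k-set partition ↔ schedules of time span (Σs)/k on the
complete graph with robot vertices `Fin k` and task vertices `Fin m`,
task `j` of duration `s j - 1`. -/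
theorem set_partition_iff_complete_graph_schedule (k m : ℕ) (hk : 0 < k)
    (s : Fin m → ℕ) (hs : ∀ j, 0 < s j) (hdvd : k ∣ ∑ j, s j) :
    (∃ f : Fin m → Fin k, ∀ i : Fin k,
        ∑ j ∈ Finset.univ.filter (fun j => f j = i), s j = (∑ j, s j) / k) ↔
    (∃ (w : Fin k → ℕ → (Fin k ⊕ Fin m)) (L : Fin k → ℕ) (f : Fin m → Fin k),
        (∀ r, w r 0 = Sum.inl r) ∧
        (∀ r t, L r ≤ t → w r t = w r (L r)) ∧
        (∀ (t : ℕ) (r r' : Fin k), r ≠ r' →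
          w r t ≠ w r' t ∧
          ¬(w r (t + 1) = w r' t ∧ w r' (t + 1) = w r t ∧ w r t ≠ w r (t + 1))) ∧
        (∀ j : Fin m, ∃ a, a + (s j - 1) ≤ L (f j) ∧
          ∀ u ≤ s j - 1, w (f j) (a + u) = Sum.inr j) ∧
        Finset.univ.sup L = (∑ j, s j) / k) := by
  constructor
  · rintro ⟨f, hf⟩
    have hkne : (Finset.univ : Finset (Fin k)).Nonempty := ⟨⟨0, hk⟩, Finset.mem_univ _⟩
    by_cases hm : m = 0
    · subst hm
      refine ⟨fun r _ => Sum.inl r, fun _ => 0, f, fun r => rfl, fun r t _ => rfl, ?_, ?_, ?_⟩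
      · intro t r r' hne
        constructor
        · simp [hne]
        · rintro ⟨_, _, h3⟩; exact h3 rfl
      · exact fun j => j.elim0
      · rw [Finset.sup_const hkne]
        simp
    · set N := (∑ j, s j) / k with hN
      have hNk : N * k = ∑ j, s j := Nat.div_mul_cancel hdvd
      have hpos : 0 < ∑ j, s j := Finset.sum_pos (fun j _ => hs j)
        ⟨⟨0, Nat.pos_of_ne_zero hm⟩, Finset.mem_univ _⟩
      have hN1 : 1 ≤ N := by
        rcases Nat.eq_zero_or_pos N with h | h
        · rw [h] at hNk; simp at hNk; omega
        · exact h
      set C : Fin k → Finset (Fin m) := fun i => Finset.univ.filter (fun j => f j = i) with hC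
      have hCsum : ∀ i, ∑ x ∈ C i, s x = N := hf
      have hmemC : ∀ i j, j ∈ C i ↔ f j = i := by
        intro i j; simp [hC]
      have hex : ∀ (i : Fin k) (t : ℕ), ∃ j : Fin m, (1 ≤ t ∧ t ≤ N) →
          (j ∈ C i ∧ (∑ x ∈ (C i).filter (fun x => x < j), s x) < t ∧
            t ≤ (∑ x ∈ (C i).filter (fun x => x < j), s x) + s j) := by
        intro i t
        by_cases ht : 1 ≤ t ∧ t ≤ N
        · obtain ⟨j, hj, h1, h2⟩ := pick_exists s (C i) (hCsum i) ht.1 ht.2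
          exact ⟨j, fun _ => ⟨hj, h1, h2⟩⟩
        · exact ⟨⟨0, Nat.pos_of_ne_zero hm⟩, fun h => absurd h ht⟩
      choose pick hpick using hex
      -- basic facts about pick
      have hpickC : ∀ i t, 1 ≤ t → t ≤ N → pick i t ∈ C i := fun i t h1 h2 => (hpick i t ⟨h1, h2⟩).1
      have hpickf : ∀ i t, 1 ≤ t → t ≤ N → f (pick i t) = i := by
        intro i t h1 h2
        have := hpickC i t h1 h2
        rwa [hmemC] at this
      set W : Fin k → ℕ → (Fin k ⊕ Fin m) :=
        fun i t => if t = 0 then Sum.inl i else Sum.inr (pick i (min t N)) with hW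
      have hmin1 : ∀ t : ℕ, t ≠ 0 → 1 ≤ min t N := by intro t ht; omega
      have hminN : ∀ t : ℕ, min t N ≤ N := fun t => min_le_right _ _
      have hWinr : ∀ i t, t ≠ 0 → W i t = Sum.inr (pick i (min t N)) := by
        intro i t ht; simp only [hW, if_neg ht]
      refine ⟨W, fun _ => N, f, ?_, ?_, ?_, ?_, ?_⟩
      · intro r; simp [hW]
      · intro r t h
        have h' : N ≤ t := h
        have htne : t ≠ 0 := by omega
        have hNne : N ≠ 0 := by omega
        rw [hWinr r t htne, hWinr r N hNne, min_eq_right h', min_self]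
      · intro t r r' hne
        constructor
        · rcases Nat.eq_zero_or_pos t with rfl | ht
          · simp [hW, hne]
          · have htne : t ≠ 0 := by omega
            rw [hWinr r t htne, hWinr r' t htne]
            intro h
            apply hne
            have h' := Sum.inr.inj h
            calc r = f (pick r (min t N)) := (hpickf r (min t N) (hmin1 t htne) (hminN t)).symm
              _ = f (pick r' (min t N)) := by rw [h']
              _ = r' := hpickf r' (min t N) (hmin1 t htne) (hminN t)
        · rintro ⟨hA, hB, _⟩
          rcases Nat.eq_zero_or_pos t with rfl | ht
          · rw [hWinr r 1 one_ne_zero] at hA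
            simp only [hW, if_pos rfl] at hA
            exact absurd hA (by simp)
          · have htne : t ≠ 0 := by omega
            rw [hWinr r (t+1) (Nat.succ_ne_zero t), hWinr r' t htne] at hA
            have h' := Sum.inr.inj hA
            apply hne
            calc r = f (pick r (min (t+1) N)) :=
                (hpickf r _ (hmin1 _ (Nat.succ_ne_zero t)) (hminN _)).symm
              _ = f (pick r' (min t N)) := by rw [h']
              _ = r' := hpickf r' _ (hmin1 t htne) (hminN t)
      · intro j
        set P := ∑ x ∈ (C (f j)).filter (fun x => x < j), s x with hP
        have hjC : j ∈ C (f j) := (hmemC (f j) j).mpr rfl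
        have hclosed : P + s j ≤ N := by
          rw [← hCsum (f j), hP, ← closed_sum s (C (f j)) hjC]
          apply Finset.sum_le_sum_of_subset
          exact Finset.filter_subset _ _
        refine ⟨P + 1, ?_, ?_⟩
        · show P + 1 + (s j - 1) ≤ N
          have := hs j; omega
        · intro u hu
          have hsj := hs j
          have ht1 : 1 ≤ P + 1 + u := by omega
          have htN : P + 1 + u ≤ N := by omega
          have htne : P + 1 + u ≠ 0 := by omega
          rw [hWinr (f j) (P + 1 + u) htne, min_eq_left htN]
          congr 1
          obtain ⟨hc, h1, h2⟩ := hpick (f j) (P + 1 + u) ⟨ht1, htN⟩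
          exact pick_unique s (C (f j)) hc hjC h1 h2 (by omega) (by omega)
      · rw [Finset.sup_const hkne]
  · rintro ⟨w, L, f, h0, hstat, hcol, htask, hsup⟩
    refine ⟨f, ?_⟩
    set N := (∑ j, s j) / k with hN
    choose a ha1 ha2 using htask
    have ha0 : ∀ j, 1 ≤ a j := by
      intro j
      by_contra h
      have h' : a j = 0 := by omega
      have h2 := ha2 j 0 (Nat.zero_le _)
      rw [h'] at h2
      simp only [Nat.zero_add] at h2
      rw [h0] at h2
      simp at h2
    have haN : ∀ j, a j + (s j - 1) ≤ N := fun j =>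
      le_trans (ha1 j) (le_trans (Finset.le_sup (f := L) (Finset.mem_univ (f j))) (le_of_eq hsup))
    have hwt : ∀ j t, t ∈ Finset.Icc (a j) (a j + (s j - 1)) → w (f j) t = Sum.inr j := by
      intro j t ht
      rw [Finset.mem_Icc] at ht
      have h' : t = a j + (t - a j) := by omega
      rw [h']
      exact ha2 j (t - a j) (by omega)
    have hcard : ∀ i : Fin k, ∑ j ∈ Finset.univ.filter (fun j => f j = i), s j ≤ N := by
      intro i
      have hdisj : ∀ j ∈ Finset.univ.filter (fun j => f j = i),
          ∀ j' ∈ Finset.univ.filter (fun j => f j = i), j ≠ j' →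
          Disjoint (Finset.Icc (a j) (a j + (s j - 1))) (Finset.Icc (a j') (a j' + (s j' - 1))) := by
        intro j hj j' hj' hne
        simp only [Finset.mem_filter, Finset.mem_univ, true_and] at hj hj'
        rw [Finset.disjoint_left]
        intro t ht ht'
        have e1 := hwt j t ht
        have e2 := hwt j' t ht'
        rw [hj, hj'] at *
        rw [e1] at e2
        exact hne (Sum.inr.inj e2)
      have h1 : ∑ j ∈ Finset.univ.filter (fun j => f j = i), s j
          = ∑ j ∈ Finset.univ.filter (fun j => f j = i),
              (Finset.Icc (a j) (a j + (s j - 1))).card := by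
        apply Finset.sum_congr rfl
        intro j _
        rw [Nat.card_Icc]
        have := hs j
        omega
      rw [h1, ← Finset.card_biUnion hdisj]
      calc ((Finset.univ.filter (fun j => f j = i)).biUnion
              (fun j => Finset.Icc (a j) (a j + (s j - 1)))).card
          ≤ (Finset.Icc 1 N).card := by
            apply Finset.card_le_card
            apply Finset.biUnion_subset.mpr
            intro j _
            exact Finset.Icc_subset_Icc (ha0 j) (haN j)
        _ = N := by rw [Nat.card_Icc]; omega
    have htot : ∑ i : Fin k, (∑ j ∈ Finset.univ.filter (fun j => f j = i), s j) = ∑ j, s j :=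
      Finset.sum_fiberwise _ _ _
    have hkN : N * k = ∑ j, s j := Nat.div_mul_cancel hdvd
    intro i
    by_contra hne
    have hlt : ∑ j ∈ Finset.univ.filter (fun j => f j = i), s j < N :=
      lt_of_le_of_ne (hcard i) hne
    have hsum : ∑ i' : Fin k, (∑ j ∈ Finset.univ.filter (fun j => f j = i'), s j)
        < ∑ _i' : Fin k, N :=
      Finset.sum_lt_sum (fun i' _ => hcard i') ⟨i, Finset.mem_univ i, hlt⟩
    rw [htot, Finset.sum_const, Finset.card_univ, Fintype.card_fin, smul_eq_mul,
      Nat.mul_comm] at hsum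
    omega
end

section
/- For a planar graph G on n vertices with a task of duration 1 placed on every vertex and a single robot starting at vertex v_s, there exists a task-completing schedule with time span exactly 2n − 1 if and only if G has a Hamiltonian path starting at v_s. -/
/-- Planarity via a straight-line embedding (equivalent to planarity by Fáry's
theorem): vertices map injectively to the plane and edge segments meet only at
shared endpoints. -/
def StraightLinePlanar {V : Type*} (G : SimpleGraph V) : Prop :=
  ∃ f : V → ℝ × ℝ, Function.Injective f ∧
    ∀ u v x y : V, G.Adj u v → G.Adj x y →
      ¬((u = x ∧ v = y) ∨ (u = y ∧ v = x)) →
      ∀ p ∈ segment ℝ (f u) (f v) ∩ segment ℝ (f x) (f y),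
        (p = f u ∨ p = f v) ∧ (p = f x ∨ p = f y)

open SimpleGraph

/-- From a step-by-step schedule one can extract a walk whose length equals the
number of move steps and whose support contains every visited vertex. -/
lemma trace_walk {n : ℕ} (G : SimpleGraph (Fin n)) (w : ℕ → Fin n)
    (hstep : ∀ t, w (t + 1) = w t ∨ G.Adj (w t) (w (t + 1))) :
    ∀ T, ∃ p : G.Walk (w 0) (w T),
      p.length = ((Finset.range T).filter (fun t => w (t+1) ≠ w t)).card ∧
      ∀ t ≤ T, w t ∈ p.support := by
  intro T
  induction T with
  | zero =>
    refine ⟨.nil, by simp, ?_⟩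
    intro t ht
    interval_cases t
    simp
  | succ T ih =>
    obtain ⟨p, hlen, hsupp⟩ := ih
    rcases hstep T with heq | hadj
    · refine ⟨p.copy rfl heq.symm, ?_, ?_⟩
      · rw [SimpleGraph.Walk.length_copy, hlen, Finset.range_add_one,
          Finset.filter_insert]
        simp [heq]
      · intro t ht
        rw [SimpleGraph.Walk.support_copy]
        rcases Nat.lt_succ_iff_lt_or_eq.mp (Nat.lt_succ_of_le ht) with h | h
        · exact hsupp t (Nat.lt_succ_iff.mp h)
        · rw [h, heq]; exact hsupp T le_rfl
    · refine ⟨p.concat hadj, ?_, ?_⟩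
      · rw [SimpleGraph.Walk.length_concat, hlen, Finset.range_add_one,
          Finset.filter_insert]
        have hne : w (T+1) ≠ w T := hadj.ne'
        rw [if_pos hne, Finset.card_insert_of_notMem (by simp)]
      · intro t ht
        rw [SimpleGraph.Walk.support_concat]
        rcases Nat.lt_succ_iff_lt_or_eq.mp (Nat.lt_succ_of_le ht) with h | h
        · simp only [List.concat_eq_append, List.mem_append]
          exact Or.inl (hsupp t (Nat.lt_succ_iff.mp h))
        · simp only [List.concat_eq_append, List.mem_append]
          exact Or.inr (by rw [h]; simp)

/-- on a planar graph with a duration-1 task on every vertex and a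
single robot starting at `vs`, a task-completing schedule of time span exactly
`2n - 1` exists iff `G` has a Hamiltonian path starting at `vs`. -/
theorem planar_schedule_iff_hamiltonian_path (n : ℕ) (hn : 0 < n)
    (G : SimpleGraph (Fin n)) (hpl : StraightLinePlanar G) (vs : Fin n) :
    (∃ w : ℕ → Fin n,
        w 0 = vs ∧
        (∀ t, w (t + 1) = w t ∨ G.Adj (w t) (w (t + 1))) ∧
        (∀ v : Fin n, ∃ a, a + 1 ≤ 2 * n - 1 ∧ w a = v ∧ w (a + 1) = v)) ↔
    (∃ (u : Fin n) (p : G.Walk vs u), p.IsHamiltonian) := by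
  constructor
  · rintro ⟨w, h0, hstep, htask⟩
    obtain ⟨q, hqlen, hqsupp⟩ := trace_walk G w hstep (2*n-1)
    -- stay steps: one per vertex, all distinct
    set S : Finset ℕ := (Finset.range (2*n-1)).filter (fun t => w (t+1) = w t)
      with hS
    choose a ha1 ha2 ha3 using htask
    have haS : ∀ v, a v ∈ S := by
      intro v
      rw [hS, Finset.mem_filter, Finset.mem_range]
      exact ⟨lt_of_lt_of_le (Nat.lt_succ_self _) (ha1 v), by rw [ha2 v, ha3 v]⟩
    have hainj : Function.Injective a := by
      intro u v huv
      rw [← ha2 u, ← ha2 v, huv]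
    have hcardS : n ≤ S.card := by
      have := Finset.card_le_card_of_injOn (s := (Finset.univ : Finset (Fin n)))
        (t := S) a (fun v _ => haS v) hainj.injOn
      simpa using this
    have hsum : S.card + ((Finset.range (2*n-1)).filter
        (fun t => w (t+1) ≠ w t)).card = 2*n-1 := by
      rw [hS]
      have := Finset.card_filter_add_card_filter_not
        (s := Finset.range (2*n-1)) (p := fun t => w (t+1) = w t)
      simpa using this
    have hqlen' : q.length ≤ n - 1 := by omega
    -- support covers everything and has length ≤ n
    have hsupplen : q.support.length ≤ n := by
      rw [SimpleGraph.Walk.length_support]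
      omega
    have hcover : ∀ v : Fin n, v ∈ q.support := by
      intro v
      have := hqsupp (a v) (le_trans (Nat.le_succ _) (ha1 v))
      rwa [ha2 v] at this
    have htfin : q.support.toFinset = Finset.univ := by
      apply Finset.eq_univ_iff_forall.mpr
      intro v
      simpa using hcover v
    have hdlen : q.support.dedup.length = n := by
      rw [← List.card_toFinset, htfin, Finset.card_univ, Fintype.card_fin]
    have hnodup : q.support.Nodup := by
      have hsub : q.support.dedup.Sublist q.support := List.dedup_sublist _
      have hle := hsub.length_le
      have : q.support.dedup = q.support :=
        hsub.eq_of_length (by omega)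
      rw [← this]
      exact List.nodup_dedup _
    refine ⟨w (2*n-1), q.copy h0 rfl, ?_⟩
    intro v
    rw [SimpleGraph.Walk.support_copy]
    exact List.count_eq_one_of_mem hnodup (hcover v)
  · rintro ⟨u, p, hp⟩
    have hlen : p.length = n - 1 := by
      rw [hp.length_eq, Fintype.card_fin]
    refine ⟨fun t => p.getVert (t / 2), by simp, ?_, ?_⟩
    · intro t
      rcases Nat.even_or_odd t with ⟨k, hk⟩ | ⟨k, hk⟩
      · left
        show p.getVert ((t+1)/2) = p.getVert (t/2)
        have h1 : (t + 1) / 2 = k := by omega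
        have h2 : t / 2 = k := by omega
        rw [h1, h2]
      · have h1 : (t + 1) / 2 = k + 1 := by omega
        have h2 : t / 2 = k := by omega
        show p.getVert ((t+1)/2) = p.getVert (t/2) ∨
          G.Adj (p.getVert (t/2)) (p.getVert ((t+1)/2))
        rw [h1, h2]
        by_cases hkl : k < p.length
        · exact Or.inr (p.adj_getVert_succ hkl)
        · left
          rw [p.getVert_of_length_le (by omega),
            p.getVert_of_length_le (by omega)]
    · intro v
      have hv : v ∈ p.support := hp.mem_support v
      obtain ⟨k, hk, hkv⟩ := SimpleGraph.Walk.mem_support_iff_exists_getVert.mp hv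
      -- hk : p.getVert k = v, hkv : k ≤ p.length
      refine ⟨2 * k, by omega, ?_, ?_⟩
      · show p.getVert (2 * k / 2) = v
        have h2 : 2 * k / 2 = k := by omega
        rw [h2, hk]
      · show p.getVert ((2 * k + 1) / 2) = v
        have h2 : (2 * k + 1) / 2 = k := by omega
        rw [h2, hk]
end

section
/- Let S = {s_1,...,s_m} be a multiset of integers, each at least 2, with even sum. Consider a star graph with center v_c and leaves {v^t_1,...,v^t_m, v^r_1, v^r_2}, with task t_i of duration 2s_i − 2 at leaf v^t_i, and two robots starting at v^r_1 and v^r_2. Then there exists a task-completing collision-free set of 2 schedules with time span at most 1 + Σ_{s∈S} s if and only if S can be partitioned into two subsets of equal sum. -/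
private def walkSched {m : ℕ} (s : Fin m → ℕ) :
    List (Fin m) → Option (Fin m ⊕ Fin 2) → ℕ → Option (Fin m ⊕ Fin 2)
  | [], v, _ => v
  | j :: l, v, t =>
    if t = 0 then v
    else if t = 1 then none
    else if t ≤ 2 * s j then some (Sum.inl j)
    else walkSched s l (some (Sum.inl j)) (t - 2 * s j)

private def wlen {m : ℕ} (s : Fin m → ℕ) (l : List (Fin m)) : ℕ :=
  (l.map fun j => 2 * s j).sum

private lemma walk_nil {m : ℕ} (s : Fin m → ℕ) (v : Option (Fin m ⊕ Fin 2)) (t : ℕ) :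
    walkSched s [] v t = v := rfl

private lemma walk_cons {m : ℕ} (s : Fin m → ℕ) (j : Fin m) (l : List (Fin m))
    (v : Option (Fin m ⊕ Fin 2)) (t : ℕ) :
    walkSched s (j :: l) v t = if t = 0 then v
    else if t = 1 then none
    else if t ≤ 2 * s j then some (Sum.inl j)
    else walkSched s l (some (Sum.inl j)) (t - 2 * s j) := rfl

private lemma walk_zero {m : ℕ} (s : Fin m → ℕ) (l : List (Fin m))
    (v : Option (Fin m ⊕ Fin 2)) : walkSched s l v 0 = v := by
  cases l <;> simp [walk_nil, walk_cons]

private lemma wlen_cons {m : ℕ} (s : Fin m → ℕ) (j : Fin m) (l : List (Fin m)) :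
    wlen s (j :: l) = 2 * s j + wlen s l := by simp [wlen]

private lemma walk_stable {m : ℕ} (s : Fin m → ℕ) (hs : ∀ j, 2 ≤ s j) :
    ∀ (l : List (Fin m)) (v : Option (Fin m ⊕ Fin 2)) (k : ℕ),
      walkSched s l v (wlen s l + k) = walkSched s l v (wlen s l) := by
  intro l
  induction l with
  | nil => intro v k; simp [walk_nil]
  | cons j l ih =>
    intro v k
    rcases Nat.eq_zero_or_pos k with hk | hk
    · simp [hk]
    have hsj := hs j
    rw [wlen_cons]
    have hL : walkSched s (j :: l) v (2 * s j + wlen s l + k)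
        = walkSched s l (some (Sum.inl j)) (wlen s l + k) := by
      rw [walk_cons, if_neg (by omega), if_neg (by omega), if_neg (by omega)]
      congr 1; omega
    rw [hL]
    by_cases hl : wlen s l = 0
    · have hR : walkSched s (j :: l) v (2 * s j + wlen s l) = some (Sum.inl j) := by
        rw [walk_cons, if_neg (by omega), if_neg (by omega), if_pos (by omega)]
      rw [hR, ih _ k, hl, walk_zero]
    · have hR : walkSched s (j :: l) v (2 * s j + wlen s l)
          = walkSched s l (some (Sum.inl j)) (wlen s l) := by
        rw [walk_cons, if_neg (by omega), if_neg (by omega), if_neg (by omega)]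
        congr 1; omega
      rw [hR]; exact ih _ k

private lemma walk_step {m : ℕ} (s : Fin m → ℕ) (hs : ∀ j, 2 ≤ s j) :
    ∀ (l : List (Fin m)) (v : Option (Fin m ⊕ Fin 2)) (t : ℕ),
      walkSched s l v (t + 1) = walkSched s l v t ∨
      walkSched s l v (t + 1) = none ∨ walkSched s l v t = none := by
  intro l
  induction l with
  | nil => intro v t; left; rfl
  | cons j l ih =>
    intro v t
    have hsj := hs j
    rcases Nat.lt_or_ge t 1 with ht | ht
    · right; left
      rw [walk_cons, if_neg (by omega), if_pos (by omega)]
    rcases Nat.lt_or_ge t 2 with ht2 | ht2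
    · right; right
      rw [walk_cons, if_neg (by omega), if_pos (by omega)]
    rcases Nat.lt_or_ge t (2 * s j) with ht3 | ht3
    · left
      rw [walk_cons, walk_cons]
      rw [if_neg (by omega), if_neg (by omega), if_pos (by omega),
        if_neg (by omega), if_neg (by omega), if_pos (by omega)]
    rcases Nat.eq_or_lt_of_le ht3 with ht4 | ht4
    · -- t = 2 * s j
      have hwt : walkSched s (j :: l) v t = some (Sum.inl j) := by
        rw [walk_cons, if_neg (by omega), if_neg (by omega), if_pos (by omega)]
      have hwt1 : walkSched s (j :: l) v (t + 1)
          = walkSched s l (some (Sum.inl j)) 1 := by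
        rw [walk_cons, if_neg (by omega), if_neg (by omega), if_neg (by omega)]
        congr 1; omega
      cases l with
      | nil => left; rw [hwt, hwt1, walk_nil]
      | cons j' l' =>
        right; left
        rw [hwt1, walk_cons, if_neg (by omega), if_pos rfl]
    · -- t > 2 * s j
      have e1 : walkSched s (j :: l) v (t + 1)
          = walkSched s l (some (Sum.inl j)) (t - 2 * s j + 1) := by
        rw [walk_cons, if_neg (by omega), if_neg (by omega), if_neg (by omega)]
        congr 1; omega
      have e2 : walkSched s (j :: l) v t
          = walkSched s l (some (Sum.inl j)) (t - 2 * s j) := by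
        rw [walk_cons, if_neg (by omega), if_neg (by omega), if_neg (by omega)]
      rw [e1, e2]
      exact ih _ _

private lemma walk_none_mod {m : ℕ} (s : Fin m → ℕ) :
    ∀ (l : List (Fin m)) (v₀ : Fin m ⊕ Fin 2) (t : ℕ),
      walkSched s l (some v₀) t = none → t % 2 = 1 := by
  intro l
  induction l with
  | nil => intro v₀ t h; simp [walk_nil] at h
  | cons j l ih =>
    intro v₀ t h
    rw [walk_cons] at h
    by_cases h0 : t = 0
    · simp [h0] at h
    by_cases h1 : t = 1
    · omega
    by_cases h2 : t ≤ 2 * s j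
    · simp [h0, h1, h2] at h
    rw [if_neg h0, if_neg h1, if_neg h2] at h
    have := ih (Sum.inl j) _ h
    omega

private lemma walk_values {m : ℕ} (s : Fin m → ℕ) :
    ∀ (l : List (Fin m)) (v : Option (Fin m ⊕ Fin 2)) (t : ℕ) (x : Fin m ⊕ Fin 2),
      walkSched s l v t = some x → v = some x ∨ ∃ j ∈ l, x = Sum.inl j := by
  intro l
  induction l with
  | nil => intro v t x h; left; exact h
  | cons j l ih =>
    intro v t x h
    rw [walk_cons] at h
    by_cases h0 : t = 0
    · left; simpa [h0] using h
    by_cases h1 : t = 1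
    · simp [h0, h1] at h
    by_cases h2 : t ≤ 2 * s j
    · simp only [h0, h1, h2, if_false, if_true] at h
      right; exact ⟨j, by simp, by injection h with h; exact h.symm⟩
    · rw [if_neg h0, if_neg h1, if_neg h2] at h
      rcases ih _ _ _ h with h' | ⟨j', hj', hx⟩
      · right; exact ⟨j, by simp, by injection h' with h'; exact h'.symm⟩
      · right; exact ⟨j', by simp [hj'], hx⟩

private lemma walk_task {m : ℕ} (s : Fin m → ℕ) (hs : ∀ j, 2 ≤ s j) :
    ∀ (l : List (Fin m)) (v : Option (Fin m ⊕ Fin 2)) (j : Fin m), j ∈ l →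
      ∃ a, 2 ≤ a ∧ a + (2 * s j - 2) ≤ wlen s l ∧
        ∀ u ≤ 2 * s j - 2, walkSched s l v (a + u) = some (Sum.inl j) := by
  intro l
  induction l with
  | nil => intro v j h; simp at h
  | cons j' l ih =>
    intro v j hj
    have hsj := hs j
    rcases List.mem_cons.mp hj with rfl | hj
    · refine ⟨2, le_refl 2, by rw [wlen_cons]; omega, ?_⟩
      intro u hu
      rw [walk_cons, if_neg (by omega), if_neg (by omega), if_pos (by omega)]
    · obtain ⟨a, ha2, halen, hval⟩ := ih (some (Sum.inl j')) j hj
      refine ⟨a + 2 * s j', by omega, by rw [wlen_cons]; omega, ?_⟩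
      intro u hu
      rw [walk_cons, if_neg (by omega), if_neg (by omega), if_neg (by omega)]
      have : a + 2 * s j' + u - 2 * s j' = a + u := by omega
      rw [this]
      exact hval u hu

/-- on the star graph (center `none`, task leaves `some (inl i)`,
robot leaves `some (inr r)`), with task `i` of duration `2 s i - 2` and two
robots on their leaves, a task-completing collision-free pair of schedules of
time span at most `1 + Σ s` exists iff `S` has a partition into two subsets of
equal sum. -/
theorem star_schedule_iff_partition (m : ℕ) (s : Fin m → ℕ)
    (hs : ∀ j, 2 ≤ s j) (heven : 2 ∣ ∑ j, s j) :
    (∃ A : Finset (Fin m), ∑ j ∈ A, s j = ∑ j ∈ Aᶜ, s j) ↔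
    (∃ (w : Fin 2 → ℕ → Option (Fin m ⊕ Fin 2)) (L : Fin 2 → ℕ)
        (f : Fin m → Fin 2),
        (∀ r, w r 0 = some (Sum.inr r)) ∧
        (∀ r t, w r (t + 1) = w r t ∨ w r (t + 1) = none ∨ w r t = none) ∧
        (∀ r t, L r ≤ t → w r t = w r (L r)) ∧
        (∀ (t : ℕ) (r r' : Fin 2), r ≠ r' →
          w r t ≠ w r' t ∧
          ¬(w r (t + 1) = w r' t ∧ w r' (t + 1) = w r t ∧ w r t ≠ w r (t + 1))) ∧
        (∀ j : Fin m, ∃ a, a + (2 * s j - 2) ≤ L (f j) ∧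
          ∀ u ≤ 2 * s j - 2, w (f j) (a + u) = some (Sum.inl j)) ∧
        (∀ r, L r ≤ 1 + ∑ j, s j)) := by
  constructor
  · rintro ⟨A, hA⟩
    classical
    set l0 : List (Fin m) := A.toList with hl0
    set l1 : List (Fin m) := Aᶜ.toList with hl1
    have hmem0 : ∀ j, j ∈ l0 ↔ j ∈ A := fun j => Finset.mem_toList
    have hmem1 : ∀ j, j ∈ l1 ↔ j ∉ A := by
      intro j; rw [hl1, Finset.mem_toList, Finset.mem_compl]
    have hwl0 : wlen s l0 = 2 * ∑ j ∈ A, s j := by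
      rw [hl0]; show (A.toList.map fun j => 2 * s j).sum = _
      rw [Finset.sum_map_toList, Finset.mul_sum]
    have hwl1 : wlen s l1 = 2 * ∑ j ∈ Aᶜ, s j := by
      rw [hl1]; show (Aᶜ.toList.map fun j => 2 * s j).sum = _
      rw [Finset.sum_map_toList, Finset.mul_sum]
    have hsplit := Finset.sum_add_sum_compl A s
    have hT0 : wlen s l0 = ∑ j, s j := by omega
    have hT1 : wlen s l1 = ∑ j, s j := by omega
    have htwo : ∀ x : Fin 2, x = 0 ∨ x = 1 := by decide
    obtain ⟨w, hw0, hw10, hw1⟩ : ∃ w : Fin 2 → ℕ → Option (Fin m ⊕ Fin 2),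
        (∀ t, w 0 t = walkSched s l0 (some (Sum.inr 0)) t) ∧
        (w 1 0 = some (Sum.inr 1)) ∧
        (∀ t, w 1 (t + 1) = walkSched s l1 (some (Sum.inr 1)) t) := by
      refine ⟨fun r t => if r = 0 then walkSched s l0 (some (Sum.inr 0)) t
        else if t = 0 then some (Sum.inr 1) else walkSched s l1 (some (Sum.inr 1)) (t - 1),
        fun t => by simp, by norm_num, fun t => by norm_num⟩
    obtain ⟨L, hL0, hL1⟩ : ∃ L : Fin 2 → ℕ, L 0 = wlen s l0 ∧ L 1 = 1 + wlen s l1 := by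
      refine ⟨fun r => if r = 0 then wlen s l0 else 1 + wlen s l1, rfl, by norm_num⟩
    obtain ⟨f, hfA, hfB⟩ : ∃ f : Fin m → Fin 2,
        (∀ j ∈ A, f j = 0) ∧ (∀ j ∉ A, f j = 1) := by
      refine ⟨fun j => if j ∈ A then 0 else 1, fun j hj => if_pos hj, fun j hj => if_neg hj⟩
    have hcross : ∀ t t' x, w 0 t = some x → w 1 t' = some x → False := by
      intro t t' x h0x h1x
      have h0' : x = Sum.inr 0 ∨ ∃ j ∈ A, x = Sum.inl j := by
        rw [hw0] at h0x
        rcases walk_values s l0 _ _ _ h0x with h | ⟨j, hj, hx⟩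
        · left; injection h with h; exact h.symm
        · right; exact ⟨j, (hmem0 j).mp hj, hx⟩
      have h1' : x = Sum.inr 1 ∨ ∃ j, j ∉ A ∧ x = Sum.inl j := by
        cases t' with
        | zero =>
          left; rw [hw10] at h1x; injection h1x with h; exact h.symm
        | succ t'' =>
          rw [hw1] at h1x
          rcases walk_values s l1 _ _ _ h1x with h | ⟨j, hj, hx⟩
          · left; injection h with h; exact h.symm
          · right; exact ⟨j, (hmem1 j).mp hj, hx⟩
      rcases h0' with rfl | ⟨j, hjA, rfl⟩
      · rcases h1' with h | ⟨j, _, h⟩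
        · injection h with h; exact absurd h (by decide)
        · cases h
      · rcases h1' with h | ⟨j', hj', h⟩
        · cases h
        · rw [Sum.inl.inj h] at hjA
          exact hj' hjA
    have hne : ∀ t, w 0 t ≠ w 1 t := by
      intro t heq
      cases hcase : w 0 t with
      | none =>
        have h1n : w 1 t = none := by rw [← heq]; exact hcase
        have hodd : t % 2 = 1 := walk_none_mod s l0 _ t (by rw [← hw0]; exact hcase)
        cases t with
        | zero => rw [hw10] at h1n; cases h1n
        | succ t'' =>
          rw [hw1] at h1n
          have := walk_none_mod s l1 (Sum.inr 1) t'' h1n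
          omega
      | some x =>
        have h1s : w 1 t = some x := by rw [← heq]; exact hcase
        exact hcross t t x hcase h1s
    refine ⟨w, L, f, ?_, ?_, ?_, ?_, ?_, ?_⟩
    · intro r
      rcases htwo r with rfl | rfl
      · rw [hw0, walk_zero]
      · exact hw10
    · intro r t
      rcases htwo r with rfl | rfl
      · rw [hw0, hw0]
        exact walk_step s hs l0 (some (Sum.inr 0)) t
      · cases t with
        | zero => left; rw [hw1, walk_zero, hw10]
        | succ t'' =>
          rw [hw1, hw1]
          exact walk_step s hs l1 (some (Sum.inr 1)) t''
    · intro r t ht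
      rcases htwo r with rfl | rfl
      · rw [hL0] at ht ⊢
        rw [hw0, hw0]
        have := walk_stable s hs l0 (some (Sum.inr 0)) (t - wlen s l0)
        rw [Nat.add_sub_cancel' ht] at this
        exact this
      · rw [hL1] at ht ⊢
        have e1 : w 1 t = walkSched s l1 (some (Sum.inr 1)) (t - 1) := by
          rw [show t = (t - 1) + 1 by omega, hw1, Nat.add_sub_cancel]
        have e2 : w 1 (1 + wlen s l1) = walkSched s l1 (some (Sum.inr 1)) (wlen s l1) := by
          rw [show 1 + wlen s l1 = wlen s l1 + 1 by omega, hw1]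
        rw [e1, e2]
        have := walk_stable s hs l1 (some (Sum.inr 1)) (t - 1 - wlen s l1)
        rw [Nat.add_sub_cancel' (by omega : wlen s l1 ≤ t - 1)] at this
        exact this
    · intro t r r' hrr
      have hswap01 : ∀ u, ¬(w 0 (u + 1) = w 1 u ∧ w 1 (u + 1) = w 0 u ∧ w 0 u ≠ w 0 (u + 1)) := by
        rintro u ⟨e1, e2, e3⟩
        cases hx : w 0 u with
        | some x => exact hcross u (u + 1) x hx (e2.trans hx)
        | none =>
          cases hy : w 0 (u + 1) with
          | none => exact e3 (hx.trans hy.symm)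
          | some y => exact hcross (u + 1) u y hy (e1.symm.trans hy)
      have hswap10 : ∀ u, ¬(w 1 (u + 1) = w 0 u ∧ w 0 (u + 1) = w 1 u ∧ w 1 u ≠ w 1 (u + 1)) := by
        rintro u ⟨e1, e2, e3⟩
        cases hx : w 1 u with
        | some x => exact hcross (u + 1) u x (e2.trans hx) hx
        | none =>
          cases hy : w 1 (u + 1) with
          | none => exact e3 (hx.trans hy.symm)
          | some y => exact hcross u (u + 1) y (e1.symm.trans hy) hy
      rcases htwo r with rfl | rfl <;> rcases htwo r' with rfl | rfl
      · exact absurd rfl hrr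
      · exact ⟨hne t, hswap01 t⟩
      · exact ⟨fun h => hne t h.symm, hswap10 t⟩
      · exact absurd rfl hrr
    · intro j
      by_cases hj : j ∈ A
      · obtain ⟨a, ha2, halen, hval⟩ :=
          walk_task s hs l0 (some (Sum.inr 0)) j ((hmem0 j).mpr hj)
        rw [hfA j hj]
        refine ⟨a, ?_, ?_⟩
        · rw [hL0]; exact halen
        · intro u hu
          rw [hw0]; exact hval u hu
      · obtain ⟨a, ha2, halen, hval⟩ :=
          walk_task s hs l1 (some (Sum.inr 1)) j ((hmem1 j).mpr hj)
        rw [hfB j hj]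
        refine ⟨a + 1, ?_, ?_⟩
        · rw [hL1]; omega
        · intro u hu
          rw [show a + 1 + u = (a + u) + 1 by omega, hw1]
          exact hval u hu
    · intro r
      rcases htwo r with rfl | rfl
      · rw [hL0]; omega
      · rw [hL1]; omega
  · -- reverse direction
    rintro ⟨w, L, f, h0, hstep, hstab, hcol, htask, hL⟩
    choose a haL hav using htask
    have key : ∀ r : Fin 2,
        ∑ j ∈ Finset.univ.filter (fun j => f j = r), 2 * s j ≤ L r := by
      intro r
      have ha1 : ∀ j, 1 ≤ a j := by
        intro j
        by_contra h
        have h' : a j = 0 := by omega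
        have := hav j 0 (Nat.zero_le _)
        rw [h', h0] at this
        simp at this
      have hP0 : ∀ j, w (f j) 0 ≠ some (Sum.inl j) := by
        intro j h
        rw [h0] at h
        simp at h
      obtain ⟨b, hble, hPb, hmid⟩ : ∃ b : Fin m → ℕ, (∀ j, b j ≤ a j - 1) ∧
          (∀ j, w (f j) (b j) ≠ some (Sum.inl j)) ∧
          (∀ j t, b j < t → t < a j → w (f j) t = some (Sum.inl j)) := by
        refine ⟨fun j => Nat.findGreatest (fun t => w (f j) t ≠ some (Sum.inl j)) (a j - 1),
          fun j => Nat.findGreatest_le _,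
          fun j => by
            beta_reduce
            exact Nat.findGreatest_spec (P := fun t => w (f j) t ≠ some (Sum.inl j))
              (Nat.zero_le _) (hP0 j),
          fun j t hbt hta => ?_⟩
        by_contra h
        exact Nat.findGreatest_is_greatest hbt (by have := ha1 j; omega) h
      have hblt : ∀ j, b j < a j := by
        intro j
        have := hble j
        have := ha1 j
        omega
      have hval : ∀ j t, b j < t → t ≤ a j + (2 * s j - 2) → w (f j) t = some (Sum.inl j) := by
        intro j t hbt hta
        rcases Nat.lt_or_ge t (a j) with h | h
        · exact hmid j t hbt h
        · have := hav j (t - a j) (by omega)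
          rwa [Nat.add_sub_cancel' h] at this
      have hnone : ∀ j, w (f j) (b j) = none := by
        intro j
        have h1 : w (f j) (b j + 1) = some (Sum.inl j) :=
          hval j (b j + 1) (Nat.lt_succ_self _) (by have := hblt j; have := hs j; omega)
        rcases hstep (f j) (b j) with h | h | h
        · exact absurd (h ▸ h1) (hPb j)
        · rw [h1] at h; cases h
        · exact h
      have hb1 : ∀ j, 1 ≤ b j := by
        intro j
        by_contra h
        have h' : b j = 0 := by omega
        have := hnone j
        rw [h', h0] at this
        cases this
      set I : Fin m → Finset ℕ := fun j => Finset.Icc (b j) (a j + (2 * s j - 2)) with hIdef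
      set F := Finset.univ.filter (fun j => f j = r) with hF
      have hsub : ∀ j ∈ F, I j ⊆ Finset.Icc 1 (L r) := by
        intro j hj t ht
        rw [Finset.mem_Icc] at ht ⊢
        have hfj : f j = r := (Finset.mem_filter.mp hj).2
        have := haL j
        rw [hfj] at this
        have := hb1 j
        omega
      have hdisj : ∀ j ∈ F, ∀ j' ∈ F, j ≠ j' → Disjoint (I j) (I j') := by
        intro j hj j' hj' hne
        have hfj : f j = r := (Finset.mem_filter.mp hj).2
        have hfj' : f j' = r := (Finset.mem_filter.mp hj').2
        rw [Finset.disjoint_left]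
        intro t htj htj'
        rw [hIdef, Finset.mem_Icc] at htj htj'
        have hsj := hs j
        have hsj' := hs j'
        have hbj := hblt j
        have hbj' := hblt j'
        by_cases h1 : b j < t
        · by_cases h2 : b j' < t
          · have e1 := hval j t h1 htj.2
            have e2 := hval j' t h2 htj'.2
            rw [hfj] at e1
            rw [hfj'] at e2
            rw [e1] at e2
            injection e2 with e2
            exact hne (Sum.inl.inj e2)
          · have ht' : t = b j' := by omega
            have e1 := hval j t h1 htj.2
            have e2 := hnone j'
            rw [hfj] at e1
            rw [hfj', ← ht'] at e2
            rw [e1] at e2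
            cases e2
        · have ht1 : t = b j := by omega
          by_cases h2 : b j' < t
          · have e1 := hval j' t h2 htj'.2
            have e2 := hnone j
            rw [hfj'] at e1
            rw [hfj, ← ht1] at e2
            rw [e1] at e2
            cases e2
          · have ht2 : t = b j' := by omega
            have e1 := hval j (t + 1) (by omega) (by omega)
            have e2 := hval j' (t + 1) (by omega) (by omega)
            rw [hfj] at e1
            rw [hfj'] at e2
            rw [e1] at e2
            injection e2 with e2
            exact hne (Sum.inl.inj e2)
      have hcard : ∀ j ∈ F, 2 * s j ≤ (I j).card := by
        intro j _
        rw [hIdef, Nat.card_Icc]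
        have := hblt j
        have := hs j
        omega
      calc ∑ j ∈ F, 2 * s j ≤ ∑ j ∈ F, (I j).card := Finset.sum_le_sum hcard
        _ = (F.biUnion I).card := (Finset.card_biUnion hdisj).symm
        _ ≤ (Finset.Icc 1 (L r)).card := Finset.card_le_card (by
              intro t ht
              rw [Finset.mem_biUnion] at ht
              obtain ⟨j, hj, htj⟩ := ht
              exact hsub j hj htj)
        _ = L r := by rw [Nat.card_Icc]; omega
    refine ⟨Finset.univ.filter (fun j => f j = 0), ?_⟩
    have hcompl : (Finset.univ.filter (fun j => f j = 0))ᶜ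
        = Finset.univ.filter (fun j => f j = 1) := by
      have h2 : ∀ x : Fin 2, x ≠ 0 ↔ x = 1 := by decide
      ext j
      simp [Finset.mem_filter, Finset.mem_compl, h2]
    have hsplit := Finset.sum_add_sum_compl (Finset.univ.filter (fun j => f j = 0)) s
    have k0 := key 0
    have k1 := key 1
    rw [← Finset.mul_sum] at k0 k1
    have hL0 := hL 0
    have hL1 := hL 1
    obtain ⟨c, hc⟩ := heven
    rw [hcompl]
    rw [hcompl] at hsplit
    omega
end

section
/- Let a be the minimum time span of a task-completing collision-free set of k schedules for a k-robot instance on a path graph with tasks of arbitrary durations. Then the k-partition dynamic-programming schedule (which partitions the tasks into k contiguous blocks by position, assigning the i-th block to the i-th robot, minimizing the maximum single-robot completion time) has time span at most k·a. -/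
set_option linter.unusedSectionVars false

def PathValid (n k m : ℕ) (sv pos d : ℕ → ℕ) (w : ℕ → ℕ → ℕ)
    (L f : ℕ → ℕ) : Prop :=
  (∀ r < k, w r 0 = sv r) ∧
  (∀ r < k, ∀ t, w r (t + 1) = w r t ∨ w r (t + 1) = w r t + 1 ∨
      w r t = w r (t + 1) + 1) ∧
  (∀ r < k, ∀ t, 1 ≤ w r t ∧ w r t ≤ n) ∧
  (∀ r < k, ∀ t, L r ≤ t → w r t = w r (L r)) ∧
  (∀ (t : ℕ), ∀ r < k, ∀ r' < k, r ≠ r' →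
      w r t ≠ w r' t ∧ ¬(w r (t + 1) = w r' t ∧ w r' (t + 1) = w r t)) ∧
  (∀ j < m, f j < k) ∧
  (∀ j < m, ∃ a, a + d j ≤ L (f j) ∧ ∀ u ≤ d j, w (f j) (a + u) = pos j)

def optTime (pos d : ℕ → ℕ) (s a b : ℕ) : ℕ :=
  if b ≤ a then 0
  else
    min (s - min (pos a) s) (max (pos (b - 1)) s - s) +
      (max (pos (b - 1)) s - min (pos a) s) +
      ∑ j ∈ Finset.Ico a b, d j

def blockCost (pos d sv : ℕ → ℕ) (k : ℕ) (q : ℕ → ℕ) : ℕ :=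
  (Finset.range k).sup fun r => optTime pos d (sv r) (q r) (q (r + 1))
namespace KRap


/-- distance on ℕ -/
def nd (a b : ℕ) : ℕ := (a - b) + (b - a)

lemma nd_self (a : ℕ) : nd a a = 0 := by simp [nd]

/-- walk from `a` toward `b`, position after `t` steps -/
def wt (a b t : ℕ) : ℕ := if a ≤ b then min (a + t) b else max (a - t) b

lemma wt_zero (a b : ℕ) : wt a b 0 = a := by
  unfold wt; split <;> omega

lemma wt_step (a b t : ℕ) : wt a b (t+1) = wt a b t ∨ wt a b (t+1) = wt a b t + 1 ∨
    wt a b t = wt a b (t+1) + 1 := by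
  unfold wt; split <;> omega

lemma wt_between (a b t : ℕ) : min a b ≤ wt a b t ∧ wt a b t ≤ max a b := by
  unfold wt; split <;> omega

lemma wt_done (a b t : ℕ) (h : nd a b ≤ t) : wt a b t = b := by
  unfold wt; unfold nd at h; split <;> omega

lemma wt_at (a b c t : ℕ) (hc : (a ≤ c ∧ c ≤ b) ∨ (b ≤ c ∧ c ≤ a)) (ht : t = nd a c) :
    wt a b t = c := by
  unfold wt; unfold nd at ht; split <;> omega

lemma wt_progress (a b t : ℕ) (h : t < nd a b) :
    wt a b (t+1) ≠ wt a b t := by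
  unfold wt; unfold nd at h; split <;> omega

lemma wt_up (a b t : ℕ) (h : wt a b (t+1) = wt a b t + 1) : a ≤ b ∧ wt a b (t+1) ≤ b := by
  unfold wt at *
  rcases le_or_gt a b with hab|hab
  · simp only [if_pos hab] at h ⊢; omega
  · simp only [if_neg (not_le.mpr hab)] at h ⊢; omega

lemma wt_down (a b t : ℕ) (h : wt a b t = wt a b (t+1) + 1) : b ≤ a ∧ b ≤ wt a b (t+1) := by
  unfold wt at *
  rcases le_or_gt a b with hab|hab
  · simp only [if_pos hab] at h ⊢; omega
  · simp only [if_neg (not_le.mpr hab)] at h ⊢; omega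



section Dilation

variable (Δ : ℕ → ℕ)

/-- dilated arrival time -/
def Aof (s : ℕ) : ℕ := s + Δ s

/-- dilated clock -/
def σof (t : ℕ) : ℕ := Nat.findGreatest (fun s => Aof Δ s ≤ t) t

variable (hΔ : Monotone Δ) (hΔ0 : Δ 0 = 0)

include hΔ in
lemma Aof_strict {s s' : ℕ} (h : s ≤ s') : Aof Δ s + (s' - s) ≤ Aof Δ s' := by
  have := hΔ h; unfold Aof; omega

include hΔ0 in
lemma Aof_zero : Aof Δ 0 = 0 := by unfold Aof; omega

include hΔ0 in
lemma σof_le (t : ℕ) : Aof Δ (σof Δ t) ≤ t := by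
  unfold σof
  apply Nat.findGreatest_spec (P := fun s => Aof Δ s ≤ t) (m := 0) (Nat.zero_le t)
  simp [Aof, hΔ0]

lemma le_σof {s t : ℕ} (h : Aof Δ s ≤ t) : s ≤ σof Δ t := by
  unfold σof
  exact Nat.le_findGreatest (by unfold Aof at h; omega) h

include hΔ0 in
lemma σof_mono : Monotone (σof Δ) := by
  intro t t' h
  exact le_σof Δ (le_trans (σof_le Δ hΔ0 t) h)

include hΔ hΔ0 in
lemma σof_step (t : ℕ) : σof Δ (t+1) ≤ σof Δ t + 1 := by
  by_contra hc
  push_neg at hc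
  have h1 : Aof Δ (σof Δ (t+1)) ≤ t + 1 := σof_le Δ hΔ0 (t+1)
  have h2 : Aof Δ (σof Δ t + 1) + ((σof Δ (t+1)) - (σof Δ t + 1)) ≤ Aof Δ (σof Δ (t+1)) :=
    Aof_strict Δ hΔ (by omega)
  have h3 : σof Δ t + 1 ≤ σof Δ t := le_σof Δ (t := t) (by
    have := Aof_strict Δ hΔ (le_refl (σof Δ t + 1)); omega)
  omega

include hΔ in
lemma σof_A (s : ℕ) : σof Δ (Aof Δ s) = s := by
  have h1 : s ≤ σof Δ (Aof Δ s) := le_σof Δ (le_refl _)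
  have h2 : Aof Δ (σof Δ (Aof Δ s)) ≤ Aof Δ s := by
    unfold σof
    exact Nat.findGreatest_spec (P := fun u => Aof Δ u ≤ Aof Δ s) (m := s)
      (by unfold Aof; omega) (le_refl _)
  by_contra hc
  have := Aof_strict Δ hΔ (show s + 1 ≤ σof Δ (Aof Δ s) by omega)
  have := Aof_strict Δ hΔ (show s ≤ s+1 by omega)
  omega

include hΔ hΔ0 in
lemma σof_zero : σof Δ 0 = 0 := by
  have := σof_le Δ hΔ0 0
  have := Aof_strict Δ hΔ (Nat.zero_le (σof Δ 0))
  rw [Aof_zero Δ hΔ0] at this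
  omega

include hΔ hΔ0 in
lemma σof_window {s u t : ℕ} (hw : Aof Δ s + u ≤ t) (ht : t < Aof Δ (s+1)) :
    σof Δ t = s := by
  have h1 : s ≤ σof Δ t := le_σof Δ (by omega)
  by_contra hc
  have h2 : Aof Δ (s+1) + (σof Δ t - (s+1)) ≤ Aof Δ (σof Δ t) :=
    Aof_strict Δ hΔ (by omega)
  have := σof_le Δ hΔ0 t
  omega

end Dilation


section Plan

variable (pos d : ℕ → ℕ) (T : Finset ℕ) (S P1 P2 : ℕ)

def plo : ℕ := min P1 S
def phi : ℕ := max P2 S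
def pX : ℕ := if phi P2 S - S ≤ S - plo P1 S then phi P2 S else plo P1 S
def pY : ℕ := if phi P2 S - S ≤ S - plo P1 S then plo P1 S else phi P2 S
def d1 : ℕ := nd S (pX S P1 P2)
def A0 (x : ℕ) : ℕ := d1 S P1 P2 + nd (pX S P1 P2) x
def pΔ (s : ℕ) : ℕ := ∑ j ∈ T, if A0 S P1 P2 (pos j) < s then d j else 0
def W0 (s : ℕ) : ℕ :=
  if s ≤ d1 S P1 P2 then wt S (pX S P1 P2) s else wt (pX S P1 P2) (pY S P1 P2) (s - d1 S P1 P2)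
def baseLen : ℕ := d1 S P1 P2 + nd (pX S P1 P2) (pY S P1 P2)
def plan (t : ℕ) : ℕ := W0 S P1 P2 (σof (pΔ pos d T S P1 P2) t)
def planLen : ℕ := baseLen S P1 P2 + ∑ j ∈ T, d j

variable (hP12 : P1 ≤ P2) (hT : ∀ j ∈ T, P1 ≤ pos j ∧ pos j ≤ P2)

lemma XY_cases :
    (pX S P1 P2 = phi P2 S ∧ pY S P1 P2 = plo P1 S ∧ phi P2 S - S ≤ S - plo P1 S) ∨
    (pX S P1 P2 = plo P1 S ∧ pY S P1 P2 = phi P2 S ∧ ¬(phi P2 S - S ≤ S - plo P1 S)) := by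
  unfold pX pY; split <;> simp_all

include hP12 in
lemma F1 (h : phi P2 S - S ≤ S - plo P1 S) : plo P1 S = P1 := by
  unfold plo phi at *; omega

include hP12 in
lemma F2 (h : ¬(phi P2 S - S ≤ S - plo P1 S)) : phi P2 S = P2 := by
  unfold plo phi at *; omega

lemma plo_le_S : plo P1 S ≤ S := by unfold plo; omega
lemma S_le_phi : S ≤ phi P2 S := by unfold phi; omega
lemma plo_le_P1 : plo P1 S ≤ P1 := by unfold plo; omega
lemma P2_le_phi : P2 ≤ phi P2 S := by unfold phi; omega

lemma pXY_mem : (pX S P1 P2 = plo P1 S ∨ pX S P1 P2 = phi P2 S) ∧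
    (pY S P1 P2 = plo P1 S ∨ pY S P1 P2 = phi P2 S) := by
  unfold pX pY; split <;> simp

lemma pΔ_mono : Monotone (pΔ pos d T S P1 P2) := by
  intro s s' h
  apply Finset.sum_le_sum
  intro j _
  unfold A0 at *
  split <;> split <;> omega

lemma pΔ_zero : pΔ pos d T S P1 P2 0 = 0 := by
  unfold pΔ
  apply Finset.sum_eq_zero
  intro j _
  simp

lemma W0_zero : W0 S P1 P2 0 = S := by
  unfold W0
  rw [if_pos (Nat.zero_le _), wt_zero]

lemma plan_zero : plan pos d T S P1 P2 0 = S := by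
  unfold plan
  rw [σof_zero _ (pΔ_mono pos d T S P1 P2) (pΔ_zero pos d T S P1 P2), W0_zero]

lemma W0_leg2 {s : ℕ} (h : d1 S P1 P2 ≤ s) :
    W0 S P1 P2 s = wt (pX S P1 P2) (pY S P1 P2) (s - d1 S P1 P2) := by
  unfold W0
  rcases Nat.eq_or_lt_of_le h with h1 | h1
  · have hs : s = d1 S P1 P2 := h1.symm
    subst hs
    rw [if_pos (le_refl _), Nat.sub_self, wt_zero]
    exact wt_done _ _ _ (le_refl _)
  · rw [if_neg (by omega)]

lemma W0_step (s : ℕ) : W0 S P1 P2 (s+1) = W0 S P1 P2 s ∨ W0 S P1 P2 (s+1) = W0 S P1 P2 s + 1 ∨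
    W0 S P1 P2 s = W0 S P1 P2 (s+1) + 1 := by
  by_cases h : s + 1 ≤ d1 S P1 P2
  · unfold W0
    rw [if_pos h, if_pos (by omega)]
    exact wt_step _ _ _
  · rw [W0_leg2 _ _ _ (by omega), W0_leg2 _ _ _ (by omega)]
    have : s + 1 - d1 S P1 P2 = (s - d1 S P1 P2) + 1 := by omega
    rw [this]
    exact wt_step _ _ _

lemma W0_between (s : ℕ) : plo P1 S ≤ W0 S P1 P2 s ∧ W0 S P1 P2 s ≤ phi P2 S := by
  have h1 := plo_le_S S P1
  have h2 := S_le_phi S P2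
  rcases pXY_mem S P1 P2 with ⟨hX, hY⟩
  have h3 : plo P1 S ≤ phi P2 S := by omega
  unfold W0
  split
  · have := wt_between S (pX S P1 P2) s
    rcases hX with h | h <;> rw [h] at this ⊢ <;> omega
  · have := wt_between (pX S P1 P2) (pY S P1 P2) (s - d1 S P1 P2)
    rcases hX with h | h <;> rcases hY with h' | h' <;> rw [h, h'] at this ⊢ <;> omega

lemma W0_final {s : ℕ} (h : baseLen S P1 P2 ≤ s) : W0 S P1 P2 s = pY S P1 P2 := by
  unfold baseLen at h
  rw [W0_leg2 _ _ _ (by omega)]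
  exact wt_done _ _ _ (by omega)

lemma W0_at_A0 {x : ℕ} (h1 : plo P1 S ≤ x) (h2 : x ≤ phi P2 S) :
    W0 S P1 P2 (A0 S P1 P2 x) = x := by
  unfold A0
  rcases Nat.eq_zero_or_pos (nd (pX S P1 P2) x) with h | h
  · have hx : pX S P1 P2 = x := by unfold nd at h; omega
    rw [h, Nat.add_zero]
    unfold W0
    rw [if_pos (le_refl _), ← hx]
    exact wt_done _ _ _ (le_refl _)
  · rw [W0_leg2 _ _ _ (by omega)]
    have : d1 S P1 P2 + nd (pX S P1 P2) x - d1 S P1 P2 = nd (pX S P1 P2) x := by omega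
    rw [this]
    apply wt_at
    · rcases XY_cases S P1 P2 with ⟨hX, hY, _⟩ | ⟨hX, hY, _⟩ <;> rw [hX, hY] <;> omega
    · rfl

lemma A0_le_base {x : ℕ} (h1 : plo P1 S ≤ x) (h2 : x ≤ phi P2 S) :
    A0 S P1 P2 x ≤ baseLen S P1 P2 := by
  unfold A0 baseLen nd
  rcases XY_cases S P1 P2 with ⟨hX, hY, _⟩ | ⟨hX, hY, _⟩ <;> rw [hX, hY] <;> omega

lemma σstep' (t : ℕ) : σof (pΔ pos d T S P1 P2) (t+1) = σof (pΔ pos d T S P1 P2) t ∨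
    σof (pΔ pos d T S P1 P2) (t+1) = σof (pΔ pos d T S P1 P2) t + 1 := by
  have h1 := σof_step (pΔ pos d T S P1 P2) (pΔ_mono pos d T S P1 P2) (pΔ_zero pos d T S P1 P2) t
  have h2 := σof_mono (pΔ pos d T S P1 P2) (pΔ_zero pos d T S P1 P2) (show t ≤ t+1 by omega)
  omega

lemma plan_step (t : ℕ) : plan pos d T S P1 P2 (t+1) = plan pos d T S P1 P2 t ∨
    plan pos d T S P1 P2 (t+1) = plan pos d T S P1 P2 t + 1 ∨
    plan pos d T S P1 P2 t = plan pos d T S P1 P2 (t+1) + 1 := by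
  unfold plan
  rcases σstep' pos d T S P1 P2 t with h | h <;> rw [h]
  · left; rfl
  · exact W0_step S P1 P2 _

lemma plan_between (t : ℕ) : plo P1 S ≤ plan pos d T S P1 P2 t ∧
    plan pos d T S P1 P2 t ≤ phi P2 S := W0_between S P1 P2 _

include hP12 in
lemma plan_up {t : ℕ} (h : plan pos d T S P1 P2 (t+1) = plan pos d T S P1 P2 t + 1) :
    plan pos d T S P1 P2 (t+1) ≤ P2 := by
  have l1 := plo_le_S S P1
  have l2 := S_le_phi S P2
  have l3 := plo_le_P1 S P1
  have l4 := P2_le_phi S P2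
  unfold plan at *
  rcases σstep' pos d T S P1 P2 t with hs | hs <;> rw [hs] at h ⊢
  · omega
  · set σ := σof (pΔ pos d T S P1 P2) t with hσ
    by_cases hc : σ + 1 ≤ d1 S P1 P2
    · unfold W0 at h ⊢
      rw [if_pos hc, if_pos (by omega)] at h
      rw [if_pos hc]
      have hup := wt_up S (pX S P1 P2) σ h
      have hd1 : d1 S P1 P2 = (S - pX S P1 P2) + (pX S P1 P2 - S) := by unfold d1 nd; rfl
      rcases pXY_mem S P1 P2 with ⟨hX | hX, _⟩
      · omega
      · have hP : phi P2 S = P2 := by unfold phi at *; omega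
        omega
    · rw [W0_leg2 _ _ _ (by omega), W0_leg2 _ _ _ (by omega)] at h
      rw [W0_leg2 _ _ _ (by omega)]
      rw [show σ + 1 - d1 S P1 P2 = (σ - d1 S P1 P2) + 1 by omega] at h ⊢
      have hup := wt_up _ _ _ h
      rcases XY_cases S P1 P2 with ⟨hX, hY, hA⟩ | ⟨hX, hY, hA⟩
      · omega
      · have := F2 S P1 P2 hP12 hA
        omega

include hP12 in
lemma plan_down {t : ℕ} (h : plan pos d T S P1 P2 t = plan pos d T S P1 P2 (t+1) + 1) :
    P1 ≤ plan pos d T S P1 P2 (t+1) := by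
  have l1 := plo_le_S S P1
  have l2 := S_le_phi S P2
  have l3 := plo_le_P1 S P1
  have l4 := P2_le_phi S P2
  have l5 : plo P1 S = P1 ∨ plo P1 S = S := by unfold plo; omega
  unfold plan at *
  rcases σstep' pos d T S P1 P2 t with hs | hs <;> rw [hs] at h ⊢
  · omega
  · set σ := σof (pΔ pos d T S P1 P2) t with hσ
    by_cases hc : σ + 1 ≤ d1 S P1 P2
    · unfold W0 at h ⊢
      rw [if_pos hc, if_pos (by omega)] at h
      rw [if_pos hc]
      have hdn := wt_down S (pX S P1 P2) σ h
      have hd1 : d1 S P1 P2 = (S - pX S P1 P2) + (pX S P1 P2 - S) := by unfold d1 nd; rfl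
      rcases pXY_mem S P1 P2 with ⟨hX | hX, _⟩
      · omega
      · omega
    · rw [W0_leg2 _ _ _ (by omega), W0_leg2 _ _ _ (by omega)] at h
      rw [W0_leg2 _ _ _ (by omega)]
      rw [show σ + 1 - d1 S P1 P2 = (σ - d1 S P1 P2) + 1 by omega] at h ⊢
      have hdn := wt_down _ _ _ h
      rcases XY_cases S P1 P2 with ⟨hX, hY, hA⟩ | ⟨hX, hY, hA⟩
      · have := F1 S P1 P2 hP12 hA
        omega
      · omega

include hP12 hT in
lemma plan_stay {t : ℕ} (h : plan pos d T S P1 P2 (t+1) = plan pos d T S P1 P2 t) :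
    P1 ≤ plan pos d T S P1 P2 t ∧ plan pos d T S P1 P2 t ≤ P2 := by
  have hΔm := pΔ_mono pos d T S P1 P2
  have hΔ0 := pΔ_zero pos d T S P1 P2
  unfold plan at *
  rcases σstep' pos d T S P1 P2 t with hs | hs
  · -- clock stall: sitting at a task position
    set σ := σof (pΔ pos d T S P1 P2) t with hσ
    have h1 : Aof (pΔ pos d T S P1 P2) σ ≤ t := σof_le _ hΔ0 t
    have h2 : ¬ (Aof (pΔ pos d T S P1 P2) (σ + 1) ≤ t + 1) := by
      intro hcon
      have := le_σof (pΔ pos d T S P1 P2) hcon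
      rw [hs] at this
      omega
    have h3 : pΔ pos d T S P1 P2 σ < pΔ pos d T S P1 P2 (σ + 1) := by
      unfold Aof at h1 h2; omega
    have h4 : ∃ j ∈ T, A0 S P1 P2 (pos j) = σ := by
      by_contra hcon
      push_neg at hcon
      have : pΔ pos d T S P1 P2 (σ + 1) = pΔ pos d T S P1 P2 σ := by
        unfold pΔ
        apply Finset.sum_congr rfl
        intro j hj
        have := hcon j hj
        by_cases hlt : A0 S P1 P2 (pos j) < σ
        · rw [if_pos (by omega), if_pos hlt]
        · rw [if_neg (by omega), if_neg hlt]
      omega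
    obtain ⟨j, hj, hA0⟩ := h4
    have hTj := hT j hj
    have hval : W0 S P1 P2 σ = pos j := by
      rw [← hA0]
      exact W0_at_A0 S P1 P2 (by have := plo_le_P1 S P1; omega)
        (by have := P2_le_phi S P2; omega)
    rw [hval]; omega
  · -- base walk flat
    rw [hs] at h
    set σ := σof (pΔ pos d T S P1 P2) t with hσ
    by_cases hc : σ + 1 ≤ d1 S P1 P2
    · exfalso
      unfold W0 at h
      rw [if_pos hc, if_pos (by omega)] at h
      exact wt_progress S (pX S P1 P2) σ (by unfold d1 at hc; omega) h
    · rw [W0_leg2 _ _ _ (by omega), W0_leg2 _ _ _ (by omega)] at h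
      rw [show σ + 1 - d1 S P1 P2 = (σ - d1 S P1 P2) + 1 by omega] at h
      by_cases hfin : nd (pX S P1 P2) (pY S P1 P2) ≤ σ - d1 S P1 P2
      · have hval : W0 S P1 P2 σ = pY S P1 P2 :=
          W0_final S P1 P2 (by unfold baseLen; omega)
        rw [hval]
        rcases XY_cases S P1 P2 with ⟨hX, hY, hA⟩ | ⟨hX, hY, hA⟩
        · have := F1 S P1 P2 hP12 hA
          have := plo_le_S S P1
          rw [hY]
          omega
        · have := F2 S P1 P2 hP12 hA
          have := P2_le_phi S P2
          rw [hY]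
          omega
      · exact absurd h (wt_progress _ _ _ (by omega))

lemma pΔ_le_total (s : ℕ) : pΔ pos d T S P1 P2 s ≤ ∑ j ∈ T, d j := by
  apply Finset.sum_le_sum
  intro j _
  split <;> omega

lemma plan_final {t : ℕ} (h : planLen d T S P1 P2 ≤ t) :
    plan pos d T S P1 P2 t = pY S P1 P2 := by
  unfold plan
  apply W0_final
  have h1 : Aof (pΔ pos d T S P1 P2) (baseLen S P1 P2) ≤ planLen d T S P1 P2 := by
    unfold Aof planLen
    have := pΔ_le_total pos d T S P1 P2 (baseLen S P1 P2)
    omega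
  exact le_σof _ (le_trans h1 h)

include hT in
lemma plan_park {j : ℕ} (hj : j ∈ T) : ∃ st, st + d j ≤ planLen d T S P1 P2 ∧
    ∀ u ≤ d j, plan pos d T S P1 P2 (st + u) = pos j := by
  have hΔm := pΔ_mono pos d T S P1 P2
  have hΔ0 := pΔ_zero pos d T S P1 P2
  have hTj := hT j hj
  have hplo : plo P1 S ≤ pos j := by have := plo_le_P1 S P1; omega
  have hphi : pos j ≤ phi P2 S := by have := P2_le_phi S P2; omega
  set aj := A0 S P1 P2 (pos j) with haj
  refine ⟨Aof (pΔ pos d T S P1 P2) aj, ?_, ?_⟩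
  · have h1 : aj ≤ baseLen S P1 P2 := A0_le_base S P1 P2 hplo hphi
    have h2 : pΔ pos d T S P1 P2 aj + d j ≤ ∑ i ∈ T, d i := by
      have e1 : ∑ i ∈ T, d i = d j + ∑ i ∈ T.erase j, d i := (Finset.add_sum_erase T d hj).symm
      have e2 : pΔ pos d T S P1 P2 aj = (if A0 S P1 P2 (pos j) < aj then d j else 0)
          + ∑ i ∈ T.erase j, (if A0 S P1 P2 (pos i) < aj then d i else 0) := by
        unfold pΔ
        exact (Finset.add_sum_erase T _ hj).symm
      rw [if_neg (by omega)] at e2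
      have e3 : ∑ i ∈ T.erase j, (if A0 S P1 P2 (pos i) < aj then d i else 0)
          ≤ ∑ i ∈ T.erase j, d i := Finset.sum_le_sum (by intro i _; split <;> omega)
      omega
    unfold Aof planLen
    omega
  · intro u hu
    have hwin : σof (pΔ pos d T S P1 P2) (Aof (pΔ pos d T S P1 P2) aj + u) = aj := by
      apply σof_window _ hΔm hΔ0 (s := aj) (u := u) (le_refl _)
      have e2 : pΔ pos d T S P1 P2 (aj + 1) = (if A0 S P1 P2 (pos j) < aj + 1 then d j else 0)
          + ∑ i ∈ T.erase j, (if A0 S P1 P2 (pos i) < aj + 1 then d i else 0) := by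
        unfold pΔ
        exact (Finset.add_sum_erase T _ hj).symm
      rw [if_pos (by omega)] at e2
      have e3 : ∑ i ∈ T.erase j, (if A0 S P1 P2 (pos i) < aj then d i else 0)
          ≤ ∑ i ∈ T.erase j, (if A0 S P1 P2 (pos i) < aj + 1 then d i else 0) :=
        Finset.sum_le_sum (by intro i _; split <;> split <;> omega)
      have e4 : pΔ pos d T S P1 P2 aj = (if A0 S P1 P2 (pos j) < aj then d j else 0)
          + ∑ i ∈ T.erase j, (if A0 S P1 P2 (pos i) < aj then d i else 0) := by
        unfold pΔ
        exact (Finset.add_sum_erase T _ hj).symm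
      rw [if_neg (by omega)] at e4
      unfold Aof
      omega
    unfold plan
    rw [hwin]
    exact W0_at_A0 S P1 P2 hplo hphi

lemma planLen_eq : planLen d T S P1 P2 =
    min (S - plo P1 S) (phi P2 S - S) + (phi P2 S - plo P1 S) + ∑ j ∈ T, d j := by
  unfold planLen baseLen d1 nd
  have := plo_le_S S P1
  have := S_le_phi S P2
  rcases XY_cases S P1 P2 with ⟨hX, hY, hA⟩ | ⟨hX, hY, hA⟩ <;> rw [hX, hY] <;> omega

include hP12 in
lemma pY_mem : P1 ≤ pY S P1 P2 ∧ pY S P1 P2 ≤ P2 := by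
  rcases XY_cases S P1 P2 with ⟨hX, hY, hA⟩ | ⟨hX, hY, hA⟩
  · have := F1 S P1 P2 hP12 hA
    rw [hY]; omega
  · have := F2 S P1 P2 hP12 hA
    rw [hY]; omega

end Plan

section Partition

variable (k m : ℕ) (pos d : ℕ → ℕ)

/-- block map to thresholds -/
def qOf (ρ : ℕ → ℕ) (r : ℕ) : ℕ := ((Finset.range m).filter (fun j => ρ j < r)).card

/-- valid block map -/
def Inv (ρ : ℕ → ℕ) : Prop := (∀ j < m, ρ j < k) ∧ ∀ i j, i ≤ j → j < m → ρ i ≤ ρ j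

lemma qOf_mono (ρ : ℕ → ℕ) : Monotone (qOf m ρ) := by
  intro r r' h
  apply Finset.card_le_card
  intro j hj
  simp only [Finset.mem_filter, Finset.mem_range] at hj ⊢
  omega

lemma qOf_zero (ρ : ℕ → ℕ) : qOf m ρ 0 = 0 := by
  unfold qOf
  rw [Finset.card_eq_zero, Finset.filter_eq_empty_iff]
  intro j _; omega

lemma qOf_le_m (ρ : ℕ → ℕ) (r : ℕ) : qOf m ρ r ≤ m := by
  unfold qOf
  calc ((Finset.range m).filter (fun j => ρ j < r)).card ≤ (Finset.range m).card :=
        Finset.card_le_card (Finset.filter_subset _ _)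
    _ = m := Finset.card_range m

lemma qOf_top (ρ : ℕ → ℕ) (hb : ∀ j < m, ρ j < k) : qOf m ρ k = m := by
  unfold qOf
  rw [Finset.filter_true_of_mem (by intro j hj; exact hb j (Finset.mem_range.mp hj))]
  exact Finset.card_range m

lemma qOf_block (ρ : ℕ → ℕ) (hm : ∀ i j, i ≤ j → j < m → ρ i ≤ ρ j) {j : ℕ} (hj : j < m) :
    qOf m ρ (ρ j) ≤ j ∧ j < qOf m ρ (ρ j + 1) := by
  constructor
  · unfold qOf
    have : (Finset.range m).filter (fun i => ρ i < ρ j) ⊆ Finset.range j := by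
      intro i hi
      simp only [Finset.mem_filter, Finset.mem_range] at hi ⊢
      by_contra hc
      exact absurd (hm j i (by omega) hi.1) (by omega)
    calc _ ≤ (Finset.range j).card := Finset.card_le_card this
      _ = j := Finset.card_range j
  · unfold qOf
    have : Finset.range (j+1) ⊆ (Finset.range m).filter (fun i => ρ i < ρ j + 1) := by
      intro i hi
      simp only [Finset.mem_filter, Finset.mem_range] at hi ⊢
      have := hm i j (by omega) hj
      omega
    calc j < j + 1 := by omega
      _ = (Finset.range (j+1)).card := (Finset.card_range _).symm
      _ ≤ _ := Finset.card_le_card this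

lemma qOf_mem_block (ρ : ℕ → ℕ) (hI : Inv k m ρ) {r j : ℕ}
    (h1 : qOf m ρ r ≤ j) (h2 : j < qOf m ρ (r+1)) : j < m ∧ ρ j = r := by
  have hjm : j < m := by
    have := qOf_le_m m ρ (r+1)
    omega
  refine ⟨hjm, ?_⟩
  obtain ⟨hb1, hb2⟩ := qOf_block m ρ hI.2 hjm
  by_contra hc
  rcases Nat.lt_or_ge (ρ j) r with hlt | hge
  · have := qOf_mono m ρ (show ρ j + 1 ≤ r by omega)
    omega
  · have := qOf_mono m ρ (show r + 1 ≤ ρ j by omega)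
    omega

lemma block_eq_Ico (ρ : ℕ → ℕ) (hI : Inv k m ρ) (r : ℕ) :
    Finset.Ico (qOf m ρ r) (qOf m ρ (r+1)) = (Finset.range m).filter (fun j => ρ j = r) := by
  ext j
  simp only [Finset.mem_Ico, Finset.mem_filter, Finset.mem_range]
  constructor
  · intro ⟨h1, h2⟩
    exact qOf_mem_block k m ρ hI h1 h2
  · intro ⟨h1, h2⟩
    obtain ⟨hb1, hb2⟩ := qOf_block m ρ hI.2 h1
    rw [h2] at hb1 hb2
    exact ⟨hb1, hb2⟩

end Partition

section OptTimeLemmas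

variable (m : ℕ) (pos d : ℕ → ℕ) (hposmono : ∀ i j, i ≤ j → j < m → pos i ≤ pos j)

lemma ot_empty (s a b : ℕ) (h : b ≤ a) : optTime pos d s a b = 0 := by
  unfold optTime
  rw [if_pos h]

include hposmono in
lemma ot_shrink {s a b a' b' : ℕ} (h1 : a ≤ a') (h2 : b' ≤ b) (hb : b ≤ m) :
    optTime pos d s a' b' ≤ optTime pos d s a b := by
  by_cases hne : b' ≤ a'
  · rw [ot_empty pos d s _ _ hne]
    omega
  · have hab : a < b := by omega
    unfold optTime
    rw [if_neg (by omega), if_neg (by omega)]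
    have e1 : pos a ≤ pos a' := hposmono a a' h1 (by omega)
    have e2 : pos (b'-1) ≤ pos (b-1) := hposmono (b'-1) (b-1) (by omega) (by omega)
    have e3 : ∑ j ∈ Finset.Ico a' b', d j ≤ ∑ j ∈ Finset.Ico a b, d j :=
      Finset.sum_le_sum_of_subset (Finset.Ico_subset_Ico h1 h2)
    omega

lemma ot_single (s j : ℕ) : optTime pos d s j (j+1) = (max (pos j) s - min (pos j) s) + d j := by
  unfold optTime
  rw [if_neg (by omega)]
  rw [show j + 1 - 1 = j by omega]
  rw [Nat.Ico_succ_singleton, Finset.sum_singleton]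
  omega

lemma ot_ge {s a b j : ℕ} (h1 : a ≤ j) (h2 : j < b) :
    (max (pos (b-1)) s - min (pos a) s) + d j ≤ optTime pos d s a b := by
  unfold optTime
  rw [if_neg (by omega)]
  have : d j ≤ ∑ i ∈ Finset.Ico a b, d i :=
    Finset.single_le_sum (by intro i _; omega) (Finset.mem_Ico.mpr ⟨h1, h2⟩)
  omega

end OptTimeLemmas

section OptAnalysis

variable (a k m : ℕ) (sv pos d : ℕ → ℕ) (w : ℕ → ℕ → ℕ) (L f : ℕ → ℕ)

/-- rightmost vertex visited by robot r -/
def Rmax (r : ℕ) : ℕ := ((Finset.range (L r + 1)).image (w r)).max'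
  ⟨w r 0, Finset.mem_image_of_mem _ (by simp)⟩

/-- leftmost vertex visited by robot r -/
def Lmin (r : ℕ) : ℕ := ((Finset.range (L r + 1)).image (w r)).min'
  ⟨w r 0, Finset.mem_image_of_mem _ (by simp)⟩

variable (hk : 0 < k)
variable (hstart : ∀ r < k, w r 0 = sv r)
variable (hstep : ∀ r < k, ∀ t, w r (t + 1) = w r t ∨ w r (t + 1) = w r t + 1 ∨
      w r t = w r (t + 1) + 1)
variable (hconstL : ∀ r < k, ∀ t, L r ≤ t → w r t = w r (L r))
variable (hcol : ∀ (t : ℕ), ∀ r < k, ∀ r' < k, r ≠ r' →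
      w r t ≠ w r' t ∧ ¬(w r (t + 1) = w r' t ∧ w r' (t + 1) = w r t))
variable (hfk : ∀ j < m, f j < k)
variable (htask : ∀ j < m, ∃ st, st + d j ≤ L (f j) ∧ ∀ u ≤ d j, w (f j) (st + u) = pos j)
variable (hsvmono : ∀ r, r + 1 < k → sv r < sv (r + 1))
variable (hmono : ∀ j, j + 1 < m → pos j < pos (j + 1))
variable (hLa : ∀ r < k, L r ≤ a)

include hconstL in
lemma wle {r : ℕ} (hr : r < k) (t : ℕ) : w r t ≤ Rmax w L r := by
  by_cases h : t ≤ L r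
  · exact Finset.le_max' _ _ (Finset.mem_image_of_mem _ (by simp; omega))
  · rw [hconstL r hr t (by omega)]
    exact Finset.le_max' _ _ (Finset.mem_image_of_mem _ (by simp))

include hconstL in
lemma wge {r : ℕ} (hr : r < k) (t : ℕ) : Lmin w L r ≤ w r t := by
  by_cases h : t ≤ L r
  · exact Finset.min'_le _ _ (Finset.mem_image_of_mem _ (by simp; omega))
  · rw [hconstL r hr t (by omega)]
    exact Finset.min'_le _ _ (Finset.mem_image_of_mem _ (by simp))

lemma exR (r : ℕ) : ∃ t ≤ L r, w r t = Rmax w L r := by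
  have := Finset.max'_mem _ (⟨w r 0, Finset.mem_image_of_mem _ (by simp)⟩ :
    ((Finset.range (L r + 1)).image (w r)).Nonempty)
  rw [Finset.mem_image] at this
  obtain ⟨t, ht, hw⟩ := this
  exact ⟨t, by simp at ht; omega, hw⟩

lemma exLo (r : ℕ) : ∃ t ≤ L r, w r t = Lmin w L r := by
  have := Finset.min'_mem _ (⟨w r 0, Finset.mem_image_of_mem _ (by simp)⟩ :
    ((Finset.range (L r + 1)).image (w r)).Nonempty)
  rw [Finset.mem_image] at this
  obtain ⟨t, ht, hw⟩ := this
  exact ⟨t, by simp at ht; omega, hw⟩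

include hstart hstep hcol hsvmono in
lemma hsorted : ∀ t, ∀ r r', r < r' → r' < k → w r t < w r' t := by
  have hadj : ∀ t, ∀ r, r + 1 < k → w r t < w (r+1) t := by
    intro t
    induction t with
    | zero =>
      intro r hr
      rw [hstart r (by omega), hstart (r+1) hr]
      exact hsvmono r hr
    | succ t ih =>
      intro r hr
      have h1 := ih r hr
      have h2 := hstep r (by omega) t
      have h3 := hstep (r+1) hr t
      have h4 := (hcol (t+1) r (by omega) (r+1) hr (by omega)).1
      have h5 := (hcol t r (by omega) (r+1) hr (by omega)).2
      rcases Decidable.em (w r (t+1) = w (r+1) t) with he | he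
      · have : ¬ (w (r+1) (t+1) = w r t) := fun hc => h5 ⟨he, hc⟩
        omega
      · omega
  intro t r r' hlt hk'
  have key : ∀ dd r0, r0 + dd + 1 < k → w r0 t < w (r0 + dd + 1) t := by
    intro dd
    induction dd with
    | zero => intro r0 h0; exact hadj t r0 h0
    | succ dd ih =>
      intro r0 h0
      have h1 := ih r0 (by omega)
      have h2 := hadj t (r0 + dd + 1) (by omega)
      have e : r0 + (dd + 1) + 1 = (r0 + dd + 1) + 1 := by omega
      rw [e]
      omega
  have := key (r' - r - 1) r (by omega)
  rw [show r + (r' - r - 1) + 1 = r' by omega] at this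
  exact this

include hstart hstep hconstL hcol hsvmono in
lemma Rmono {r r' : ℕ} (h : r ≤ r') (hk' : r' < k) : Rmax w L r ≤ Rmax w L r' := by
  rcases Nat.eq_or_lt_of_le h with he | hlt
  · rw [he]
  obtain ⟨t, _, hw⟩ := exR w L r
  rw [← hw]
  exact le_of_lt (lt_of_lt_of_le (hsorted k sv w hstart hstep hcol hsvmono t r r' hlt hk')
    (wle k w L hconstL hk' t))

include hstart hstep hconstL hcol hsvmono in
lemma Lomono {r r' : ℕ} (h : r ≤ r') (hk0 : r < k) (hk' : r' < k) :
    Lmin w L r ≤ Lmin w L r' := by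
  rcases Nat.eq_or_lt_of_le h with he | hlt
  · rw [he]
  obtain ⟨t, _, hw⟩ := exLo w L r'
  rw [← hw]
  calc Lmin w L r ≤ w r t := wge k w L hconstL hk0 t
    _ ≤ w r' t := le_of_lt (hsorted k sv w hstart hstep hcol hsvmono t r r' hlt hk')

include hstep in
lemma mv_ge_dist {r : ℕ} (hr : r < k) : ∀ t t', t ≤ t' →
    nd (w r t) (w r t') ≤ ((Finset.Ico t t').filter (fun u => w r (u+1) ≠ w r u)).card := by
  intro t t' h
  induction t' with
  | zero =>
    have : t = 0 := by omega
    subst this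
    simp [nd_self]
  | succ t' ih =>
    rcases Nat.eq_or_lt_of_le h with he | hlt
    · rw [← he]; simp [nd_self]
    · have h1 := ih (by omega)
      have hsplit : Finset.Ico t (t'+1) = insert t' (Finset.Ico t t') := by
        ext x
        simp only [Finset.mem_Ico, Finset.mem_insert]
        omega
      rw [hsplit, Finset.filter_insert]
      have h2 := hstep r hr t'
      by_cases hmv : w r (t'+1) ≠ w r t'
      · rw [if_pos hmv, Finset.card_insert_of_notMem (by simp)]
        unfold nd at *
        omega
      · rw [if_neg hmv]
        unfold nd at *
        omega

include hstart hstep hconstL hmono hfk htask in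
lemma opt_lb {r : ℕ} (hr : r < k) :
    min (sv r - Lmin w L r) (Rmax w L r - sv r) + (Rmax w L r - Lmin w L r) +
      ∑ j ∈ (Finset.range m).filter (fun j => f j = r), d j ≤ L r := by
  classical
  set Lo := Lmin w L r with hLo
  set R := Rmax w L r with hR
  -- parking windows
  set g : ℕ → ℕ := fun j => if h : j < m then Classical.choose (htask j h) else 0 with hg
  have hgspec : ∀ j < m, g j + d j ≤ L (f j) ∧ ∀ u ≤ d j, w (f j) (g j + u) = pos j := by
    intro j hj
    rw [hg]
    simp only [dif_pos hj]
    exact Classical.choose_spec (htask j hj)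
  set Sr := (Finset.range m).filter (fun j => f j = r) with hSr
  have hposinj : ∀ i j, i < m → j < m → pos i = pos j → i = j := by
    have hstrict : ∀ i j, i < j → j < m → pos i < pos j := by
      intro i j hij hjm
      have : ∀ dd, i + dd + 1 < m → pos i < pos (i + dd + 1) := by
        intro dd
        induction dd with
        | zero => intro h0; exact hmono i h0
        | succ dd ih =>
          intro h0
          have := ih (by omega)
          have := hmono (i + dd + 1) (by omega)
          have e : i + (dd + 1) + 1 = (i + dd + 1) + 1 := by omega
          rw [e]
          omega
      have := this (j - i - 1) (by omega)
      rw [show i + (j - i - 1) + 1 = j by omega] at this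
      exact this
    intro i j him hjm he
    rcases Nat.lt_trichotomy i j with h | h | h
    · exact absurd (hstrict i j h hjm) (by omega)
    · exact h
    · exact absurd (hstrict j i h him) (by omega)
  -- still steps
  set still := (Finset.range (L r)).filter (fun u => ¬ (w r (u+1) ≠ w r u)) with hstill
  set movers := (Finset.range (L r)).filter (fun u => w r (u+1) ≠ w r u) with hmovers
  have hcardsplit : movers.card + still.card = L r := by
    rw [hmovers, hstill, Finset.card_filter_add_card_filter_not, Finset.card_range]
  have hwin : ∀ j ∈ Sr, Finset.Ico (g j) (g j + d j) ⊆ still := by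
    intro j hj
    rw [hSr] at hj
    simp only [Finset.mem_filter, Finset.mem_range] at hj
    obtain ⟨hjm, hjr⟩ := hj
    obtain ⟨hle, hval⟩ := hgspec j hjm
    rw [hjr] at hle hval
    intro t ht
    simp only [Finset.mem_Ico] at ht
    rw [hstill]
    simp only [Finset.mem_filter, Finset.mem_range]
    constructor
    · omega
    · simp only [ne_eq, not_not]
      have e1 := hval (t - g j) (by omega)
      have e2 := hval (t - g j + 1) (by omega)
      rw [show g j + (t - g j) = t by omega] at e1
      rw [show g j + (t - g j + 1) = t + 1 by omega] at e2
      rw [e1, e2]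
  have hdisj : ∀ j1 ∈ Sr, ∀ j2 ∈ Sr, j1 ≠ j2 →
      Disjoint (Finset.Ico (g j1) (g j1 + d j1)) (Finset.Ico (g j2) (g j2 + d j2)) := by
    intro j1 hj1 rj2 hj2 hne
    rw [Finset.disjoint_left]
    intro t ht1 ht2
    simp only [Finset.mem_Ico] at ht1 ht2
    rw [hSr] at hj1 hj2
    simp only [Finset.mem_filter, Finset.mem_range] at hj1 hj2
    have e1 := (hgspec j1 hj1.1).2 (t - g j1) (by omega)
    have e2 := (hgspec rj2 hj2.1).2 (t - g rj2) (by omega)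
    rw [show g j1 + (t - g j1) = t by omega, hj1.2] at e1
    rw [show g rj2 + (t - g rj2) = t by omega, hj2.2] at e2
    exact hne (hposinj j1 rj2 hj1.1 hj2.1 (by rw [← e1, ← e2]))
  have hDsum : ∑ j ∈ Sr, d j ≤ still.card := by
    have e1 : ∑ j ∈ Sr, d j = ∑ j ∈ Sr, (Finset.Ico (g j) (g j + d j)).card := by
      apply Finset.sum_congr rfl
      intro j _
      rw [Nat.card_Ico]
      omega
    rw [e1, ← Finset.card_biUnion hdisj]
    apply Finset.card_le_card
    intro t ht
    rw [Finset.mem_biUnion] at ht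
    obtain ⟨j, hj, htj⟩ := ht
    exact hwin j hj htj
  -- movers
  have hmv : min (sv r - Lo) (R - sv r) + (R - Lo) ≤ movers.card := by
    obtain ⟨ta, hta, hwa⟩ := exLo w L r
    obtain ⟨tb, htb, hwb⟩ := exR w L r
    have hw0 : w r 0 = sv r := hstart r hr
    have hLole : Lo ≤ sv r := by rw [← hw0]; exact wge k w L hconstL hr 0
    have hRge : sv r ≤ R := by rw [← hw0]; exact wle k w L hconstL hr 0
    have key : ∀ x y, x ≤ y → y ≤ L r →
        ((Finset.Ico 0 x).filter (fun u => w r (u+1) ≠ w r u)).card +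
        ((Finset.Ico x y).filter (fun u => w r (u+1) ≠ w r u)).card ≤ movers.card := by
      intro x y hxy hyL
      have hu : (Finset.Ico 0 x) ∪ (Finset.Ico x y) = Finset.Ico 0 y :=
        Finset.Ico_union_Ico_eq_Ico (by omega) hxy
      have hdis : Disjoint ((Finset.Ico 0 x).filter (fun u => w r (u+1) ≠ w r u))
          ((Finset.Ico x y).filter (fun u => w r (u+1) ≠ w r u)) := by
        apply Finset.disjoint_filter_filter
        rw [Finset.disjoint_left]
        intro t h1 h2
        simp only [Finset.mem_Ico] at h1 h2
        omega
      rw [← Finset.card_union_of_disjoint hdis, ← Finset.filter_union, hu]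
      apply Finset.card_le_card
      apply Finset.filter_subset_filter
      intro t ht
      simp only [Finset.mem_Ico] at ht
      simp only [Finset.mem_range]
      omega
    rcases Nat.le_total ta tb with hc | hc
    · have c1 := mv_ge_dist k w hstep hr 0 ta (by omega)
      have c2 := mv_ge_dist k w hstep hr ta tb hc
      have := key ta tb hc htb
      rw [hw0, hwa] at c1
      rw [hwa, hwb] at c2
      unfold nd at c1 c2
      omega
    · have c1 := mv_ge_dist k w hstep hr 0 tb (by omega)
      have c2 := mv_ge_dist k w hstep hr tb ta hc
      have := key tb ta hc hta
      rw [hw0, hwb] at c1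
      rw [hwb, hwa] at c2
      unfold nd at c1 c2
      omega
  omega

include hk hstart hstep hconstL hcol hfk htask hsvmono hmono hLa in
lemma sec2_bound : ∃ ρ, Inv k m ρ ∧ blockCost pos d sv k (qOf m ρ) ≤ k * a := by
  classical
  have hposle : ∀ i j, i ≤ j → j < m → pos i ≤ pos j := by
    intro i j hij hjm
    rcases Nat.eq_or_lt_of_le hij with he | hlt
    · rw [he]
    have : ∀ dd, i + dd + 1 < m → pos i < pos (i + dd + 1) := by
      intro dd
      induction dd with
      | zero => intro h0; exact hmono i h0
      | succ dd ih =>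
        intro h0
        have := ih (by omega)
        have := hmono (i + dd + 1) (by omega)
        have e : i + (dd + 1) + 1 = (i + dd + 1) + 1 := by omega
        rw [e]
        omega
    have := this (j - i - 1) (by omega)
    rw [show i + (j - i - 1) + 1 = j by omega] at this
    omega
  have hex : ∀ j, j < m → ∃ r, r < k ∧ pos j ≤ Rmax w L r := by
    intro j hj
    obtain ⟨st, hst, hval⟩ := htask j hj
    refine ⟨f j, hfk j hj, ?_⟩
    rw [← hval 0 (by omega), Nat.add_zero]
    exact wle k w L hconstL (hfk j hj) st
  set ρ : ℕ → ℕ := fun j => if hj : j < m then Nat.find (hex j hj) else 0 with hρ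
  have hρk : ∀ j < m, ρ j < k := by
    intro j hj
    rw [hρ]; simp only [dif_pos hj]
    exact (Nat.find_spec (hex j hj)).1
  have hρR : ∀ j < m, pos j ≤ Rmax w L (ρ j) := by
    intro j hj
    rw [hρ]; simp only [dif_pos hj]
    exact (Nat.find_spec (hex j hj)).2
  have hρf : ∀ j < m, ρ j ≤ f j := by
    intro j hj
    rw [hρ]; simp only [dif_pos hj]
    apply Nat.find_min'
    obtain ⟨st, hst, hval⟩ := htask j hj
    refine ⟨hfk j hj, ?_⟩
    rw [← hval 0 (by omega), Nat.add_zero]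
    exact wle k w L hconstL (hfk j hj) st
  have hρmono : ∀ i j, i ≤ j → j < m → ρ i ≤ ρ j := by
    intro i j hij hjm
    have him : i < m := by omega
    conv_lhs => rw [hρ]
    simp only [dif_pos him]
    apply Nat.find_min'
    exact ⟨hρk j hjm, le_trans (hposle i j hij hjm) (hρR j hjm)⟩
  have hI : Inv k m ρ := ⟨hρk, hρmono⟩
  have hLoLe : ∀ j < m, Lmin w L (ρ j) ≤ pos j := by
    intro j hj
    obtain ⟨st, hst, hval⟩ := htask j hj
    calc Lmin w L (ρ j) ≤ Lmin w L (f j) :=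
          Lomono k sv w L hstart hstep hconstL hcol hsvmono (hρf j hj) (hρk j hj) (hfk j hj)
      _ ≤ w (f j) st := wge k w L hconstL (hfk j hj) st
      _ = pos j := by rw [← hval 0 (by omega), Nat.add_zero]
  refine ⟨ρ, hI, ?_⟩
  obtain ⟨k0, rfl⟩ : ∃ k0, k = k0 + 1 := ⟨k - 1, by omega⟩
  apply Finset.sup_le
  intro r hrk
  rw [Finset.mem_range] at hrk
  set α := qOf m ρ r with hα
  set β := qOf m ρ (r+1) with hβ
  rcases le_or_gt β α with hempty | hne
  · rw [ot_empty pos d _ _ _ hempty]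
    omega
  have hblock := block_eq_Ico (k0+1) m ρ hI r
  have hmem : ∀ j, α ≤ j → j < β → j < m ∧ ρ j = r := by
    intro j h1 h2
    exact qOf_mem_block (k0+1) m ρ hI h1 h2
  have hβm : β ≤ m := qOf_le_m m ρ (r+1)
  -- endpoints
  have hα_mem := hmem α (le_refl _) hne
  have hβ_mem := hmem (β-1) (by omega) (by omega)
  have hLo_s : Lmin w L r ≤ pos α := by
    have := hLoLe α hα_mem.1
    rw [hα_mem.2] at this
    exact this
  have hR_s : pos (β-1) ≤ Rmax w L r := by
    have := hρR (β-1) hβ_mem.1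
    rw [hβ_mem.2] at this
    exact this
  have hsv1 : Lmin w L r ≤ sv r := by
    rw [← hstart r hrk]
    exact wge (k0+1) w L hconstL hrk 0
  have hsv2 : sv r ≤ Rmax w L r := by
    rw [← hstart r hrk]
    exact wle (k0+1) w L hconstL hrk 0
  -- duration sums
  have hDa : ∀ r' < k0 + 1, (∑ j ∈ (Finset.range m).filter (fun j => f j = r'), d j) ≤ a := by
    intro r' hr'
    have h1 := opt_lb (k0+1) m sv pos d w L f hstart hstep hconstL hfk htask hmono hr'
    have h2 := hLa r' hr'
    omega
  have hsplit : ∑ j ∈ Finset.Ico α β, d j ≤ (∑ j ∈ (Finset.range m).filter (fun j => f j = r), d j) + (k0 - r) * a := by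
    rw [hblock]
    rw [← Finset.sum_filter_add_sum_filter_not ((Finset.range m).filter (fun j => ρ j = r))
      (fun j => f j = r) d]
    have hpart1 : ∑ j ∈ (((Finset.range m).filter (fun j => ρ j = r)).filter
        (fun j => f j = r)), d j ≤ (∑ j ∈ (Finset.range m).filter (fun j => f j = r), d j) := by
      apply Finset.sum_le_sum_of_subset
      intro j hj
      simp only [Finset.mem_filter, Finset.mem_range] at hj ⊢
      exact ⟨hj.1.1, hj.2⟩
    have hpart2 : ∑ j ∈ (((Finset.range m).filter (fun j => ρ j = r)).filter
        (fun j => ¬ f j = r)), d j ≤ (k0 - r) * a := by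
      have hsub : (((Finset.range m).filter (fun j => ρ j = r)).filter (fun j => ¬ f j = r))
          ⊆ (Finset.range m).filter (fun j => r < f j ∧ f j < k0 + 1) := by
        intro j hj
        simp only [Finset.mem_filter, Finset.mem_range] at hj ⊢
        obtain ⟨⟨hjm, hjρ⟩, hjf⟩ := hj
        have := hρf j hjm
        have := hfk j hjm
        omega
      calc ∑ j ∈ (((Finset.range m).filter (fun j => ρ j = r)).filter (fun j => ¬ f j = r)), d j
          ≤ ∑ j ∈ (Finset.range m).filter (fun j => r < f j ∧ f j < k0 + 1), d j :=
            Finset.sum_le_sum_of_subset hsub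
        _ = ∑ r' ∈ Finset.Ico (r+1) (k0+1), ∑ j ∈ ((Finset.range m).filter
              (fun j => r < f j ∧ f j < k0 + 1)).filter (fun j => f j = r'), d j := by
            rw [Finset.sum_fiberwise_of_maps_to]
            intro j hj
            simp only [Finset.mem_filter, Finset.mem_range] at hj
            simp only [Finset.mem_Ico]
            omega
        _ ≤ ∑ r' ∈ Finset.Ico (r+1) (k0+1), a := by
            apply Finset.sum_le_sum
            intro r' hr'
            simp only [Finset.mem_Ico] at hr'
            have h1 : ((Finset.range m).filter (fun j => r < f j ∧ f j < k0 + 1)).filter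
                (fun j => f j = r') ⊆ (Finset.range m).filter (fun j => f j = r') := by
              intro j hj
              simp only [Finset.mem_filter, Finset.mem_range] at hj ⊢
              exact ⟨hj.1.1, hj.2⟩
            calc _ ≤ (∑ j ∈ (Finset.range m).filter (fun j => f j = r'), d j) := Finset.sum_le_sum_of_subset h1
              _ ≤ a := hDa r' (by omega)
        _ = (k0 + 1 - (r+1)) * a := by
            rw [Finset.sum_const, Nat.card_Ico, smul_eq_mul]
        _ = (k0 - r) * a := by
            congr 1
            omega
    omega
  -- the travel part
  have htrav : min (sv r - Lmin w L r) (Rmax w L r - sv r) + (Rmax w L r - Lmin w L r)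
      + (∑ j ∈ (Finset.range m).filter (fun j => f j = r), d j) ≤ a := by
    have h1 := opt_lb (k0+1) m sv pos d w L f hstart hstep hconstL hfk htask hmono hrk
    have h2 := hLa r hrk
    omega
  unfold optTime
  rw [if_neg (by omega)]
  have hmul : (k0 - r) * a ≤ k0 * a := Nat.mul_le_mul_right a (by omega)
  have hka : (k0 + 1) * a = k0 * a + a := by ring
  omega

end OptAnalysis

section FixSec

variable (n k m : ℕ) (sv pos d : ℕ → ℕ)

/-- fully realizable, squeeze-free block map -/
def Good (ρ : ℕ → ℕ) : Prop :=
  Inv k m ρ ∧ (∀ j < m, ρ j + 1 ≤ pos j) ∧ (∀ j < m, pos j + (k - 1 - ρ j) ≤ n) ∧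
  (∀ j, j + 1 < m → ρ (j+1) - ρ j ≤ pos (j+1) - pos j)

/-- fix measure -/
def Mms (ρ : ℕ → ℕ) : ℕ := ∑ j ∈ Finset.range m, nd (sv (ρ j)) (pos j)

variable (hk : 0 < k)
variable (hsvmono : ∀ r, r + 1 < k → sv r < sv (r + 1))
variable (hsvb : ∀ r < k, 1 ≤ sv r ∧ sv r ≤ n)
variable (hmono : ∀ j, j + 1 < m → pos j < pos (j + 1))
variable (hposb : ∀ j < m, 1 ≤ pos j ∧ pos j ≤ n)

include hsvmono in
lemma sv_gap : ∀ r r', r ≤ r' → r' < k → sv r + (r' - r) ≤ sv r' := by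
  intro r r' hrr hr'
  rcases Nat.eq_or_lt_of_le hrr with he | hlt
  · rw [he]; omega
  have key : ∀ dd, r + dd + 1 < k → sv r + dd + 1 ≤ sv (r + dd + 1) := by
    intro dd
    induction dd with
    | zero => intro h0; simp only [Nat.add_zero]; have := hsvmono r (by omega); omega
    | succ dd ih =>
      intro h0
      have h1 := ih (by omega)
      have h2 := hsvmono (r + dd + 1) (by omega)
      have e : r + (dd + 1) + 1 = (r + dd + 1) + 1 := by omega
      rw [e]
      omega
  have := key (r' - r - 1) (by omega)
  rw [show r + (r' - r - 1) + 1 = r' by omega] at this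
  omega

include hsvmono hsvb in
lemma sv_ge {r : ℕ} (hr : r < k) : r + 1 ≤ sv r := by
  have h1 := (hsvb 0 (by omega)).1
  have := sv_gap k sv hsvmono 0 r (by omega) hr
  omega

include hsvmono hsvb in
lemma sv_le {r : ℕ} (hr : r < k) : sv r + (k - 1 - r) ≤ n := by
  have h1 := (hsvb (k-1) (by omega)).2
  have := sv_gap k sv hsvmono r (k-1) (by omega) (by omega)
  omega

include hmono in
lemma pos_gap : ∀ i j, i ≤ j → j < m → pos i + (j - i) ≤ pos j := by
  intro i j hij hjm
  rcases Nat.eq_or_lt_of_le hij with he | hlt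
  · rw [he]; omega
  have key : ∀ dd, i + dd + 1 < m → pos i + dd + 1 ≤ pos (i + dd + 1) := by
    intro dd
    induction dd with
    | zero => intro h0; simp only [Nat.add_zero]; have := hmono i (by omega); omega
    | succ dd ih =>
      intro h0
      have h1 := ih (by omega)
      have h2 := hmono (i + dd + 1) (by omega)
      have e : i + (dd + 1) + 1 = (i + dd + 1) + 1 := by omega
      rw [e]
      omega
  have := key (j - i - 1) (by omega)
  rw [show i + (j - i - 1) + 1 = j by omega] at this
  omega

-- ### the "move one task up" step
include hk hsvmono hsvb hmono hposb in
lemma move_up (ρ : ℕ → ℕ) (hI : Inv k m ρ) (j0 : ℕ) (hj0 : j0 < m)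
    (hlast : ∀ j, j0 < j → j < m → ρ j0 + 2 ≤ ρ j)
    (hρk1 : ρ j0 + 1 < k)
    (hsvle : sv (ρ j0 + 1) ≤ pos j0) :
    ∃ ρ', Inv k m ρ' ∧
      blockCost pos d sv k (qOf m ρ') ≤ blockCost pos d sv k (qOf m ρ) ∧
      Mms m sv pos ρ' < Mms m sv pos ρ := by
  classical
  set r0 := ρ j0 with hr0
  set ρ' := Function.update ρ j0 (r0 + 1) with hρ'
  have hmono' : ∀ i j, i ≤ j → j < m → ρ i ≤ ρ j := hI.2
  have hval : ∀ i, i ≠ j0 → ρ' i = ρ i := by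
    intro i hi
    rw [hρ', Function.update_of_ne hi]
  have hvalj0 : ρ' j0 = r0 + 1 := by
    rw [hρ', Function.update_self]
  have hI' : Inv k m ρ' := by
    constructor
    · intro j hj
      by_cases hjj : j = j0
      · rw [hjj, hvalj0]; omega
      · rw [hval j hjj]; exact hI.1 j hj
    · intro i j hij hjm
      by_cases hii : i = j0 <;> by_cases hjj : j = j0
      · rw [hii, hjj]
      · rw [hii, hvalj0, hval j hjj]
        have : j0 < j := by omega
        have := hlast j this hjm
        omega
      · rw [hjj, hvalj0, hval i hii]
        have := hmono' i j0 (by omega) hj0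
        omega
      · rw [hval i hii, hval j hjj]
        exact hmono' i j hij hjm
  -- thresholds
  have e2 : qOf m ρ (r0+1) = j0 + 1 := by
    unfold qOf
    have : (Finset.range m).filter (fun j => ρ j < r0 + 1) = Finset.range (j0+1) := by
      ext i
      simp only [Finset.mem_filter, Finset.mem_range]
      constructor
      · intro ⟨h1, h2⟩
        by_contra hc
        have := hlast i (by omega) h1
        omega
      · intro h
        refine ⟨by omega, ?_⟩
        have := hmono' i j0 (by omega) hj0
        omega
    rw [this, Finset.card_range]
  have e4 : qOf m ρ (r0+2) = j0 + 1 := by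
    unfold qOf
    have : (Finset.range m).filter (fun j => ρ j < r0 + 2) = Finset.range (j0+1) := by
      ext i
      simp only [Finset.mem_filter, Finset.mem_range]
      constructor
      · intro ⟨h1, h2⟩
        by_contra hc
        have := hlast i (by omega) h1
        omega
      · intro h
        refine ⟨by omega, ?_⟩
        have := hmono' i j0 (by omega) hj0
        omega
    rw [this, Finset.card_range]
  have e3 : qOf m ρ' (r0+1) = j0 := by
    unfold qOf
    have : (Finset.range m).filter (fun j => ρ' j < r0 + 1) = Finset.range j0 := by
      ext i
      simp only [Finset.mem_filter, Finset.mem_range]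
      constructor
      · intro ⟨h1, h2⟩
        by_contra hc
        by_cases hii : i = j0
        · rw [hii, hvalj0] at h2; omega
        · rw [hval i hii] at h2
          have := hlast i (by omega) h1
          omega
      · intro h
        refine ⟨by omega, ?_⟩
        rw [hval i (by omega)]
        have := hmono' i j0 (by omega) hj0
        omega
    rw [this, Finset.card_range]
  have e1 : ∀ r, r ≠ r0 + 1 → qOf m ρ' r = qOf m ρ r := by
    intro r hr
    unfold qOf
    congr 1
    apply Finset.filter_congr
    intro i _
    by_cases hii : i = j0
    · rw [hii, hvalj0, ← hr0]
      omega
    · rw [hval i hii]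
  have hq0 : qOf m ρ r0 ≤ j0 := (qOf_block m ρ hmono' hj0).1
  refine ⟨ρ', hI', ?_, ?_⟩
  · -- cost comparison
    apply Finset.sup_le
    intro r hrk
    rw [Finset.mem_range] at hrk
    have hsup : ∀ r'' ∈ Finset.range k,
        optTime pos d (sv r'') (qOf m ρ r'') (qOf m ρ (r''+1)) ≤
        blockCost pos d sv k (qOf m ρ) := fun r'' h =>
      Finset.le_sup (f := fun r'' => optTime pos d (sv r'') (qOf m ρ r'') (qOf m ρ (r''+1))) h
    by_cases hc1 : r = r0
    · rw [hc1, e1 r0 (by omega), e3]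
      calc optTime pos d (sv r0) (qOf m ρ r0) j0
          ≤ optTime pos d (sv r0) (qOf m ρ r0) (j0+1) :=
            ot_shrink m pos d
              (fun i j hij hjm => by have := pos_gap m pos hmono i j hij hjm; omega)
              (le_refl _) (by omega) (by omega)
        _ ≤ _ := by
            have h := hsup r0 (Finset.mem_range.mpr (by omega))
            rw [e2] at h
            exact h
    by_cases hc2 : r = r0 + 1
    · rw [hc2, e3, e1 (r0+1+1) (by omega), e4]
      have hsingle := ot_single pos d (sv (r0+1)) j0
      have hge := ot_ge pos d (s := sv r0) (a := qOf m ρ r0) (b := j0 + 1) (j := j0) hq0 (by omega)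
      have hsv01 : sv r0 < sv (r0 + 1) := hsvmono r0 hρk1
      have hold := hsup r0 (Finset.mem_range.mpr (by omega))
      rw [e2] at hold
      rw [show j0 + 1 - 1 = j0 by omega] at hge
      rw [hsingle]
      have hminle : min (pos (qOf m ρ r0)) (sv r0) ≤ sv r0 := min_le_right _ _
      omega
    · rw [e1 r (by omega), e1 (r+1) (by omega)]
      exact hsup r (Finset.mem_range.mpr hrk)
  · -- measure decreases
    unfold Mms
    apply Finset.sum_lt_sum
    · intro i hi
      by_cases hii : i = j0
      · rw [hii, hvalj0, ← hr0]
        have := hsvmono r0 hρk1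
        unfold nd
        omega
      · rw [hval i hii]
    · refine ⟨j0, Finset.mem_range.mpr hj0, ?_⟩
      rw [hvalj0, ← hr0]
      have := hsvmono r0 hρk1
      unfold nd
      omega

-- ### the "move one task down" step
include hk hsvmono hsvb hmono hposb in
lemma move_down (ρ : ℕ → ℕ) (hI : Inv k m ρ) (j0 : ℕ) (hj0 : j0 < m)
    (hfirst : ∀ j, j < j0 → ρ j + 2 ≤ ρ j0)
    (hρ1 : 1 ≤ ρ j0)
    (hsvge : pos j0 ≤ sv (ρ j0 - 1)) :
    ∃ ρ', Inv k m ρ' ∧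
      blockCost pos d sv k (qOf m ρ') ≤ blockCost pos d sv k (qOf m ρ) ∧
      Mms m sv pos ρ' < Mms m sv pos ρ := by
  classical
  set r0 := ρ j0 with hr0
  have hρk : r0 < k := hI.1 j0 hj0
  set ρ' := Function.update ρ j0 (r0 - 1) with hρ'
  have hmono' : ∀ i j, i ≤ j → j < m → ρ i ≤ ρ j := hI.2
  have hval : ∀ i, i ≠ j0 → ρ' i = ρ i := by
    intro i hi
    rw [hρ', Function.update_of_ne hi]
  have hvalj0 : ρ' j0 = r0 - 1 := by
    rw [hρ', Function.update_self]
  have hsv01 : sv (r0 - 1) < sv r0 := by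
    have := hsvmono (r0 - 1) (by omega)
    rw [show r0 - 1 + 1 = r0 by omega] at this
    exact this
  have hI' : Inv k m ρ' := by
    constructor
    · intro j hj
      by_cases hjj : j = j0
      · rw [hjj, hvalj0]; omega
      · rw [hval j hjj]; exact hI.1 j hj
    · intro i j hij hjm
      by_cases hii : i = j0 <;> by_cases hjj : j = j0
      · rw [hii, hjj]
      · rw [hii, hvalj0, hval j hjj]
        have := hmono' j0 j (by omega) hjm
        omega
      · rw [hjj, hvalj0, hval i hii]
        have := hfirst i (by omega)
        omega
      · rw [hval i hii, hval j hjj]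
        exact hmono' i j hij hjm
  have hset : ∀ c, r0 - 1 ≤ c → c ≤ r0 →
      (Finset.range m).filter (fun j => ρ j < c) = Finset.range j0 := by
    intro c hc1 hc2
    ext i
    simp only [Finset.mem_filter, Finset.mem_range]
    constructor
    · intro ⟨h1, h2⟩
      by_contra hcon
      have := hmono' j0 i (by omega) h1
      omega
    · intro h
      refine ⟨by omega, ?_⟩
      have := hfirst i h
      omega
  have e2 : qOf m ρ r0 = j0 := by
    unfold qOf
    rw [hset r0 (by omega) (le_refl _), Finset.card_range]
  have e2' : qOf m ρ (r0-1) = j0 := by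
    unfold qOf
    rw [hset (r0-1) (le_refl _) (by omega), Finset.card_range]
  have e3 : qOf m ρ' r0 = j0 + 1 := by
    unfold qOf
    have : (Finset.range m).filter (fun j => ρ' j < r0) = Finset.range (j0+1) := by
      ext i
      simp only [Finset.mem_filter, Finset.mem_range]
      constructor
      · intro ⟨h1, h2⟩
        by_contra hcon
        rw [hval i (by omega)] at h2
        have := hmono' j0 i (by omega) h1
        omega
      · intro h
        refine ⟨by omega, ?_⟩
        by_cases hii : i = j0
        · rw [hii, hvalj0]; omega
        · rw [hval i hii]
          have := hfirst i (by omega)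
          omega
    rw [this, Finset.card_range]
  have e1 : ∀ r, r ≠ r0 → qOf m ρ' r = qOf m ρ r := by
    intro r hr
    unfold qOf
    congr 1
    apply Finset.filter_congr
    intro i _
    by_cases hii : i = j0
    · rw [hii, hvalj0, ← hr0]
      omega
    · rw [hval i hii]
  have hqB : j0 < qOf m ρ (r0+1) := (qOf_block m ρ hmono' hj0).2
  have hqBm : qOf m ρ (r0+1) ≤ m := qOf_le_m m ρ (r0+1)
  refine ⟨ρ', hI', ?_, ?_⟩
  · apply Finset.sup_le
    intro r hrk
    rw [Finset.mem_range] at hrk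
    have hsup : ∀ r'' ∈ Finset.range k,
        optTime pos d (sv r'') (qOf m ρ r'') (qOf m ρ (r''+1)) ≤
        blockCost pos d sv k (qOf m ρ) := fun r'' h =>
      Finset.le_sup (f := fun r'' => optTime pos d (sv r'') (qOf m ρ r'') (qOf m ρ (r''+1))) h
    by_cases hc1 : r = r0 - 1
    · rw [hc1, e1 (r0-1) (by omega), e2', show r0 - 1 + 1 = r0 by omega, e3]
      have hsingle := ot_single pos d (sv (r0-1)) j0
      have hge := ot_ge pos d (s := sv r0) (a := qOf m ρ r0) (b := qOf m ρ (r0+1)) (j := j0)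
        (by omega) hqB
      have hold := hsup r0 (Finset.mem_range.mpr (by omega))
      rw [e2] at hold
      rw [hsingle]
      rw [e2] at hge
      have h1 : min (pos j0) (sv r0) = pos j0 := by omega
      have h2 : sv r0 ≤ max (pos (qOf m ρ (r0+1) - 1)) (sv r0) := le_max_right _ _
      omega
    by_cases hc2 : r = r0
    · rw [hc2, e3, e1 (r0+1) (by omega)]
      calc optTime pos d (sv r0) (j0+1) (qOf m ρ (r0+1))
          ≤ optTime pos d (sv r0) (qOf m ρ r0) (qOf m ρ (r0+1)) :=
            ot_shrink m pos d
              (fun i j hij hjm => by have := pos_gap m pos hmono i j hij hjm; omega)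
              (by omega) (le_refl _) hqBm
        _ ≤ _ := hsup r0 (Finset.mem_range.mpr (by omega))
    · rw [e1 r (by omega), e1 (r+1) (by omega)]
      exact hsup r (Finset.mem_range.mpr hrk)
  · unfold Mms
    apply Finset.sum_lt_sum
    · intro i hi
      by_cases hii : i = j0
      · rw [hii, hvalj0, ← hr0]
        unfold nd
        omega
      · rw [hval i hii]
    · refine ⟨j0, Finset.mem_range.mpr hj0, ?_⟩
      rw [hvalj0, ← hr0]
      unfold nd
      omega

include hk hsvmono hsvb hmono hposb in
lemma fix_step (ρ : ℕ → ℕ) (hI : Inv k m ρ) (hng : ¬ Good n k m pos ρ) :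
    ∃ ρ', Inv k m ρ' ∧
      blockCost pos d sv k (qOf m ρ') ≤ blockCost pos d sv k (qOf m ρ) ∧
      Mms m sv pos ρ' < Mms m sv pos ρ := by
  classical
  by_cases h4 : ∃ j, j < m ∧ ¬ (pos j + (k - 1 - ρ j) ≤ n)
  · have hVne : ((Finset.range m).filter (fun j => ¬ (pos j + (k - 1 - ρ j) ≤ n))).Nonempty := by
      obtain ⟨j, h1, h2⟩ := h4
      exact ⟨j, by simp only [Finset.mem_filter, Finset.mem_range]; exact ⟨h1, h2⟩⟩
    set j0 := ((Finset.range m).filter (fun j => ¬ (pos j + (k - 1 - ρ j) ≤ n))).max' hVne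
      with hj0def
    have hj0mem : j0 ∈ (Finset.range m).filter (fun j => ¬ (pos j + (k - 1 - ρ j) ≤ n)) :=
      Finset.max'_mem _ hVne
    simp only [Finset.mem_filter, Finset.mem_range] at hj0mem
    obtain ⟨hj0m, hviol⟩ := hj0mem
    have hposj0 := hposb j0 hj0m
    have hρj0 := hI.1 j0 hj0m
    have hρk1 : ρ j0 + 1 < k := by omega
    have hlast : ∀ j, j0 < j → j < m → ρ j0 + 2 ≤ ρ j := by
      intro j hjj hjm
      have hnv : ¬ j ∈ (Finset.range m).filter (fun j => ¬ (pos j + (k - 1 - ρ j) ≤ n)) := by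
        intro hc
        have := Finset.le_max' _ j hc
        omega
      simp only [Finset.mem_filter, Finset.mem_range, not_and, not_not] at hnv
      have hok := hnv hjm
      have hpg := pos_gap m pos hmono j0 j (by omega) hjm
      have := (hposb j hjm).2
      have := hI.1 j hjm
      omega
    have hsvle : sv (ρ j0 + 1) ≤ pos j0 := by
      have := sv_le n k sv hsvmono hsvb hρk1
      omega
    exact move_up n k m sv pos d hk hsvmono hsvb hmono hposb ρ hI j0 hj0m hlast hρk1 hsvle
  by_cases h3 : ∃ j, j < m ∧ ¬ (ρ j + 1 ≤ pos j)
  · have hVne : ((Finset.range m).filter (fun j => ¬ (ρ j + 1 ≤ pos j))).Nonempty := by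
      obtain ⟨j, h1, h2⟩ := h3
      exact ⟨j, by simp only [Finset.mem_filter, Finset.mem_range]; exact ⟨h1, h2⟩⟩
    set j0 := ((Finset.range m).filter (fun j => ¬ (ρ j + 1 ≤ pos j))).min' hVne with hj0def
    have hj0mem : j0 ∈ (Finset.range m).filter (fun j => ¬ (ρ j + 1 ≤ pos j)) :=
      Finset.min'_mem _ hVne
    simp only [Finset.mem_filter, Finset.mem_range] at hj0mem
    obtain ⟨hj0m, hviol⟩ := hj0mem
    have hposj0 := hposb j0 hj0m
    have hρj0 := hI.1 j0 hj0m
    have hρ1 : 1 ≤ ρ j0 := by omega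
    have hfirst : ∀ j, j < j0 → ρ j + 2 ≤ ρ j0 := by
      intro j hjj
      have hjm : j < m := by omega
      have hnv : ¬ j ∈ (Finset.range m).filter (fun j => ¬ (ρ j + 1 ≤ pos j)) := by
        intro hc
        have := Finset.min'_le _ j hc
        omega
      simp only [Finset.mem_filter, Finset.mem_range, not_and, not_not] at hnv
      have hok := hnv hjm
      have hpg := pos_gap m pos hmono j j0 (by omega) hj0m
      omega
    have hsvge : pos j0 ≤ sv (ρ j0 - 1) := by
      have := sv_ge n k sv hsvmono hsvb (show ρ j0 - 1 < k by omega)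
      omega
    exact move_down n k m sv pos d hk hsvmono hsvb hmono hposb ρ hI j0 hj0m hfirst hρ1 hsvge
  by_cases h5 : ∃ j, j + 1 < m ∧ pos (j+1) - pos j < ρ (j+1) - ρ j
  · obtain ⟨j, hj1m, hviol⟩ := h5
    have hjm : j < m := by omega
    have hpg := hmono j hj1m
    have hρj := hI.1 j hjm
    have hρj1 := hI.1 (j+1) hj1m
    have hmono2 := hI.2 j (j+1) (by omega) hj1m
    have hgap : ρ j + 2 ≤ ρ (j+1) := by omega
    rcases le_or_gt (sv (ρ j + 1)) (pos j) with hc | hc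
    · have hlast : ∀ j', j < j' → j' < m → ρ j + 2 ≤ ρ j' := by
        intro j' hjj' hj'm
        have := hI.2 (j+1) j' (by omega) hj'm
        omega
      exact move_up n k m sv pos d hk hsvmono hsvb hmono hposb ρ hI j hjm hlast (by omega) hc
    · have hsvge : pos (j+1) ≤ sv (ρ (j+1) - 1) := by
        by_contra hcon
        push_neg at hcon
        have hg := sv_gap k sv hsvmono (ρ j + 1) (ρ (j+1) - 1) (by omega) (by omega)
        omega
      have hfirst : ∀ j', j' < j + 1 → ρ j' + 2 ≤ ρ (j+1) := by
        intro j' hjj'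
        have := hI.2 j' j (by omega) hjm
        omega
      exact move_down n k m sv pos d hk hsvmono hsvb hmono hposb ρ hI (j+1) hj1m hfirst
        (by omega) hsvge
  · exfalso
    apply hng
    push_neg at h3 h4 h5
    refine ⟨hI, ?_, ?_, ?_⟩
    · intro j hj
      exact h3 j hj
    · intro j hj
      exact h4 j hj
    · intro j hj
      have := h5 j hj
      omega

include hk hsvmono hsvb hmono hposb in
lemma fix_good (ρ : ℕ → ℕ) (hI : Inv k m ρ) :
    ∃ ρ', Good n k m pos ρ' ∧
      blockCost pos d sv k (qOf m ρ') ≤ blockCost pos d sv k (qOf m ρ) := by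
  have key : ∀ N ρ, Inv k m ρ → Mms m sv pos ρ ≤ N →
      ∃ ρ', Good n k m pos ρ' ∧
        blockCost pos d sv k (qOf m ρ') ≤ blockCost pos d sv k (qOf m ρ) := by
    intro N
    induction N with
    | zero =>
      intro ρ hI hM
      by_cases hg : Good n k m pos ρ
      · exact ⟨ρ, hg, le_refl _⟩
      · obtain ⟨ρ', _, _, hlt⟩ := fix_step n k m sv pos d hk hsvmono hsvb hmono hposb ρ hI hg
        omega
    | succ N ih =>
      intro ρ hI hM
      by_cases hg : Good n k m pos ρ
      · exact ⟨ρ, hg, le_refl _⟩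
      · obtain ⟨ρ', hI', hc, hlt⟩ :=
          fix_step n k m sv pos d hk hsvmono hsvb hmono hposb ρ hI hg
        obtain ⟨ρ'', hg'', hc''⟩ := ih ρ' hI' (by omega)
        exact ⟨ρ'', hg'', le_trans hc'' hc⟩
  exact key (Mms m sv pos ρ) ρ hI (le_refl _)

end FixSec

section Sched

def NEs (k m : ℕ) (ρ : ℕ → ℕ) : Finset ℕ :=
  (Finset.range k).filter (fun r => qOf m ρ r < qOf m ρ (r+1))

def P1r (m : ℕ) (pos : ℕ → ℕ) (ρ : ℕ → ℕ) (r : ℕ) : ℕ := pos (qOf m ρ r)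

def P2r (m : ℕ) (pos : ℕ → ℕ) (ρ : ℕ → ℕ) (r : ℕ) : ℕ := pos (qOf m ρ (r+1) - 1)

def lowreq (k m : ℕ) (pos : ℕ → ℕ) (ρ : ℕ → ℕ) (r : ℕ) : ℕ :=
  max (r+1) (((NEs k m ρ).filter (fun x => x < r)).sup (fun r' => P2r m pos ρ r' + (r - r')))

def highreq (n k m : ℕ) (pos : ℕ → ℕ) (ρ : ℕ → ℕ) (r : ℕ) : ℕ :=
  if h : (((NEs k m ρ).filter (fun x => r < x)).Nonempty) then
    min (n - (k-1-r)) (((NEs k m ρ).filter (fun x => r < x)).inf' h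
      (fun r'' => P1r m pos ρ r'' - (r'' - r)))
  else (n - (k-1-r))

def slot (n k m : ℕ) (sv pos : ℕ → ℕ) (ρ : ℕ → ℕ) (r : ℕ) : ℕ :=
  max (lowreq k m pos ρ r) (min (sv r) (highreq n k m pos ρ r))

def PP1 (n k m : ℕ) (sv pos : ℕ → ℕ) (ρ : ℕ → ℕ) (r : ℕ) : ℕ :=
  if qOf m ρ r < qOf m ρ (r+1) then P1r m pos ρ r else slot n k m sv pos ρ r

def PP2 (n k m : ℕ) (sv pos : ℕ → ℕ) (ρ : ℕ → ℕ) (r : ℕ) : ℕ :=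
  if qOf m ρ r < qOf m ρ (r+1) then P2r m pos ρ r else slot n k m sv pos ρ r

def Tblk (m : ℕ) (ρ : ℕ → ℕ) (r : ℕ) : Finset ℕ := (Finset.range m).filter (fun j => ρ j = r)

variable (n k m : ℕ) (sv pos d : ℕ → ℕ)
variable (hk : 0 < k)
variable (hsvmono : ∀ r, r + 1 < k → sv r < sv (r + 1))
variable (hsvb : ∀ r < k, 1 ≤ sv r ∧ sv r ≤ n)
variable (hmono : ∀ j, j + 1 < m → pos j < pos (j + 1))
variable (hposb : ∀ j < m, 1 ≤ pos j ∧ pos j ≤ n)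
variable (ρ : ℕ → ℕ) (hG : Good n k m pos ρ)

include hmono hG in
lemma chainlem : ∀ i j, i ≤ j → j < m → ρ i ≤ ρ j ∧ ρ j + pos i ≤ ρ i + pos j := by
  intro i j hij hjm
  have hm := hG.1.2
  have h5 := hG.2.2.2
  refine ⟨hm i j hij hjm, ?_⟩
  rcases Nat.eq_or_lt_of_le hij with he | hlt
  · rw [he]
  have key : ∀ dd, i + dd + 1 < m → ρ (i + dd + 1) + pos i ≤ ρ i + pos (i + dd + 1) := by
    intro dd
    induction dd with
    | zero =>
      intro h0
      simp only [Nat.add_zero]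
      have := h5 i (by omega)
      have := hm i (i+1) (by omega) (by omega)
      have := hmono i (by omega)
      omega
    | succ dd ih =>
      intro h0
      have h1 := ih (by omega)
      have h2 := h5 (i + dd + 1) (by omega)
      have h3 := hm (i + dd + 1) (i + dd + 2) (by omega) (by omega)
      have h4 := hmono (i + dd + 1) (by omega)
      have e : i + (dd + 1) + 1 = (i + dd + 1) + 1 := by omega
      rw [e]
      omega
  have := key (j - i - 1) (by omega)
  rw [show i + (j - i - 1) + 1 = j by omega] at this
  omega

include hG in
lemma NE_block {r : ℕ} (hr : r ∈ NEs k m ρ) :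
    qOf m ρ r < m ∧ ρ (qOf m ρ r) = r ∧ qOf m ρ (r+1) - 1 < m ∧ ρ (qOf m ρ (r+1) - 1) = r ∧
    qOf m ρ r ≤ qOf m ρ (r+1) - 1 := by
  unfold NEs at hr
  simp only [Finset.mem_filter, Finset.mem_range] at hr
  obtain ⟨hrk, hne⟩ := hr
  have h1 := qOf_mem_block k m ρ hG.1 (le_refl (qOf m ρ r)) hne
  have h2 := qOf_mem_block k m ρ hG.1 (show qOf m ρ r ≤ qOf m ρ (r+1) - 1 by omega)
    (show qOf m ρ (r+1) - 1 < qOf m ρ (r+1) by omega)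
  exact ⟨h1.1, h1.2, h2.1, h2.2, by omega⟩

include hG hmono in
lemma P12_ne {r : ℕ} (hr : r ∈ NEs k m ρ) : P1r m pos ρ r ≤ P2r m pos ρ r := by
  obtain ⟨h1, h2, h3, h4, h5⟩ := NE_block n k m pos ρ hG hr
  unfold P1r P2r
  have := pos_gap m pos hmono _ _ h5 h3
  omega

include hG hmono in
lemma G3ne {r : ℕ} (hr : r ∈ NEs k m ρ) : r + 1 ≤ P1r m pos ρ r := by
  obtain ⟨h1, h2, _, _, _⟩ := NE_block n k m pos ρ hG hr
  have := hG.2.1 _ h1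
  unfold P1r
  omega

include hG hmono in
lemma G4ne {r : ℕ} (hr : r ∈ NEs k m ρ) : P2r m pos ρ r + (k - 1 - r) ≤ n := by
  obtain ⟨_, _, h3, h4, _⟩ := NE_block n k m pos ρ hG hr
  have hh := hG.2.2.1 _ h3
  rw [h4] at hh
  unfold P2r
  omega

include hG hmono in
lemma keychain {r' r'' : ℕ} (hr' : r' ∈ NEs k m ρ) (hr'' : r'' ∈ NEs k m ρ) (h : r' < r'') :
    P2r m pos ρ r' + (r'' - r') ≤ P1r m pos ρ r'' := by
  obtain ⟨_, _, h3, h4, _⟩ := NE_block n k m pos ρ hG hr'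
  obtain ⟨g1, g2, _, _, _⟩ := NE_block n k m pos ρ hG hr''
  have hij : qOf m ρ (r'+1) - 1 ≤ qOf m ρ r'' := by
    have := qOf_mono m ρ (show r' + 1 ≤ r'' by omega)
    omega
  have := chainlem n k m pos hmono ρ hG _ _ hij g1
  unfold P1r P2r
  rw [h4, g2] at this
  omega

include hsvmono hsvb hk in
lemma k_le_n : k ≤ n := by
  have := sv_ge n k sv hsvmono hsvb (show k - 1 < k by omega)
  have := (hsvb (k-1) (by omega)).2
  omega

include hmono hG in
lemma extent_le_B {r' : ℕ} (hr' : r' ∈ NEs k m ρ) :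
    P2r m pos ρ r' ≤ sv r' + blockCost pos d sv k (qOf m ρ) ∧
    sv r' ≤ P1r m pos ρ r' + blockCost pos d sv k (qOf m ρ) := by
  have hrmem := hr'
  unfold NEs at hrmem
  simp only [Finset.mem_filter, Finset.mem_range] at hrmem
  obtain ⟨hrk, hne⟩ := hrmem
  have hge := ot_ge pos d (s := sv r') (a := qOf m ρ r') (b := qOf m ρ (r'+1))
    (j := qOf m ρ r') (le_refl _) hne
  have hsup : optTime pos d (sv r') (qOf m ρ r') (qOf m ρ (r'+1)) ≤
      blockCost pos d sv k (qOf m ρ) :=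
    Finset.le_sup (f := fun x => optTime pos d (sv x) (qOf m ρ x) (qOf m ρ (x+1)))
      (Finset.mem_range.mpr hrk)
  unfold P1r P2r
  constructor
  · have h1 : P2r m pos ρ r' ≤ max (pos (qOf m ρ (r'+1) - 1)) (sv r') := le_max_left _ _
    have h2 : min (pos (qOf m ρ r')) (sv r') ≤ sv r' := min_le_right _ _
    unfold P2r at h1
    omega
  · have h1 : sv r' ≤ max (pos (qOf m ρ (r'+1) - 1)) (sv r') := le_max_right _ _
    have h2 : min (pos (qOf m ρ r')) (sv r') ≤ pos (qOf m ρ r') := min_le_left _ _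
    omega

include hk hsvmono hsvb hmono hposb hG in
lemma slot_facts {r : ℕ} (hrk : r < k) :
    (r + 1 ≤ slot n k m sv pos ρ r) ∧
    (slot n k m sv pos ρ r + (k - 1 - r) ≤ n) ∧
    (∀ r'' ∈ NEs k m ρ, r < r'' → slot n k m sv pos ρ r + (r'' - r) ≤ P1r m pos ρ r'') ∧
    (∀ r' ∈ NEs k m ρ, r' < r → P2r m pos ρ r' + (r - r') ≤ slot n k m sv pos ρ r) ∧
    nd (sv r) (slot n k m sv pos ρ r) ≤ blockCost pos d sv k (qOf m ρ) := by
  have hkn := k_le_n n k sv hk hsvmono hsvb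
  have hsvr1 := sv_ge n k sv hsvmono hsvb hrk
  have hsvr2 := sv_le n k sv hsvmono hsvb hrk
  have hlow1 : r + 1 ≤ lowreq k m pos ρ r := le_max_left _ _
  have hlowle : ∀ x, (r + 1 ≤ x) →
      (∀ r' ∈ NEs k m ρ, r' < r → P2r m pos ρ r' + (r - r') ≤ x) →
      lowreq k m pos ρ r ≤ x := by
    intro x h1 h2
    apply max_le h1
    apply Finset.sup_le
    intro r' hr'
    simp only [Finset.mem_filter] at hr'
    exact h2 r' hr'.1 hr'.2
  have hlow2 : ∀ r' ∈ NEs k m ρ, r' < r → P2r m pos ρ r' + (r - r') ≤ lowreq k m pos ρ r := by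
    intro r' h1 h2
    calc P2r m pos ρ r' + (r - r')
        ≤ ((NEs k m ρ).filter (fun x => x < r)).sup (fun r' => P2r m pos ρ r' + (r - r')) :=
          Finset.le_sup (f := fun r' => P2r m pos ρ r' + (r - r'))
            (by simp only [Finset.mem_filter]; exact ⟨h1, h2⟩)
      _ ≤ _ := le_max_right _ _
  have hNErk : ∀ r'' ∈ NEs k m ρ, r'' < k := by
    intro r'' h
    unfold NEs at h
    simp only [Finset.mem_filter, Finset.mem_range] at h
    exact h.1
  have hhigh1 : highreq n k m pos ρ r ≤ n - (k - 1 - r) := by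
    unfold highreq
    split
    · exact min_le_left _ _
    · exact le_refl _
  have hhigh2 : ∀ r'' ∈ NEs k m ρ, r < r'' →
      highreq n k m pos ρ r ≤ P1r m pos ρ r'' - (r'' - r) := by
    intro r'' h1 h2
    have hmem : r'' ∈ (NEs k m ρ).filter (fun x => r < x) := by
      simp only [Finset.mem_filter]; exact ⟨h1, h2⟩
    unfold highreq
    rw [dif_pos ⟨r'', hmem⟩]
    calc min (n - (k-1-r)) _ ≤ _ := min_le_right _ _
      _ ≤ P1r m pos ρ r'' - (r'' - r) := Finset.inf'_le _ hmem
  have hlowhigh : ∀ r'' ∈ NEs k m ρ, r < r'' →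
      lowreq k m pos ρ r + (r'' - r) ≤ P1r m pos ρ r'' := by
    intro r'' h1 h2
    have hG3 := G3ne n k m pos hmono ρ hG h1
    apply Nat.add_le_of_le_sub ?h1 ?h2
    case h2 =>
      apply hlowle
      · omega
      · intro r' hr' hlt
        have := keychain n k m pos hmono ρ hG hr' h1 (by omega)
        omega
    case h1 => omega
  refine ⟨le_trans hlow1 (le_max_left _ _), ?_, ?_, ?_, ?_⟩
  · -- upper bound
    have hs : slot n k m sv pos ρ r ≤ n - (k-1-r) := by
      unfold slot
      apply max_le
      · apply hlowle
        · omega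
        · intro r' h1 h2
          have := G4ne n k m pos hmono ρ hG h1
          have := hNErk r' h1
          omega
      · exact le_trans (min_le_right _ _) hhigh1
    omega
  · -- V3a
    intro r'' h1 h2
    have hG3 := G3ne n k m pos hmono ρ hG h1
    have hh := hhigh2 r'' h1 h2
    have hl := hlowhigh r'' h1 h2
    have hm2 : min (sv r) (highreq n k m pos ρ r) ≤ highreq n k m pos ρ r := min_le_right _ _
    unfold slot
    omega
  · -- V3b
    intro r' h1 h2
    have := hlow2 r' h1 h2
    unfold slot
    omega
  · -- distance bound
    have ha : lowreq k m pos ρ r ≤ sv r + blockCost pos d sv k (qOf m ρ) := by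
      apply hlowle
      · omega
      · intro r' h1 h2
        have he := (extent_le_B n k m sv pos d hmono ρ hG h1).1
        have hNE := hNErk r' h1
        have := sv_gap k sv hsvmono r' r (by omega) hrk
        omega
    have hb : sv r ≤ highreq n k m pos ρ r + blockCost pos d sv k (qOf m ρ) := by
      unfold highreq
      split
      · next hne =>
        obtain ⟨r'', hmem, heq⟩ := Finset.exists_mem_eq_inf' hne
          (fun r'' => P1r m pos ρ r'' - (r'' - r))
        simp only [Finset.mem_filter] at hmem
        have he := (extent_le_B n k m sv pos d hmono ρ hG hmem.1).2
        have hG3 := G3ne n k m pos hmono ρ hG hmem.1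
        have hNE := hNErk r'' hmem.1
        have := sv_gap k sv hsvmono r r'' (by omega) hNE
        rw [heq]
        omega
      · omega
    have hminsv : min (sv r) (highreq n k m pos ρ r) ≤ sv r := min_le_left _ _
    have hminh : sv r ≤ min (sv r) (highreq n k m pos ρ r) +
        blockCost pos d sv k (qOf m ρ) := by omega
    unfold nd slot
    omega

lemma NE_iff {r : ℕ} (hrk : r < k) :
    r ∈ NEs k m ρ ↔ qOf m ρ r < qOf m ρ (r+1) := by
  unfold NEs
  simp only [Finset.mem_filter, Finset.mem_range]
  exact ⟨fun h => h.2, fun h => ⟨hrk, h⟩⟩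

include hG in
lemma Tblk_Ico (r : ℕ) : Tblk m ρ r = Finset.Ico (qOf m ρ r) (qOf m ρ (r+1)) :=
  (block_eq_Ico k m ρ hG.1 r).symm

include d hk hsvmono hsvb hmono hposb hG in
lemma PP_facts {r : ℕ} (hrk : r < k) :
    PP1 n k m sv pos ρ r ≤ PP2 n k m sv pos ρ r ∧
    r + 1 ≤ PP1 n k m sv pos ρ r ∧
    PP2 n k m sv pos ρ r + (k - 1 - r) ≤ n ∧
    (∀ j ∈ Tblk m ρ r, PP1 n k m sv pos ρ r ≤ pos j ∧ pos j ≤ PP2 n k m sv pos ρ r) := by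
  by_cases hne : qOf m ρ r < qOf m ρ (r+1)
  · have hmem : r ∈ NEs k m ρ := (NE_iff k m ρ hrk).mpr hne
    have h12 := P12_ne n k m pos hmono ρ hG hmem
    have h3 := G3ne n k m pos hmono ρ hG hmem
    have h4 := G4ne n k m pos hmono ρ hG hmem
    unfold PP1 PP2
    rw [if_pos hne, if_pos hne]
    refine ⟨h12, h3, h4, ?_⟩
    intro j hj
    rw [Tblk_Ico n k m pos ρ hG r] at hj
    simp only [Finset.mem_Ico] at hj
    have hjm : j < m := by
      have := qOf_le_m m ρ (r+1)
      omega
    have e1 := pos_gap m pos hmono (qOf m ρ r) j hj.1 hjm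
    have e2 := pos_gap m pos hmono j (qOf m ρ (r+1) - 1) (by omega) (by
      have := qOf_le_m m ρ (r+1)
      omega)
    unfold P1r P2r
    omega
  · obtain ⟨v1, v2, _, _, _⟩ := slot_facts n k m sv pos d hk hsvmono hsvb hmono hposb ρ hG hrk
    unfold PP1 PP2
    rw [if_neg hne, if_neg hne]
    refine ⟨le_refl _, v1, v2, ?_⟩
    intro j hj
    rw [Tblk_Ico n k m pos ρ hG r] at hj
    simp only [Finset.mem_Ico] at hj
    omega

include d hk hsvmono hsvb hmono hposb hG in
lemma KEYadj {r : ℕ} (hrk : r + 1 < k) :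
    PP2 n k m sv pos ρ r + 1 ≤ PP1 n k m sv pos ρ (r+1) := by
  by_cases hne1 : qOf m ρ r < qOf m ρ (r+1) <;>
    by_cases hne2 : qOf m ρ (r+1) < qOf m ρ (r+1+1)
  · -- both nonempty : consecutive tasks
    have hm1 : r ∈ NEs k m ρ := (NE_iff k m ρ (by omega)).mpr hne1
    have hm2 : r + 1 ∈ NEs k m ρ := (NE_iff k m ρ hrk).mpr hne2
    have := keychain n k m pos hmono ρ hG hm1 hm2 (by omega)
    unfold PP1 PP2
    rw [if_pos hne1, if_pos hne2]
    omega
  · -- r nonempty, r+1 empty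
    have hm1 : r ∈ NEs k m ρ := (NE_iff k m ρ (by omega)).mpr hne1
    obtain ⟨_, _, _, v3b, _⟩ :=
      slot_facts n k m sv pos d hk hsvmono hsvb hmono hposb ρ hG (show r + 1 < k by omega)
    have := v3b r hm1 (by omega)
    unfold PP1 PP2
    rw [if_pos hne1, if_neg hne2]
    omega
  · -- r empty, r+1 nonempty
    have hm2 : r + 1 ∈ NEs k m ρ := (NE_iff k m ρ hrk).mpr hne2
    obtain ⟨_, _, v3a, _, _⟩ :=
      slot_facts n k m sv pos d hk hsvmono hsvb hmono hposb ρ hG (show r < k by omega)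
    have := v3a (r+1) hm2 (by omega)
    unfold PP1 PP2
    rw [if_neg hne1, if_pos hne2]
    omega
  · -- both empty
    have hnm1 : r ∉ NEs k m ρ := by
      rw [NE_iff k m ρ (by omega)]
      exact hne1
    have hnm2 : r + 1 ∉ NEs k m ρ := by
      rw [NE_iff k m ρ hrk]
      exact hne2
    have hsetlow : (NEs k m ρ).filter (fun x => x < r + 1) =
        (NEs k m ρ).filter (fun x => x < r) := by
      ext x
      simp only [Finset.mem_filter]
      constructor
      · intro ⟨h1, h2⟩
        refine ⟨h1, ?_⟩
        rcases Nat.lt_or_ge x r with h | h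
        · exact h
        · exact absurd h1 (by rw [show x = r by omega]; exact hnm1)
      · intro ⟨h1, h2⟩
        exact ⟨h1, by omega⟩
    have hsethigh : (NEs k m ρ).filter (fun x => r < x) =
        (NEs k m ρ).filter (fun x => r + 1 < x) := by
      ext x
      simp only [Finset.mem_filter]
      constructor
      · intro ⟨h1, h2⟩
        refine ⟨h1, ?_⟩
        rcases Nat.lt_or_ge (r+1) x with h | h
        · exact h
        · exact absurd h1 (by rw [show x = r + 1 by omega]; exact hnm2)
      · intro ⟨h1, h2⟩
        exact ⟨h1, by omega⟩
    have claim1 : lowreq k m pos ρ r + 1 ≤ lowreq k m pos ρ (r+1) := by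
      have hb : r + 1 + 1 ≤ lowreq k m pos ρ (r+1) := le_max_left _ _
      rcases Finset.eq_empty_or_nonempty ((NEs k m ρ).filter (fun x => x < r)) with he | hne
      · have hlr : lowreq k m pos ρ r = max (r+1) 0 := by
          unfold lowreq
          rw [he]
          rfl
        rw [hlr]
        omega
      · obtain ⟨r1, hr1, hval⟩ := Finset.exists_mem_eq_sup _ hne
          (fun r' => P2r m pos ρ r' + (r - r'))
        have hr1f := hr1
        simp only [Finset.mem_filter] at hr1f
        have hterm : P2r m pos ρ r1 + (r + 1 - r1) ≤ lowreq k m pos ρ (r+1) := by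
          calc P2r m pos ρ r1 + (r + 1 - r1)
              ≤ ((NEs k m ρ).filter (fun x => x < r + 1)).sup
                  (fun r' => P2r m pos ρ r' + (r + 1 - r')) := by
                apply Finset.le_sup (f := fun r' => P2r m pos ρ r' + (r + 1 - r'))
                simp only [Finset.mem_filter]
                exact ⟨hr1f.1, by omega⟩
            _ ≤ _ := le_max_right _ _
        have hlr : lowreq k m pos ρ r = max (r+1) (P2r m pos ρ r1 + (r - r1)) := by
          unfold lowreq
          rw [hval]
        rw [hlr]
        have : r1 < r := hr1f.2
        omega
    have claim2 : highreq n k m pos ρ r + 1 ≤ highreq n k m pos ρ (r+1) := by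
      have hkn := k_le_n n k sv hk hsvmono hsvb
      unfold highreq
      rw [← hsethigh]
      rcases Finset.eq_empty_or_nonempty ((NEs k m ρ).filter (fun x => r < x)) with he | hne
      · rw [dif_neg (by rw [he]; simp), dif_neg (by rw [he]; simp)]
        omega
      · rw [dif_pos hne, dif_pos hne]
        have hinff : ∀ r'' ∈ (NEs k m ρ).filter (fun x => r < x),
            ((NEs k m ρ).filter (fun x => r < x)).inf' hne
              (fun r'' => P1r m pos ρ r'' - (r'' - r)) + 1 ≤ P1r m pos ρ r'' - (r'' - (r+1)) := by
          intro r'' hr''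
          have h1 : ((NEs k m ρ).filter (fun x => r < x)).inf' hne
              (fun r'' => P1r m pos ρ r'' - (r'' - r)) ≤ P1r m pos ρ r'' - (r'' - r) :=
            Finset.inf'_le _ hr''
          have hr''f := hr''
          simp only [Finset.mem_filter] at hr''f
          have hG3 := G3ne n k m pos hmono ρ hG hr''f.1
          omega
        have h2 : ((NEs k m ρ).filter (fun x => r < x)).inf' hne
            (fun r'' => P1r m pos ρ r'' - (r'' - r)) + 1 ≤
            ((NEs k m ρ).filter (fun x => r < x)).inf' hne
            (fun r'' => P1r m pos ρ r'' - (r'' - (r+1))) := by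
          apply Finset.le_inf'
          exact hinff
        omega
    have hsv := hsvmono r hrk
    unfold PP1 PP2
    rw [if_neg hne1, if_neg hne2]
    unfold slot
    omega

include d hk hsvmono hsvb hmono hposb hG in
lemma planLen_le_B {r : ℕ} (hrk : r < k) :
    planLen d (Tblk m ρ r) (sv r) (PP1 n k m sv pos ρ r) (PP2 n k m sv pos ρ r) ≤
      blockCost pos d sv k (qOf m ρ) := by
  by_cases hne : qOf m ρ r < qOf m ρ (r+1)
  · have heq : planLen d (Tblk m ρ r) (sv r) (PP1 n k m sv pos ρ r) (PP2 n k m sv pos ρ r) =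
        optTime pos d (sv r) (qOf m ρ r) (qOf m ρ (r+1)) := by
      rw [planLen_eq, Tblk_Ico n k m pos ρ hG r]
      unfold optTime
      rw [if_neg (by omega)]
      unfold PP1 PP2
      rw [if_pos hne, if_pos hne]
      unfold plo phi P1r P2r
      omega
    rw [heq]
    exact Finset.le_sup (f := fun x => optTime pos d (sv x) (qOf m ρ x) (qOf m ρ (x+1)))
      (Finset.mem_range.mpr hrk)
  · obtain ⟨_, _, _, _, v5⟩ :=
      slot_facts n k m sv pos d hk hsvmono hsvb hmono hposb ρ hG hrk
    rw [planLen_eq, Tblk_Ico n k m pos ρ hG r]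
    have hemp : Finset.Ico (qOf m ρ r) (qOf m ρ (r+1)) = ∅ :=
      Finset.Ico_eq_empty (by omega)
    rw [hemp, Finset.sum_empty]
    unfold PP1 PP2
    rw [if_neg hne, if_neg hne]
    unfold plo phi nd at *
    omega

include d hk hsvmono hsvb hmono hposb hG in
lemma sep : ∀ t r, r + 1 < k →
    plan pos d (Tblk m ρ r) (sv r) (PP1 n k m sv pos ρ r) (PP2 n k m sv pos ρ r) t + 1 ≤
    plan pos d (Tblk m ρ (r+1)) (sv (r+1)) (PP1 n k m sv pos ρ (r+1))
      (PP2 n k m sv pos ρ (r+1)) t := by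
  intro t
  induction t with
  | zero =>
    intro r hrk
    rw [plan_zero, plan_zero]
    have := hsvmono r hrk
    omega
  | succ t ih =>
    intro r hrk
    have hind := ih r hrk
    have hkey := KEYadj n k m sv pos d hk hsvmono hsvb hmono hposb ρ hG hrk
    obtain ⟨hP12x, _, _, hTx⟩ :=
      PP_facts n k m sv pos d hk hsvmono hsvb hmono hposb ρ hG (show r < k by omega)
    obtain ⟨hP12y, _, _, hTy⟩ :=
      PP_facts n k m sv pos d hk hsvmono hsvb hmono hposb ρ hG hrk
    have hx := plan_step pos d (Tblk m ρ r) (sv r) (PP1 n k m sv pos ρ r)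
      (PP2 n k m sv pos ρ r) t
    have hy := plan_step pos d (Tblk m ρ (r+1)) (sv (r+1)) (PP1 n k m sv pos ρ (r+1))
      (PP2 n k m sv pos ρ (r+1)) t
    rcases hy with hy | hy | hy
    · -- y stays
      have hy1 := (plan_stay pos d (Tblk m ρ (r+1)) (sv (r+1)) _ _ hP12y hTy hy).1
      rcases hx with hx | hx | hx
      · omega
      · have hx1 := plan_up pos d (Tblk m ρ r) (sv r) _ _ hP12x hx
        omega
      · omega
    · -- y up
      omega
    · -- y down
      have hy1 := plan_down pos d (Tblk m ρ (r+1)) (sv (r+1)) _ _ hP12y hy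
      rcases hx with hx | hx | hx
      · have hx1 := (plan_stay pos d (Tblk m ρ r) (sv r) _ _ hP12x hTx hx).2
        omega
      · have hx1 := plan_up pos d (Tblk m ρ r) (sv r) _ _ hP12x hx
        omega
      · omega

include d hk hsvmono hsvb hmono hposb hG in
lemma sched_exists :
    ∃ w L f, PathValid n k m sv pos d w L f ∧
      (∀ j < m, qOf m ρ (f j) ≤ j ∧ j < qOf m ρ (f j + 1)) ∧
      (Finset.range k).sup L = blockCost pos d sv k (qOf m ρ) := by
  set B := blockCost pos d sv k (qOf m ρ) with hB
  set w : ℕ → ℕ → ℕ := fun r t =>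
    plan pos d (Tblk m ρ r) (sv r) (PP1 n k m sv pos ρ r) (PP2 n k m sv pos ρ r) t with hw
  have hwp : ∀ r t, w r t =
      plan pos d (Tblk m ρ r) (sv r) (PP1 n k m sv pos ρ r) (PP2 n k m sv pos ρ r) t :=
    fun _ _ => rfl
  have hsort : ∀ t r r', r < r' → r' < k → w r t < w r' t := by
    intro t r r' hlt hk'
    have key : ∀ dd r0, r0 + dd + 1 < k → w r0 t < w (r0 + dd + 1) t := by
      intro dd
      induction dd with
      | zero =>
        intro r0 h0
        simp only [Nat.add_zero]
        have := sep n k m sv pos d hk hsvmono hsvb hmono hposb ρ hG t r0 (by omega)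
        simp only [hwp]
        omega
      | succ dd ih =>
        intro r0 h0
        have h1 := ih r0 (by omega)
        have h2 := sep n k m sv pos d hk hsvmono hsvb hmono hposb ρ hG t (r0 + dd + 1)
          (by omega)
        have e : r0 + (dd + 1) + 1 = (r0 + dd + 1) + 1 := by omega
        rw [e]
        simp only [hwp] at h1 ⊢
        omega
    have := key (r' - r - 1) r (by omega)
    rw [show r + (r' - r - 1) + 1 = r' by omega] at this
    exact this
  refine ⟨w, fun _ => B, ρ, ⟨?_, ?_, ?_, ?_, ?_, ?_, ?_⟩, ?_, ?_⟩
  · -- start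
    intro r hr
    rw [hwp]
    exact plan_zero pos d _ _ _ _
  · -- steps
    intro r hr t
    simp only [hwp]
    exact plan_step pos d _ _ _ _ t
  · -- bounds
    intro r hr t
    obtain ⟨hP12, hb1, hb2, _⟩ :=
      PP_facts n k m sv pos d hk hsvmono hsvb hmono hposb ρ hG hr
    have hbet := plan_between pos d (Tblk m ρ r) (sv r) (PP1 n k m sv pos ρ r)
      (PP2 n k m sv pos ρ r) t
    have hsv := hsvb r hr
    rw [hwp]
    unfold plo phi at hbet
    constructor
    · omega
    · omega
  · -- eventually constant
    intro r hr t ht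
    obtain ⟨hP12, _, _, hT⟩ :=
      PP_facts n k m sv pos d hk hsvmono hsvb hmono hposb ρ hG hr
    have hlen := planLen_le_B n k m sv pos d hk hsvmono hsvb hmono hposb ρ hG hr
    have hlen' : planLen d (Tblk m ρ r) (sv r) (PP1 n k m sv pos ρ r)
        (PP2 n k m sv pos ρ r) ≤ B := hlen
    have ht2 : B ≤ t := ht
    rw [hwp, hwp]
    rw [plan_final pos d _ _ _ _ (le_trans hlen' ht2), plan_final pos d _ _ _ _ hlen']
  · -- collision-free
    intro t r hr r' hr' hne
    rcases Nat.lt_or_ge r r' with hlt | hge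
    · have h1 := hsort t r r' hlt hr'
      have h2 := hsort (t+1) r r' hlt hr'
      constructor
      · omega
      · intro ⟨e1, e2⟩
        omega
    · have hlt : r' < r := by omega
      have h1 := hsort t r' r hlt hr
      have h2 := hsort (t+1) r' r hlt hr
      constructor
      · omega
      · intro ⟨e1, e2⟩
        omega
  · -- f j < k
    intro j hj
    exact hG.1.1 j hj
  · -- tasks served
    intro j hj
    obtain ⟨_, _, _, hT⟩ :=
      PP_facts n k m sv pos d hk hsvmono hsvb hmono hposb ρ hG (hG.1.1 j hj)
    have hmem : j ∈ Tblk m ρ (ρ j) := by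
      unfold Tblk
      exact Finset.mem_filter.mpr ⟨Finset.mem_range.mpr hj, rfl⟩
    obtain ⟨st, hst, hval⟩ := plan_park pos d (Tblk m ρ (ρ j)) (sv (ρ j))
      (PP1 n k m sv pos ρ (ρ j)) (PP2 n k m sv pos ρ (ρ j)) hT hmem
    have hlen := planLen_le_B n k m sv pos d hk hsvmono hsvb hmono hposb ρ hG (hG.1.1 j hj)
    have hstB : st + d j ≤ B := by rw [hB]; omega
    refine ⟨st, hstB, ?_⟩
    intro u hu
    rw [hwp]
    exact hval u hu
  · -- block membership
    intro j hj
    exact qOf_block m ρ hG.1.2 hj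
  · -- span
    exact Finset.sup_const (Finset.nonempty_range_iff.mpr (by omega)) B

end Sched

end KRap

/-- the `k`-partition dynamic-programming schedule (the
task-completing collision-free schedule assigning contiguous blocks to robots
so as to minimise the maximum single-robot completion time) has time span at
most `k` times the optimum `a`. -/
theorem k_robot_partition_k_approx (n k m : ℕ) (hk : 0 < k)
    (sv pos d : ℕ → ℕ)
    (hsvmono : ∀ r, r + 1 < k → sv r < sv (r + 1))
    (hsvb : ∀ r < k, 1 ≤ sv r ∧ sv r ≤ n)
    (hmono : ∀ j, j + 1 < m → pos j < pos (j + 1))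
    (hposb : ∀ j < m, 1 ≤ pos j ∧ pos j ≤ n)
    (a : ℕ)
    (ha : IsLeast {T | ∃ w L f,
        PathValid n k m sv pos d w L f ∧ (Finset.range k).sup L = T} a) :
    ∃ (q : ℕ → ℕ) (w : ℕ → ℕ → ℕ) (L f : ℕ → ℕ),
      Monotone q ∧ q 0 = 0 ∧ q k = m ∧
      (∀ q' : ℕ → ℕ, Monotone q' → q' 0 = 0 → q' k = m →
        blockCost pos d sv k q ≤ blockCost pos d sv k q') ∧
      PathValid n k m sv pos d w L f ∧
      (∀ j < m, q (f j) ≤ j ∧ j < q (f j + 1)) ∧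
      (Finset.range k).sup L ≤ k * a := by
  classical
  obtain ⟨hmem0, hlb0⟩ := ha
  obtain ⟨w0, L0, f0, hval0, hsup0⟩ := hmem0
  obtain ⟨hstart, hstep, hbnd, hconst, hcol, hfk, htask⟩ := hval0
  have hLa : ∀ r < k, L0 r ≤ a := by
    intro r hr
    rw [← hsup0]
    exact Finset.le_sup (Finset.mem_range.mpr hr)
  obtain ⟨ρq, hIq, hq_bound⟩ := KRap.sec2_bound a k m sv pos d w0 L0 f0 hk hstart hstep
    hconst hcol hfk htask hsvmono hmono hLa
  -- the set of achievable block costs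
  set S : Set ℕ := {c : ℕ | ∃ q', Monotone q' ∧ q' 0 = 0 ∧ q' k = m ∧
    blockCost pos d sv k q' = c} with hS
  have hSmem : ∀ q' : ℕ → ℕ, Monotone q' → q' 0 = 0 → q' k = m →
      blockCost pos d sv k q' ∈ S := by
    intro q' h1 h2 h3
    exact ⟨q', h1, h2, h3, rfl⟩
  have hSne : S.Nonempty :=
    ⟨blockCost pos d sv k (KRap.qOf m ρq), hSmem _ (KRap.qOf_mono m ρq)
      (KRap.qOf_zero m ρq) (KRap.qOf_top k m ρq hIq.1)⟩
  obtain ⟨q_min, hqm1, hqm2, hqm3, hqm4⟩ := Nat.sInf_mem hSne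
  have hc0_le : sInf S ≤ k * a := by
    have := Nat.sInf_le (hSmem _ (KRap.qOf_mono m ρq) (KRap.qOf_zero m ρq)
      (KRap.qOf_top k m ρq hIq.1))
    omega
  -- convert q_min to a block map
  have hex : ∀ j, j < m → ∃ r, j < q_min (r + 1) := by
    intro j hj
    refine ⟨k - 1, ?_⟩
    rw [show k - 1 + 1 = k by omega, hqm3]
    omega
  set ρm : ℕ → ℕ := fun j => if hj : j < m then Nat.find (hex j hj) else 0 with hρm
  have hρmk : ∀ j < m, ρm j < k := by
    intro j hj
    rw [hρm]; simp only [dif_pos hj]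
    have : Nat.find (hex j hj) ≤ k - 1 := Nat.find_min' _ (by
      rw [show k - 1 + 1 = k by omega, hqm3]; omega)
    omega
  have hρspec : ∀ j (hj : j < m), j < q_min (ρm j + 1) := by
    intro j hj
    rw [hρm]; simp only [dif_pos hj]
    exact Nat.find_spec (hex j hj)
  have hρmono : ∀ i j, i ≤ j → j < m → ρm i ≤ ρm j := by
    intro i j hij hjm
    have him : i < m := by omega
    conv_lhs => rw [hρm]
    simp only [dif_pos him]
    exact Nat.find_min' _ (by
      have := hρspec j hjm
      omega)
  have hIm : KRap.Inv k m ρm := ⟨hρmk, hρmono⟩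
  have hqOfm : ∀ r, r ≤ k → KRap.qOf m ρm r = q_min r := by
    intro r hrk
    unfold KRap.qOf
    have hset : (Finset.range m).filter (fun j => ρm j < r) = Finset.range (q_min r) := by
      ext j
      simp only [Finset.mem_filter, Finset.mem_range]
      constructor
      · intro ⟨h1, h2⟩
        have := hρspec j h1
        have := hqm1 (show ρm j + 1 ≤ r by omega)
        omega
      · intro h
        have hjm : j < m := by
          have := hqm1 hrk
          rw [hqm3] at this
          omega
        refine ⟨hjm, ?_⟩
        rcases Nat.eq_zero_or_pos r with h0 | h0
        · rw [h0, hqm2] at h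
          omega
        · have : ρm j ≤ r - 1 := by
            rw [hρm]; simp only [dif_pos hjm]
            exact Nat.find_min' _ (by rw [show r - 1 + 1 = r by omega]; omega)
          omega
    rw [hset, Finset.card_range]
  have hbc_eq : blockCost pos d sv k (KRap.qOf m ρm) = blockCost pos d sv k q_min := by
    unfold blockCost
    apply Finset.sup_congr rfl
    intro r hr
    rw [Finset.mem_range] at hr
    rw [hqOfm r (by omega), hqOfm (r+1) (by omega)]
  -- fix to a good block map
  obtain ⟨ρg, hGood, hcost⟩ := KRap.fix_good n k m sv pos d hk hsvmono hsvb hmono hposb ρm hIm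
  -- build the schedule
  obtain ⟨w, L, f, hPV, hblk, hspan⟩ :=
    KRap.sched_exists n k m sv pos d hk hsvmono hsvb hmono hposb ρg hGood
  refine ⟨KRap.qOf m ρg, w, L, f, KRap.qOf_mono m ρg, KRap.qOf_zero m ρg,
    KRap.qOf_top k m ρg hGood.1.1, ?_, hPV, hblk, ?_⟩
  · intro q' h1 h2 h3
    have hge : sInf S ≤ blockCost pos d sv k q' := Nat.sInf_le (hSmem q' h1 h2 h3)
    omega
  · rw [hspan]
    omega
end

section
/- In a 2-robot instance on a path graph where all m tasks have the same duration d, the minimum time span of a task-completing collision-free pair of schedules equals min over q ∈ [0, m] of max(W_L(q), W_R(q)), where W_L(q) is the single-robot optimal completion time for tasks t_1,...,t_q from sv_L and W_R(q) is the single-robot optimal completion time for tasks t_{q+1},...,t_m from sv_R. -/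
/-!
The two robots can never pass each other, so the left one is strictly left of the right one at
every moment. If the left robot serves `q` tasks, it gets to the first task position or further
left (whoever serves that task is not left of it), and to the position of some task of index at
least `q - 1`. Its moving steps and its waiting steps at distinct positions fit into its time
span, which is therefore at least `W_L(q)`; symmetrically the right robot needs `W_R(q)`.

Conversely, for a minimizing `q` let each robot run the optimal tour of its block: first to the
nearer end of its range, then one sweep to the other end. The two ranges can only overlap when
one robot's whole block lies beyond the other robot's start; that robot then heads for its block
at full speed and stays ahead of the other. The one obstruction, an idle robot standing beyond
the other robot's first or last task, is removed by handing that task to it, which does not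
increase the time span.
-/

open Finset

def IsPathWalk (w : ℕ → ℕ) : Prop :=
  ∀ t, w (t + 1) = w t ∨ w (t + 1) = w t + 1 ∨ w t = w (t + 1) + 1

lemma IsPathWalk.le_add {w : ℕ → ℕ} (hw : IsPathWalk w) (t : ℕ) :
    w t ≤ w 0 + t ∧ w 0 ≤ w t + t := by
  induction t with
  | zero => omega
  | succ t ih => have := hw t; omega

lemma lt_of_noncrossing {w₀ w₁ : ℕ → ℕ} (hw₀ : IsPathWalk w₀) (hw₁ : IsPathWalk w₁)
    (h0 : w₀ 0 < w₁ 0) (hne : ∀ t, w₀ t ≠ w₁ t ∧ ¬(w₀ (t + 1) = w₁ t ∧ w₁ (t + 1) = w₀ t))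
    (t : ℕ) : w₀ t < w₁ t := by
  induction t with
  | zero => exact h0
  | succ t ih =>
    have := hw₀ t
    have := hw₁ t
    have := hne t
    have := hne (t + 1)
    omega

structure IsTour (w : ℕ → ℕ) (s A B δ : ℕ) (P : Finset ℕ) (T : ℕ) : Prop where
  walk : IsPathWalk w
  start : w 0 = s
  mem : ∀ t, A ≤ w t ∧ w t ≤ B
  idle : ∀ t, T ≤ t → w t = w T
  serve : ∀ p ∈ P, ∃ a, a + δ ≤ T ∧ ∀ u ≤ δ, w (a + u) = p

/-- The paper's single-robot optimum, with `[A, B]` the hull of the start and the tasks. -/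
def tourTime (s A B δ k : ℕ) : ℕ := min (s - A) (B - s) + (B - A) + k * δ

section Tour

variable {w : ℕ → ℕ} {s A B δ T : ℕ} {P : Finset ℕ}

lemma IsTour.mono_time {T' : ℕ} (h : IsTour w s A B δ P T) (hT : T ≤ T') :
    IsTour w s A B δ P T' where
  walk := h.walk
  start := h.start
  mem := h.mem
  idle t ht := by rw [h.idle t (hT.trans ht), h.idle T' hT]
  serve p hp := by
    obtain ⟨a, ha, hw⟩ := h.serve p hp
    exact ⟨a, ha.trans hT, hw⟩

lemma IsTour.eq_start (h : IsTour w s A B δ P T) (hT : T = 0) (t : ℕ) : w t = s := by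
  rw [h.idle t (hT ▸ Nat.zero_le t), hT, h.start]

lemma isTour_const (hA : A ≤ s) (hB : s ≤ B) : IsTour (fun _ => s) s A B δ ∅ 0 where
  walk _ := Or.inl rfl
  start := rfl
  mem _ := ⟨hA, hB⟩
  idle _ _ := rfl
  serve _ h := absurd h (notMem_empty _)

lemma IsTour.reflect {P' : Finset ℕ} (h : IsTour w (A + B - s) A B δ P' T) (hs : s ≤ B)
    (hP : ∀ p ∈ P, A ≤ p ∧ p ≤ B ∧ A + B - p ∈ P') :
    IsTour (fun t => A + B - w t) s A B δ P T where
  walk t := by dsimp only; have := h.walk t; have := h.mem t; have := h.mem (t + 1); omega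
  start := by rw [h.start]; omega
  mem t := by have := h.mem t; omega
  idle t ht := by rw [h.idle t ht]
  serve p hp := by
    obtain ⟨hAp, hpB, hp'⟩ := hP p hp
    obtain ⟨a, ha, hw⟩ := h.serve _ hp'
    exact ⟨a, ha, fun u hu => by rw [hw u hu]; omega⟩

end Tour

lemma exists_sweep_insert {w : ℕ → ℕ} {A B δ T p : ℕ} {Q : Finset ℕ}
    (hw : IsTour w A A p δ Q T) (hend : w T = p)
    (hlead : ∀ c ≤ p, (∀ x ∈ Q, c ≤ x) → ∀ t, min (A + t) c ≤ w t) (hpB : p ≤ B) :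
    ∃ w', IsTour w' A A B δ (insert p Q) (T + δ + (B - p)) ∧ w' (T + δ + (B - p)) = B ∧
      ∀ c ≤ B, (∀ x ∈ insert p Q, c ≤ x) → ∀ t, min (A + t) c ≤ w' t := by
  have hidle : ∀ t, T ≤ t → w t = p := fun t ht => (hw.idle t ht).trans hend
  refine ⟨fun t => if t ≤ T + δ then w t else min (p + (t - (T + δ))) B,
    ⟨fun t => ?_, ?_, fun t => ?_, fun t ht => ?_, fun x hx => ?_⟩, ?_, fun c hcB hc t => ?_⟩
  · have := hw.walk t
    have := hidle t
    have := hidle (t + 1)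
    split_ifs <;> omega
  · simp [hw.start]
  · have := hw.mem t
    split_ifs <;> omega
  · have := hidle t
    have := hidle (T + δ + (B - p))
    split_ifs <;> omega
  · rcases mem_insert.mp hx with rfl | hx
    · refine ⟨T, by omega, fun u hu => ?_⟩
      simp only [show T + u ≤ T + δ by omega, if_true]
      exact hidle _ (by omega)
    · obtain ⟨a, ha, hwa⟩ := hw.serve x hx
      refine ⟨a, by omega, fun u hu => ?_⟩
      simp only [show a + u ≤ T + δ by omega, if_true]
      exact hwa u hu
  · have := hidle (T + δ + (B - p))
    dsimp only
    split_ifs <;> omega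
  · have := hc p (mem_insert_self p Q)
    dsimp only
    split_ifs
    · exact hlead c (by omega) (fun x hx => hc x (mem_insert_of_mem hx)) t
    · omega

lemma exists_sweep (δ A : ℕ) (P : Finset ℕ) : ∀ B, A ≤ B → (∀ p ∈ P, A ≤ p ∧ p ≤ B) →
    ∃ w, IsTour w A A B δ P (B - A + #P * δ) ∧ w (B - A + #P * δ) = B ∧
      ∀ c ≤ B, (∀ p ∈ P, c ≤ p) → ∀ t, min (A + t) c ≤ w t := by
  induction P using Finset.induction_on_max with
  | empty =>
    intro B hAB _
    refine ⟨fun t => min (A + t) B, ⟨fun t => by omega, by simpa using hAB, fun t => by omega,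
      fun t ht => by omega, fun p hp => absurd hp (notMem_empty p)⟩, by
        simp only [card_empty, zero_mul, Nat.add_zero]; omega,
      fun c hcB _ t => by dsimp only; omega⟩
  | insert p Q hlt ih =>
    intro B hAB hP
    obtain ⟨hAp, hpB⟩ := hP p (mem_insert_self p Q)
    obtain ⟨w, hw, hend, hlead⟩ :=
      ih p hAp fun x hx => ⟨(hP x (mem_insert_of_mem hx)).1, (hlt x hx).le⟩
    have hT : B - A + #(insert p Q) * δ = p - A + #Q * δ + δ + (B - p) := by
      rw [card_insert_of_notMem fun h => (hlt p h).false, add_one_mul]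
      omega
    rw [hT]
    exact exists_sweep_insert hw hend hlead hpB

section Tour

variable {s A B δ : ℕ} {P : Finset ℕ}

lemma exists_tour_descending_first (hAs : A ≤ s) (hsB : s ≤ B) (hP : ∀ p ∈ P, A ≤ p ∧ p ≤ B) :
    ∃ w, IsTour w s A B δ P (s - A + (B - A + #P * δ)) ∧
      (s = A → ∀ c ≤ B, (∀ p ∈ P, c ≤ p) → ∀ t, min (s + t) c ≤ w t) := by
  obtain ⟨w, hw, -, hlead⟩ := exists_sweep δ A P B (hAs.trans hsB) hP
  refine ⟨fun t => if t < s - A then s - t else w (t - (s - A)),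
    ⟨fun t => ?_, ?_, fun t => ?_, fun t ht => ?_, fun p hp => ?_⟩, fun hsA c hcB hc t => ?_⟩
  · rcases lt_trichotomy (t + 1) (s - A) with h | h | h
    · simp only [if_pos h, if_pos (show t < s - A by omega)]
      omega
    · simp only [h, lt_irrefl, if_false, Nat.sub_self, hw.start, if_pos (show t < s - A by omega)]
      omega
    · rw [if_neg (by omega), if_neg (by omega), show t + 1 - (s - A) = t - (s - A) + 1 by omega]
      exact hw.walk _
  · have := hw.start
    simp only [Nat.sub_zero, Nat.zero_sub]
    split_ifs <;> omega
  · have := hw.mem (t - (s - A))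
    split_ifs <;> omega
  · simp only [show ¬t < s - A by omega, show ¬s - A + (B - A + #P * δ) < s - A by omega,
      if_false, Nat.add_sub_cancel_left]
    exact hw.idle _ (by omega)
  · obtain ⟨a, ha, hwa⟩ := hw.serve p hp
    refine ⟨s - A + a, by omega, fun u hu => ?_⟩
    rw [if_neg (by omega), Nat.add_assoc, Nat.add_sub_cancel_left]
    exact hwa u hu
  · simp only [hsA, Nat.sub_self, Nat.not_lt_zero, if_false, Nat.sub_zero]
    exact hlead c hcB hc t

/-- Go first to the nearer end of `[A, B]`; the case of the upper end is the other one reflected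
through `x ↦ A + B - x`. -/
lemma exists_tour (hAs : A ≤ s) (hsB : s ≤ B) (hP : ∀ p ∈ P, A ≤ p ∧ p ≤ B) :
    ∃ w, IsTour w s A B δ P (tourTime s A B δ #P) ∧
      (s = A → ∀ c ≤ B, (∀ p ∈ P, c ≤ p) → ∀ t, min (s + t) c ≤ w t) ∧
      (s = B → ∀ c, A ≤ c → (∀ p ∈ P, p ≤ c) → ∀ t, w t ≤ max (s - t) c) := by
  rcases le_total (s - A) (B - s) with h | h
  · obtain ⟨w, hw, hlead⟩ := exists_tour_descending_first (δ := δ) hAs hsB hP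
    have hT : tourTime s A B δ #P = s - A + (B - A + #P * δ) := by unfold tourTime; omega
    refine ⟨w, hT ▸ hw, hlead, fun hsB' c hAc _ t => ?_⟩
    have := hw.mem t
    omega
  · have hP' : ∀ p ∈ P, A ≤ p ∧ p ≤ B ∧ A + B - p ∈ P.image (A + B - ·) :=
      fun p hp => ⟨(hP p hp).1, (hP p hp).2, mem_image_of_mem _ hp⟩
    have hcard : #(P.image (A + B - ·)) = #P :=
      card_image_of_injOn fun p hp p' hp' h => by
        have := hP p hp; have := hP p' hp'; omega
    obtain ⟨w, hw, hlead⟩ := exists_tour_descending_first (δ := δ) (A := A) (B := B)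
      (s := A + B - s) (P := P.image (A + B - ·)) (by omega) (by omega) (by
        simp only [mem_image, forall_exists_index, and_imp, forall_apply_eq_imp_iff₂]
        intro p hp; have := hP p hp; omega)
    have hT : tourTime s A B δ #P = A + B - s - A + (B - A + #(P.image (A + B - ·)) * δ) := by
      unfold tourTime; rw [hcard]; omega
    refine ⟨fun t => A + B - w t, ?_, fun hsA c hcB _ t => ?_, fun hsB' c hAc hc t => ?_⟩
    · rw [hT]
      exact hw.reflect hsB hP'
    · have := hw.mem t
      dsimp only
      omega
    · dsimp only
      have := hlead (by omega) (A + B - c) (by omega) (by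
        simp only [mem_image, forall_exists_index, and_imp, forall_apply_eq_imp_iff₂]
        intro p hp; have := hc p hp; omega) t
      have := hw.mem t
      omega

end Tour

def moveTimes (w : ℕ → ℕ) (u v : ℕ) : Finset ℕ := (Ico u v).filter fun t => w (t + 1) ≠ w t

section MoveTimes

variable {w : ℕ → ℕ}

lemma card_moveTimes_add {u v x : ℕ} (huv : u ≤ v) (hvx : v ≤ x) :
    #(moveTimes w u v) + #(moveTimes w v x) = #(moveTimes w u x) := by
  rw [moveTimes, moveTimes, moveTimes, ← card_union_of_disjoint
    (disjoint_filter_filter (Ico_disjoint_Ico_consecutive u v x)), ← filter_union,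
    Ico_union_Ico_eq_Ico huv hvx]

lemma IsPathWalk.dist_le_card_moveTimes (hw : IsPathWalk w) {u v : ℕ} (huv : u ≤ v) :
    w v - w u + (w u - w v) ≤ #(moveTimes w u v) := by
  induction v, huv using Nat.le_induction with
  | base => simp
  | succ v huv ih =>
    rw [← card_moveTimes_add huv (Nat.le_succ v), show moveTimes w v (v + 1) =
      ({v} : Finset ℕ).filter fun t => w (t + 1) ≠ w t by rw [moveTimes, Nat.Ico_succ_singleton],
      filter_singleton]
    have := hw v
    split_ifs with h
    · rw [card_singleton]; omega
    · rw [card_empty]; omega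

lemma IsPathWalk.min_add_le_card_moveTimes (hw : IsPathWalk w) {s A B L tA tB : ℕ}
    (h0 : w 0 = s) (htA : tA ≤ L) (htB : tB ≤ L) (hA : w tA ≤ A) (hB : B ≤ w tB) :
    min (s - A) (B - s) + (B - A) ≤ #(moveTimes w 0 L) := by
  have key : ∀ u v, u ≤ v → v ≤ L →
      w u - s + (s - w u) + (w v - w u + (w u - w v)) ≤ #(moveTimes w 0 L) := by
    intro u v huv hvL
    have h1 := hw.dist_le_card_moveTimes (Nat.zero_le u)
    have h2 := hw.dist_le_card_moveTimes huv
    have h3 := card_moveTimes_add (w := w) (Nat.zero_le u) huv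
    have h4 := card_moveTimes_add (w := w) (Nat.zero_le v) hvL
    rw [h0] at h1
    omega
  rcases le_total tA tB with h | h
  · have := key tA tB h htB
    omega
  · have := key tB tA h htA
    omega

/-- The waiting steps at the distinct positions of `P` are disjoint from the moving steps. -/
lemma card_moveTimes_add_mul_le {δ L : ℕ} {P : Finset ℕ}
    (hserve : ∀ p ∈ P, ∃ a, a + δ ≤ L ∧ ∀ u ≤ δ, w (a + u) = p) :
    #(moveTimes w 0 L) + #P * δ ≤ L := by
  choose! a ha hwa using hserve
  have hwait : ∀ p ∈ P, ∀ t ∈ Ico (a p) (a p + δ), w t = p ∧ w (t + 1) = p := by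
    intro p hp t ht
    rw [mem_Ico] at ht
    constructor
    · simpa [show a p + (t - a p) = t by omega] using hwa p hp (t - a p) (by omega)
    · simpa [show a p + (t + 1 - a p) = t + 1 by omega] using hwa p hp (t + 1 - a p) (by omega)
  set waits := P.biUnion fun p => Ico (a p) (a p + δ)
  have hcard : #waits = #P * δ := by
    rw [card_biUnion, sum_congr rfl fun p _ => Nat.card_Ico _ _]
    · simp
    · intro p hp p' hp' hne
      refine disjoint_left.mpr fun t ht ht' => hne ?_
      rw [← (hwait p hp t ht).1, (hwait p' hp' t ht').1]
  have hdisj : Disjoint (moveTimes w 0 L) waits := by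
    refine disjoint_left.mpr fun t ht ht' => ?_
    obtain ⟨p, hp, htp⟩ := mem_biUnion.mp ht'
    have := hwait p hp t htp
    exact (mem_filter.mp ht).2 (by omega)
  have hsub : moveTimes w 0 L ∪ waits ⊆ range L := by
    refine union_subset (fun t ht => ?_) fun t ht => ?_
    · simpa using (mem_Ico.mp (mem_filter.mp ht).1).2
    · obtain ⟨p, hp, htp⟩ := mem_biUnion.mp ht
      have := ha p hp
      rw [mem_Ico] at htp
      rw [mem_range]
      omega
  have := card_le_card hsub
  rwa [card_union_of_disjoint hdisj, card_range, hcard] at this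

lemma IsPathWalk.tourTime_le (hw : IsPathWalk w) {s A B δ L tA tB : ℕ} {P : Finset ℕ}
    (h0 : w 0 = s) (htA : tA ≤ L) (htB : tB ≤ L) (hA : w tA ≤ A) (hB : B ≤ w tB)
    (hserve : ∀ p ∈ P, ∃ a, a + δ ≤ L ∧ ∀ u ≤ δ, w (a + u) = p) :
    tourTime s A B δ #P ≤ L :=
  (Nat.add_le_add_right (hw.min_add_le_card_moveTimes h0 htA htB hA hB) _).trans
    (card_moveTimes_add_mul_le hserve)

end MoveTimes

section Block

variable {pos d : ℕ → ℕ} {s a b δ : ℕ}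

lemma optTime_of_le (h : b ≤ a) : optTime pos d s a b = 0 := if_pos h

lemma optTime_eq_tourTime (h : a < b) :
    optTime pos (fun _ => δ) s a b =
      tourTime s (min (pos a) s) (max (pos (b - 1)) s) δ (b - a) := by
  rw [optTime, if_neg h.not_ge, tourTime, sum_const, Nat.card_Ico, smul_eq_mul]

lemma optTime_subblock_le {a' b' : ℕ} (hpos : MonotoneOn pos (Set.Ico a b)) (ha : a ≤ a')
    (hb : b' ≤ b) : optTime pos d s a' b' ≤ optTime pos d s a b := by
  rcases le_or_gt b' a' with h | h
  · rw [optTime_of_le h]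
    exact Nat.zero_le _
  have h1 : pos a ≤ pos a' := hpos ⟨le_rfl, by omega⟩ ⟨ha, by omega⟩ ha
  have h2 : pos (b' - 1) ≤ pos (b - 1) := hpos ⟨by omega, by omega⟩ ⟨by omega, by omega⟩ (by omega)
  have h3 : ∑ j ∈ Ico a' b', d j ≤ ∑ j ∈ Ico a b, d j :=
    sum_le_sum_of_subset (Ico_subset_Ico ha hb)
  unfold optTime
  rw [if_neg (by omega), if_neg (by omega)]
  omega

lemma optTime_first_le {s' : ℕ} (hs : pos a ≤ s) (hss' : s ≤ s') (hab : a < b) :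
    optTime pos d s a (a + 1) ≤ optTime pos d s' a b := by
  have := single_le_sum (f := d) (fun _ _ => Nat.zero_le _) (left_mem_Ico.mpr hab)
  unfold optTime
  rw [if_neg (by omega), if_neg (by omega), Nat.add_sub_cancel, Nat.Ico_succ_singleton,
    sum_singleton]
  omega

lemma optTime_last_le {s' : ℕ} (hs : s ≤ pos (b - 1)) (hs's : s' ≤ s) (hab : a < b) :
    optTime pos d s (b - 1) b ≤ optTime pos d s' a b := by
  have := single_le_sum (f := d) (fun _ _ => Nat.zero_le _)
    (show b - 1 ∈ Ico a b from mem_Ico.mpr ⟨by omega, by omega⟩)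
  have hIco : Ico (b - 1) b = {b - 1} := by
    rw [← Nat.Ico_succ_singleton, Nat.sub_add_cancel (by omega)]
  unfold optTime
  rw [if_neg (by omega), if_neg (by omega), hIco, sum_singleton]
  omega

lemma IsPathWalk.optTime_le {w : ℕ → ℕ} (hw : IsPathWalk w) {L : ℕ} {S : Finset ℕ}
    (h0 : w 0 = s) (hinj : Set.InjOn pos S) (hcard : #S = b - a)
    (hlo : a < b → ∃ t ≤ L, w t ≤ pos a) (hhi : a < b → ∃ t ≤ L, pos (b - 1) ≤ w t)
    (hserve : ∀ j ∈ S, ∃ a', a' + δ ≤ L ∧ ∀ u ≤ δ, w (a' + u) = pos j) :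
    optTime pos (fun _ => δ) s a b ≤ L := by
  rcases le_or_gt b a with hba | hab
  · rw [optTime_of_le hba]
    exact Nat.zero_le _
  obtain ⟨tA, htA, hA⟩ : ∃ t ≤ L, w t ≤ min (pos a) s := by
    obtain ⟨t, ht, hwt⟩ := hlo hab
    rcases le_total (pos a) s with h | h
    · exact ⟨t, ht, by omega⟩
    · exact ⟨0, Nat.zero_le _, by omega⟩
  obtain ⟨tB, htB, hB⟩ : ∃ t ≤ L, max (pos (b - 1)) s ≤ w t := by
    obtain ⟨t, ht, hwt⟩ := hhi hab
    rcases le_total (pos (b - 1)) s with h | h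
    · exact ⟨0, Nat.zero_le _, by omega⟩
    · exact ⟨t, ht, by omega⟩
  rw [optTime_eq_tourTime hab, ← hcard, ← card_image_of_injOn hinj]
  refine hw.tourTime_le h0 htA htB hA hB ?_
  simpa only [mem_image, forall_exists_index, and_imp, forall_apply_eq_imp_iff₂] using hserve

lemma exists_blockTour (hpos : StrictMonoOn pos (Set.Ico a b)) :
    ∃ w, IsTour w s (min (pos a) s) (max (pos (b - 1)) s) δ ((Ico a b).image pos)
        (optTime pos (fun _ => δ) s a b) ∧
      (a < b → s ≤ pos a → ∀ t, min (s + t) (pos a) ≤ w t) ∧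
      (a < b → pos (b - 1) ≤ s → ∀ t, w t ≤ max (s - t) (pos (b - 1))) := by
  rcases le_or_gt b a with hba | hab
  · refine ⟨fun _ => s, ?_, fun h => absurd h hba.not_gt, fun h => absurd h hba.not_gt⟩
    rw [optTime_of_le hba, Ico_eq_empty_of_le hba, image_empty]
    exact isTour_const (min_le_right _ _) (le_max_right _ _)
  have hbounds : ∀ j ∈ Ico a b, pos a ≤ pos j ∧ pos j ≤ pos (b - 1) := by
    intro j hj
    rw [mem_Ico] at hj
    exact ⟨hpos.monotoneOn ⟨le_rfl, hab⟩ ⟨hj.1, hj.2⟩ hj.1,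
      hpos.monotoneOn ⟨hj.1, hj.2⟩ ⟨by omega, by omega⟩ (by omega)⟩
  have hcard : #((Ico a b).image pos) = b - a := by
    rw [card_image_of_injOn (by rw [coe_Ico]; exact hpos.injOn), Nat.card_Ico]
  obtain ⟨w, hw, hup, hdown⟩ := exists_tour (δ := δ) (P := (Ico a b).image pos)
    (min_le_right (pos a) s) (le_max_right (pos (b - 1)) s) (by
      simp only [mem_image, forall_exists_index, and_imp, forall_apply_eq_imp_iff₂]
      intro j hj; have := hbounds j hj; omega)
  have hspan := hbounds a (left_mem_Ico.mpr hab)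
  refine ⟨w, by rwa [optTime_eq_tourTime hab, ← hcard], fun _ hs t => ?_, fun _ hs t => ?_⟩
  · refine hup (by omega) (pos a) (by omega) ?_ t
    simp only [mem_image, forall_exists_index, and_imp, forall_apply_eq_imp_iff₂]
    exact fun j hj => (hbounds j hj).1
  · refine hdown (by omega) (pos (b - 1)) (by omega) ?_ t
    simp only [mem_image, forall_exists_index, and_imp, forall_apply_eq_imp_iff₂]
    exact fun j hj => (hbounds j hj).2

lemma IsTour.block_bounds {w : ℕ → ℕ} {lo hi : ℕ} {P : Finset ℕ}
    (h : IsTour w s (min (pos a) s) (max (pos (b - 1)) s) δ P (optTime pos (fun _ => δ) s a b))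
    (hs : lo ≤ s ∧ s ≤ hi) (hpos : ∀ j, a ≤ j → j < b → lo ≤ pos j ∧ pos j ≤ hi) (t : ℕ) :
    lo ≤ w t ∧ w t ≤ hi := by
  rcases le_or_gt b a with hba | hab
  · rw [h.eq_start (optTime_of_le hba) t]
    exact hs
  · have := h.mem t
    have := hpos a le_rfl hab
    have := hpos (b - 1) (by omega) (by omega)
    omega

end Block

lemma exists_mem_card_le_succ {S : Finset ℕ} (hS : S.Nonempty) : ∃ j ∈ S, #S ≤ j + 1 := by
  refine ⟨S.max' hS, S.max'_mem hS, ?_⟩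
  calc #S ≤ #(range (S.max' hS + 1)) :=
        card_le_card fun j hj => mem_range.mpr (Nat.lt_succ_of_le (S.le_max' j hj))
    _ = S.max' hS + 1 := card_range _

lemma exists_mem_le_sub_card {S : Finset ℕ} {m : ℕ} (hS : S.Nonempty) (hSm : S ⊆ range m) :
    ∃ j ∈ S, j ≤ m - #S := by
  refine ⟨S.min' hS, S.min'_mem hS, ?_⟩
  have hcard : #S ≤ #(Ico (S.min' hS) m) :=
    card_le_card fun j hj => mem_Ico.mpr ⟨S.min'_le j hj, mem_range.mp (hSm hj)⟩
  have := mem_range.mp (hSm (S.min'_mem hS))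
  rw [Nat.card_Ico] at hcard
  omega

def tasksOf (f : ℕ → ℕ) (m r : ℕ) : Finset ℕ := (range m).filter (f · = r)

section TwoRobots

variable {n m δ : ℕ} {sv pos d L f : ℕ → ℕ} {w : ℕ → ℕ → ℕ}

lemma PathValid.exists_le_span {k : ℕ} (hv : PathValid n k m sv pos d w L f) {r : ℕ} (hr : r < k)
    (t : ℕ) : ∃ t' ≤ L r, w r t' = w r t := by
  rcases le_total t (L r) with h | h
  · exact ⟨t, h, rfl⟩
  · exact ⟨L r, le_rfl, (hv.2.2.2.1 r hr t h).symm⟩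

lemma PathValid.serve_tasksOf {k : ℕ} (hv : PathValid n k m sv pos d w L f) {r j : ℕ}
    (hj : j ∈ tasksOf f m r) : ∃ a, a + d j ≤ L r ∧ ∀ u ≤ d j, w r (a + u) = pos j := by
  rw [tasksOf, mem_filter, mem_range] at hj
  rw [← hj.2]
  exact hv.2.2.2.2.2.2 j hj.1

lemma PathValid.card_tasksOf_add (hv : PathValid n 2 m sv pos d w L f) :
    #(tasksOf f m 0) + #(tasksOf f m 1) = m := by
  have hsplit := card_filter_add_card_filter_not (s := range m) (fun j => f j = 0)
  rw [card_range] at hsplit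
  rwa [tasksOf, tasksOf, filter_congr fun j hj => show f j = 1 ↔ ¬f j = 0 by
    have := hv.2.2.2.2.2.1 j (mem_range.mp hj); omega]

lemma PathValid.left_lt_right (hv : PathValid n 2 m sv pos d w L f) (hsv : sv 0 < sv 1)
    (t : ℕ) : w 0 t < w 1 t := by
  obtain ⟨hstart, hstep, -, -, hcol, -, -⟩ := hv
  refine lt_of_noncrossing (hstep 0 (by norm_num)) (hstep 1 (by norm_num)) ?_
    (fun t => hcol t 0 (by norm_num) 1 (by norm_num) zero_ne_one) t
  rwa [hstart 0 (by norm_num), hstart 1 (by norm_num)]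

lemma PathValid.exists_at_task (hv : PathValid n 2 m sv pos d w L f) {j : ℕ} (hj : j < m) :
    ∃ t, (f j = 0 ∨ f j = 1) ∧ w (f j) t = pos j := by
  obtain ⟨a, -, hwa⟩ := hv.2.2.2.2.2.2 j hj
  have := hv.2.2.2.2.2.1 j hj
  exact ⟨a, by omega, hwa 0 (Nat.zero_le _)⟩

lemma PathValid.exists_left_le (hv : PathValid n 2 m sv pos d w L f) (hsv : sv 0 < sv 1)
    {j : ℕ} (hj : j < m) : ∃ t ≤ L 0, w 0 t ≤ pos j := by
  obtain ⟨a, hf, hwa⟩ := hv.exists_at_task hj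
  obtain ⟨t, ht, hwt⟩ := hv.exists_le_span (r := 0) (by norm_num) a
  have := hv.left_lt_right hsv a
  refine ⟨t, ht, ?_⟩
  rcases hf with hf | hf <;> rw [hf] at hwa <;> omega

lemma PathValid.exists_le_right (hv : PathValid n 2 m sv pos d w L f) (hsv : sv 0 < sv 1)
    {j : ℕ} (hj : j < m) : ∃ t ≤ L 1, pos j ≤ w 1 t := by
  obtain ⟨a, hf, hwa⟩ := hv.exists_at_task hj
  obtain ⟨t, ht, hwt⟩ := hv.exists_le_span (r := 1) (by norm_num) a
  have := hv.left_lt_right hsv a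
  refine ⟨t, ht, ?_⟩
  rcases hf with hf | hf <;> rw [hf] at hwa <;> omega

lemma PathValid.optTime_left_le (hpos : StrictMonoOn pos (Set.Iio m))
    (hv : PathValid n 2 m sv pos (fun _ => δ) w L f) (hsv : sv 0 < sv 1) :
    optTime pos (fun _ => δ) (sv 0) 0 #(tasksOf f m 0) ≤ L 0 := by
  have hsub : ↑(tasksOf f m 0) ⊆ Set.Iio m := fun j hj => by
    simpa using (mem_filter.mp hj).1
  refine IsPathWalk.optTime_le (hv.2.1 0 (by norm_num)) (hv.1 0 (by norm_num))
    (hpos.injOn.mono hsub) (Nat.sub_zero _).symm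
    (fun hq => hv.exists_left_le hsv (by have := hv.card_tasksOf_add; omega)) (fun hq => ?_)
    fun j hj => hv.serve_tasksOf hj
  obtain ⟨j, hj, hqj⟩ := exists_mem_card_le_succ (card_pos.mp hq)
  obtain ⟨a, ha, hwa⟩ := hv.serve_tasksOf hj
  have hjm : j < m := hsub hj
  refine ⟨a, by omega, (hwa 0 (Nat.zero_le _)) ▸ ?_⟩
  exact hpos.monotoneOn (show _ < m by omega) hjm (by omega)

lemma PathValid.optTime_right_le (hpos : StrictMonoOn pos (Set.Iio m))
    (hv : PathValid n 2 m sv pos (fun _ => δ) w L f) (hsv : sv 0 < sv 1) :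
    optTime pos (fun _ => δ) (sv 1) #(tasksOf f m 0) m ≤ L 1 := by
  have hcard := hv.card_tasksOf_add
  have hsub : ↑(tasksOf f m 1) ⊆ Set.Iio m := fun j hj => by
    simpa using (mem_filter.mp hj).1
  refine IsPathWalk.optTime_le (hv.2.1 1 (by norm_num)) (hv.1 1 (by norm_num))
    (hpos.injOn.mono hsub) (by omega) (fun hq => ?_)
    (fun hq => hv.exists_le_right hsv (by omega)) fun j hj => hv.serve_tasksOf hj
  obtain ⟨j, hj, hjq⟩ :=
    exists_mem_le_sub_card (S := tasksOf f m 1) (card_pos.mp (by omega)) (filter_subset _ _)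
  obtain ⟨a, ha, hwa⟩ := hv.serve_tasksOf hj
  refine ⟨a, by omega, (hwa 0 (Nat.zero_le _)) ▸ ?_⟩
  exact hpos.monotoneOn (hsub hj) (show _ < m by omega) (by omega)

end TwoRobots

/-- An idle robot must not stand between the other robot and its tasks. -/
def IsAdmissibleSplit (pos : ℕ → ℕ) (svL svR m q : ℕ) : Prop :=
  (q = 0 → 0 < m → svL < pos 0) ∧ (q = m → 0 < m → pos (m - 1) < svR)

def splitTime (pos : ℕ → ℕ) (δ svL svR m q : ℕ) : ℕ :=
  max (optTime pos (fun _ => δ) svL 0 q) (optTime pos (fun _ => δ) svR q m)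

section Construction

variable {n m svL svR δ q : ℕ} {pos : ℕ → ℕ}

lemma blockTours_lt (hpos : StrictMonoOn pos (Set.Iio m)) (hsv : svL < svR) (hq : q ≤ m)
    (hadm : IsAdmissibleSplit pos svL svR m q) {wl wr : ℕ → ℕ} {Pl Pr : Finset ℕ}
    (hl : IsTour wl svL (min (pos 0) svL) (max (pos (q - 1)) svL) δ Pl
      (optTime pos (fun _ => δ) svL 0 q))
    (hl' : 0 < q → pos (q - 1) ≤ svL → ∀ t, wl t ≤ max (svL - t) (pos (q - 1)))
    (hr : IsTour wr svR (min (pos q) svR) (max (pos (m - 1)) svR) δ Pr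
      (optTime pos (fun _ => δ) svR q m))
    (hr' : q < m → svR ≤ pos q → ∀ t, min (svR + t) (pos q) ≤ wr t) (t : ℕ) :
    wl t < wr t := by
  have hlmem := hl.mem t
  have hrmem := hr.mem t
  rcases Nat.eq_zero_or_pos q with rfl | hq0
  · rw [hl.eq_start (optTime_of_le le_rfl)]
    rcases Nat.eq_zero_or_pos m with rfl | hm0
    · rw [hr.eq_start (optTime_of_le le_rfl)]
      exact hsv
    · have := hadm.1 rfl hm0
      omega
  rcases hq.eq_or_lt with rfl | hqm
  · rw [hr.eq_start (optTime_of_le le_rfl)]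
    have := hadm.2 rfl hq0
    omega
  have hgap : pos (q - 1) < pos q := hpos (show q - 1 < m by omega) hqm (by omega)
  -- Overlapping ranges force one block to lie wholly beyond the other robot's start; the robot
  -- serving it heads there at full speed, so it stays ahead of its partner.
  rcases le_or_gt svR (pos (q - 1)) with h | h
  · have := hr' hqm (by omega) t
    have := hl.walk.le_add t
    rw [hl.start] at this
    omega
  rcases le_or_gt (pos q) svL with h' | h'
  · have := hl' hq0 (by omega) t
    have := hr.walk.le_add t
    rw [hr.start] at this
    omega
  omega

lemma pathValid_of_tours {T : ℕ} {wl wr : ℕ → ℕ} {Al Bl Ar Br : ℕ}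
    (hl : IsTour wl svL Al Bl δ ((Ico 0 q).image pos) T)
    (hr : IsTour wr svR Ar Br δ ((Ico q m).image pos) T)
    (hlb : ∀ t, 1 ≤ wl t ∧ wl t ≤ n) (hrb : ∀ t, 1 ≤ wr t ∧ wr t ≤ n)
    (hlt : ∀ t, wl t < wr t) :
    PathValid n 2 m (fun r => if r = 0 then svL else svR) pos (fun _ => δ)
      (fun r => if r = 0 then wl else wr) (fun _ => T) (fun j => if j < q then 0 else 1) := by
  refine ⟨fun r hr₂ => ?_, fun r hr₂ => ?_, fun r hr₂ => ?_, fun r hr₂ => ?_,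
    fun t r hr₂ r' hr₂' hne => ?_, fun j _ => ?_, fun j hj => ?_⟩
  · interval_cases r
    exacts [hl.start, hr.start]
  · interval_cases r
    exacts [hl.walk, hr.walk]
  · interval_cases r
    exacts [hlb, hrb]
  · interval_cases r
    exacts [hl.idle, hr.idle]
  · have := hlt t
    have := hlt (t + 1)
    interval_cases r <;> interval_cases r' <;> simp only [ne_eq, not_true_eq_false, one_ne_zero,
      if_true, if_false] at hne ⊢ <;> omega
  · dsimp only
    split_ifs <;> norm_num
  · by_cases hjq : j < q
    · simpa [hjq] using hl.serve (pos j) (mem_image_of_mem pos (mem_Ico.mpr ⟨Nat.zero_le j, hjq⟩))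
    · simpa [hjq] using hr.serve (pos j) (mem_image_of_mem pos (mem_Ico.mpr ⟨by omega, hj⟩))

lemma exists_pathValid_of_admissible (hpos : StrictMonoOn pos (Set.Iio m))
    (hposb : ∀ j < m, 1 ≤ pos j ∧ pos j ≤ n) (hsvb : 1 ≤ svL ∧ svR ≤ n) (hsv : svL < svR)
    (hq : q ≤ m) (hadm : IsAdmissibleSplit pos svL svR m q) :
    ∃ w L f, PathValid n 2 m (fun r => if r = 0 then svL else svR) pos (fun _ => δ) w L f ∧
      (range 2).sup L = splitTime pos δ svL svR m q := by
  obtain ⟨wl, hl, -, hl'⟩ := exists_blockTour (s := svL) (δ := δ) (a := 0) (b := q)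
    (hpos.mono fun j hj => by simp only [Set.mem_Ico, Set.mem_Iio] at hj ⊢; omega)
  obtain ⟨wr, hr, hr', -⟩ := exists_blockTour (s := svR) (δ := δ) (a := q) (b := m)
    (hpos.mono fun j hj => by simp only [Set.mem_Ico, Set.mem_Iio] at hj ⊢; omega)
  refine ⟨_, _, _, pathValid_of_tours (hl.mono_time (le_max_left _ _))
    (hr.mono_time (le_max_right _ _))
    (hl.block_bounds ⟨hsvb.1, by omega⟩ fun j _ hj => hposb j (by omega))
    (hr.block_bounds ⟨by omega, hsvb.2⟩ fun j _ hj => hposb j hj)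
    (blockTours_lt hpos hsv hq hadm hl hl' hr hr'), sup_const nonempty_range_add_one _⟩

/-- If an optimal split leaves the left robot idle at or beyond the first task, handing that task
to it does not increase the time span; symmetrically for the right robot. -/
lemma exists_admissible_split (hpos : StrictMonoOn pos (Set.Iio m)) (hsv : svL < svR) :
    ∃ q ≤ m, IsAdmissibleSplit pos svL svR m q ∧
      ∀ q' ≤ m, splitTime pos δ svL svR m q ≤ splitTime pos δ svL svR m q' := by
  obtain ⟨q₀, hq₀, hmin⟩ :=
    (range (m + 1)).exists_min_image (splitTime pos δ svL svR m) nonempty_range_add_one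
  rw [mem_range] at hq₀
  replace hmin : ∀ q' ≤ m, splitTime pos δ svL svR m q₀ ≤ splitTime pos δ svL svR m q' :=
    fun q' hq' => hmin q' (mem_range.mpr (by omega))
  have hmono : MonotoneOn pos (Set.Ico 0 m) := hpos.monotoneOn.mono fun j hj => hj.2
  by_cases h₀ : q₀ = 0 ∧ 0 < m ∧ pos 0 ≤ svL
  · obtain ⟨rfl, hm, hp⟩ := h₀
    refine ⟨1, hm, ⟨by omega, fun h1 _ => ?_⟩, fun q' hq' => le_trans ?_ (hmin q' hq')⟩
    · rw [← h1]
      exact hp.trans_lt hsv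
    unfold splitTime
    rw [optTime_of_le le_rfl, max_eq_right (Nat.zero_le _)]
    exact max_le (optTime_first_le hp hsv.le hm) (optTime_subblock_le hmono (Nat.zero_le 1) le_rfl)
  by_cases hₘ : q₀ = m ∧ 0 < m ∧ svR ≤ pos (m - 1)
  · obtain ⟨rfl, hm, hp⟩ := hₘ
    refine ⟨q₀ - 1, by omega, ⟨fun h0 _ => ?_, by omega⟩, fun q' hq' => le_trans ?_ (hmin q' hq')⟩
    · rw [h0] at hp
      omega
    unfold splitTime
    rw [optTime_of_le (le_refl q₀), max_eq_left (Nat.zero_le _)]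
    exact max_le (optTime_subblock_le hmono le_rfl (Nat.sub_le _ _)) (optTime_last_le hp hsv.le hm)
  exact ⟨q₀, by omega, ⟨fun h0 hm => lt_of_not_ge fun hp => h₀ ⟨h0, hm, hp⟩,
    fun h1 hm => lt_of_not_ge fun hp => hₘ ⟨h1, hm, hp⟩⟩, hmin⟩

end Construction

/-- for 2 robots on a path with `m` tasks of common duration `δ`,
the optimal time span equals
`min_{q ∈ [0,m]} max (W_L q) (W_R q)`, where `W_L q` is the single-robot
optimal completion time of tasks `t_1, …, t_q` from `svL` and `W_R q` that of
`t_{q+1}, …, t_m` from `svR`. -/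
theorem two_robot_equal_duration_optimum (n m svL svR : ℕ) (pos : ℕ → ℕ)
    (δ : ℕ) (hsv : svL < svR)
    (hmono : ∀ j, j + 1 < m → pos j < pos (j + 1))
    (hposb : ∀ j < m, 1 ≤ pos j ∧ pos j ≤ n)
    (hsvb : 1 ≤ svL ∧ svR ≤ n) :
    IsLeast {T | ∃ w L f,
        PathValid n 2 m (fun r => if r = 0 then svL else svR) pos
          (fun _ => δ) w L f ∧
        (Finset.range 2).sup L = T}
      (Finset.inf' (Finset.range (m + 1)) Finset.nonempty_range_add_one
        (fun q => max (optTime pos (fun _ => δ) svL 0 q)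
          (optTime pos (fun _ => δ) svR q m))) := by
  have hpos : StrictMonoOn pos (Set.Iio m) :=
    (strictMonoOn_Iic_of_lt_succ (n := m - 1) fun j hj => hmono j (by omega)).mono
      fun j hj => by simp only [Set.mem_Iio, Set.mem_Iic] at hj ⊢; omega
  obtain ⟨q, hq, hadm, hmin⟩ := exists_admissible_split (δ := δ) hpos hsv
  have hopt : (range (m + 1)).inf' nonempty_range_add_one (splitTime pos δ svL svR m) =
      splitTime pos δ svL svR m q :=
    le_antisymm (inf'_le _ (mem_range.mpr (by omega)))
      (le_inf' _ _ fun q' hq' => hmin q' (Nat.lt_succ_iff.mp (mem_range.mp hq')))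
  refine ⟨hopt ▸ exists_pathValid_of_admissible hpos hposb hsvb hsv hq hadm, ?_⟩
  rintro _ ⟨w, L, f, hv, rfl⟩
  have hq' : #(tasksOf f m 0) ≤ m := by have := hv.card_tasksOf_add; omega
  calc (range (m + 1)).inf' nonempty_range_add_one (splitTime pos δ svL svR m)
      ≤ splitTime pos δ svL svR m #(tasksOf f m 0) := inf'_le _ (mem_range.mpr (by omega))
    _ ≤ max (L 0) (L 1) :=
      max_le_max (hv.optTime_left_le hpos hsv) (hv.optTime_right_le hpos hsv)
    _ = (range 2).sup L := by simp [range_add_one, max_comm]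
end

section
/- On a star graph with two robots starting at distinct leaves and all tasks located at other leaves with even durations, there exists a collision-free pair of schedules in which, after robot R_2 waits one initial timestep, robot R_1 occupies the center vertex only at odd timesteps and robot R_2 only at even timesteps, each robot sequentially visiting and completing its assigned tasks; the schedules have time spans Σ_{tasks assigned to R_1}(d_t + 2) and 1 + Σ_{tasks assigned to R_2}(d_t + 2) respectively. -/
/-!
Each robot runs through its tasks in turn, spending one step at the center and then
`d j + 1` steps at the leaf of task `j`. Since every `d j` is even, a robot starting at
time `0` is at the center only at odd times; robot `1` starts one step late, so it is at
the center only at even times. The two robots own disjoint sets of leaves, so they can only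
meet at the center, and there the parities keep them apart, both for vertex and for edge
collisions.
-/

open Finset

namespace StarSchedule

def IsStarWalk {γ : Type*} (w : ℕ → Option γ) : Prop :=
  ∀ t, w (t + 1) = w t ∨ w (t + 1) = none ∨ w t = none

lemma IsStarWalk.comp_sub {γ : Type*} {w : ℕ → Option γ} (hw : IsStarWalk w) (k : ℕ) :
    IsStarWalk fun t => w (t - k) := by
  intro t
  rcases le_or_gt k t with h | h
  · simpa only [Nat.sub_add_comm h] using hw (t - k)
  · have h' : t + 1 - k = 0 := Nat.sub_eq_zero_of_le h
    exact .inl (by simp only [h', Nat.sub_eq_zero_of_le h.le])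

section Tour

variable {ι β : Type*} (d : ι → ℕ)

def tour : List ι → Option (ι ⊕ β) → ℕ → Option (ι ⊕ β)
  | [], s, _ => s
  | j :: js, s, t =>
    if t = 0 then s
    else if t = 1 then none
    else if t ≤ d j + 2 then some (.inl j)
    else tour js (some (.inl j)) (t - (d j + 2))

def tourLength (js : List ι) : ℕ := (js.map fun j => d j + 2).sum

@[simp]
lemma tourLength_cons (j : ι) (js : List ι) :
    tourLength d (j :: js) = d j + 2 + tourLength d js := by
  simp [tourLength]

@[simp]
lemma tour_zero (js : List ι) (s : Option (ι ⊕ β)) : tour d js s 0 = s := by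
  cases js <;> simp [tour]

lemma tour_cons_one (j : ι) (js : List ι) (s : Option (ι ⊕ β)) :
    tour d (j :: js) s 1 = none := by
  simp [tour]

lemma tour_cons_of_le (j : ι) (js : List ι) (s : Option (ι ⊕ β)) {t : ℕ}
    (h₁ : 2 ≤ t) (h₂ : t ≤ d j + 2) : tour d (j :: js) s t = some (.inl j) := by
  rw [tour, if_neg (by omega), if_neg (by omega), if_pos h₂]

lemma tour_cons_of_ge (j : ι) (js : List ι) (s : Option (ι ⊕ β)) {t : ℕ}
    (h : d j + 2 ≤ t) : tour d (j :: js) s t = tour d js (some (.inl j)) (t - (d j + 2)) := by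
  obtain rfl | h := h.eq_or_lt
  · rw [Nat.sub_self, tour_zero, tour_cons_of_le d j js s (by omega) le_rfl]
  · rw [tour, if_neg (by omega), if_neg (by omega), if_neg (by omega)]

lemma tour_of_tourLength_le (s : Option (ι ⊕ β)) :
    ∀ (js : List ι) {t : ℕ}, tourLength d js ≤ t →
      tour d js s t = tour d js s (tourLength d js)
  | [], _, _ => rfl
  | j :: js, t, h => by
    rw [tourLength_cons] at h ⊢
    rw [tour_cons_of_ge d j js s (by omega), tour_cons_of_ge d j js s (by omega),
      Nat.add_sub_cancel_left]
    exact tour_of_tourLength_le _ js (by omega)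

lemma tour_mem :
    ∀ (js : List ι) (s : Option (ι ⊕ β)) (t : ℕ),
      tour d js s t = s ∨ tour d js s t = none ∨ ∃ j ∈ js, tour d js s t = some (.inl j)
  | [], _, _ => .inl rfl
  | j :: js, s, t => by
    obtain rfl | rfl | ⟨h₁, h₂⟩ | h :
        t = 0 ∨ t = 1 ∨ (2 ≤ t ∧ t ≤ d j + 2) ∨ d j + 2 ≤ t := by
      omega
    · exact .inl (tour_zero d _ s)
    · exact .inr (.inl (tour_cons_one d j js s))
    · exact .inr (.inr ⟨j, List.mem_cons_self, tour_cons_of_le d j js s h₁ h₂⟩)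
    · rw [tour_cons_of_ge d j js s h]
      obtain h' | h' | ⟨j', hj', h'⟩ := tour_mem js (some (.inl j)) (t - (d j + 2))
      · exact .inr (.inr ⟨j, List.mem_cons_self, h'⟩)
      · exact .inr (.inl h')
      · exact .inr (.inr ⟨j', List.mem_cons_of_mem j hj', h'⟩)

lemma exists_tour_visit (s : Option (ι ⊕ β)) :
    ∀ {js : List ι} {j : ι}, j ∈ js →
      ∃ a, a + d j ≤ tourLength d js ∧ ∀ u ≤ d j, tour d js s (a + u) = some (.inl j)
  | j' :: js, j, h => by
    obtain rfl | hj := List.mem_cons.mp h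
    · refine ⟨2, by rw [tourLength_cons]; omega, fun u hu => ?_⟩
      exact tour_cons_of_le d j js s (by omega) (by omega)
    · obtain ⟨a, ha, hvisit⟩ := exists_tour_visit (some (.inl j')) hj
      refine ⟨a + (d j' + 2), by rw [tourLength_cons]; omega, fun u hu => ?_⟩
      rw [tour_cons_of_ge d j' js s (by omega), Nat.add_right_comm, Nat.add_sub_cancel]
      exact hvisit u hu

lemma odd_of_tour_eq_none (heven : ∀ j, Even (d j)) :
    ∀ (js : List ι) (v : ι ⊕ β) {t : ℕ}, tour d js (some v) t = none → Odd t
  | [], _, _, h => by simp [tour] at h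
  | j :: js, v, t, h => by
    obtain rfl | rfl | ⟨h₁, h₂⟩ | hge :
        t = 0 ∨ t = 1 ∨ (2 ≤ t ∧ t ≤ d j + 2) ∨ d j + 2 ≤ t := by
      omega
    · simp at h
    · exact odd_one
    · simp [tour_cons_of_le d j js _ h₁ h₂] at h
    · rw [tour_cons_of_ge d j js _ hge] at h
      have hodd := odd_of_tour_eq_none heven js (.inl j) h
      rw [← Nat.sub_add_cancel hge]
      exact hodd.add_even ((heven j).add even_two)

lemma isStarWalk_tour :
    ∀ (js : List ι) (s : Option (ι ⊕ β)), IsStarWalk (tour d js s)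
  | [], _, _ => .inl rfl
  | j :: js, s, t => by
    obtain rfl | rfl | ⟨h₁, h₂⟩ | h :
        t = 0 ∨ t = 1 ∨ (2 ≤ t ∧ t + 1 ≤ d j + 2) ∨ d j + 2 ≤ t := by
      omega
    · exact .inr (.inl (tour_cons_one d j js s))
    · exact .inr (.inr (tour_cons_one d j js s))
    · rw [tour_cons_of_le d j js s (by omega) h₂, tour_cons_of_le d j js s h₁ (by omega)]
      exact .inl rfl
    · rw [tour_cons_of_ge d j js s (by omega), tour_cons_of_ge d j js s h, Nat.sub_add_comm h]
      exact isStarWalk_tour js _ _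

end Tour

noncomputable section TwoRobots

variable {m : ℕ} (d : Fin m → ℕ) (f : Fin m → Fin 2)

def robotTasks (r : Fin 2) : List (Fin m) := (univ.filter fun j => f j = r).toList

def robotWalk (r : Fin 2) (t : ℕ) : Option (Fin m ⊕ Fin 2) :=
  tour d (robotTasks f r) (some (.inr r)) (t - r)

def robotSpan (r : Fin 2) : ℕ := r + tourLength d (robotTasks f r)

lemma mem_robotTasks {r : Fin 2} {j : Fin m} : j ∈ robotTasks f r ↔ f j = r := by
  simp [robotTasks]

lemma robotWalk_of_le (r : Fin 2) {t : ℕ} (h : t ≤ r) : robotWalk d f r t = some (.inr r) := by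
  simp [robotWalk, Nat.sub_eq_zero_of_le h]

lemma isStarWalk_robotWalk (r : Fin 2) : IsStarWalk (robotWalk d f r) :=
  (isStarWalk_tour d _ _).comp_sub r

lemma robotWalk_of_robotSpan_le (r : Fin 2) {t : ℕ} (h : robotSpan d f r ≤ t) :
    robotWalk d f r t = robotWalk d f r (robotSpan d f r) := by
  unfold robotWalk robotSpan at *
  rw [Nat.add_sub_cancel_left, tour_of_tourLength_le d _ _ (by omega)]

lemma exists_robotWalk_visit (j : Fin m) :
    ∃ a, a + d j ≤ robotSpan d f (f j) ∧
      ∀ u ≤ d j, robotWalk d f (f j) (a + u) = some (.inl j) := by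
  obtain ⟨a, ha, hvisit⟩ :=
    exists_tour_visit d (some (.inr (f j))) ((mem_robotTasks f (j := j)).mpr rfl)
  refine ⟨a + f j, by unfold robotSpan; omega, fun u hu => ?_⟩
  rw [robotWalk, show a + f j + u - f j = a + u by omega]
  exact hvisit u hu

lemma robotSpan_eq (r : Fin 2) :
    robotSpan d f r = r + ∑ j ∈ univ.filter (fun j => f j = r), (d j + 2) := by
  rw [robotSpan, tourLength, robotTasks, sum_map_toList]

lemma odd_of_robotWalk_eq_none (heven : ∀ j, Even (d j)) {r : Fin 2} {t : ℕ}
    (h : robotWalk d f r t = none) : Odd (t + r) := by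
  obtain ⟨k, hk⟩ := odd_of_tour_eq_none d heven _ _ h
  exact ⟨k + r, by omega⟩

lemma sum_elim_eq_of_robotWalk_eq_some {r : Fin 2} {t : ℕ} {v : Fin m ⊕ Fin 2}
    (h : robotWalk d f r t = some v) : Sum.elim f id v = r := by
  rw [robotWalk] at h
  obtain h' | h' | ⟨j, hj, h'⟩ := tour_mem d (robotTasks f r) (some (.inr r)) (t - r)
  · rw [h', Option.some_inj] at h
    simp [← h]
  · simp [h'] at h
  · rw [h', Option.some_inj] at h
    simpa [← h] using (mem_robotTasks f).mp hj

lemma robotWalk_eq_none_of_eq {r r' : Fin 2} (hr : r ≠ r') {t t' : ℕ}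
    (h : robotWalk d f r t = robotWalk d f r' t') : robotWalk d f r t = none := by
  cases hw : robotWalk d f r t with
  | none => rfl
  | some v =>
    rw [hw] at h
    exact absurd ((sum_elim_eq_of_robotWalk_eq_some d f hw).symm.trans
      (sum_elim_eq_of_robotWalk_eq_some d f h.symm)) hr

lemma not_both_robotWalk_eq_none (heven : ∀ j, Even (d j)) {r r' : Fin 2} (hr : r ≠ r')
    (t : ℕ) : ¬(robotWalk d f r t = none ∧ robotWalk d f r' t = none) := by
  rintro ⟨h, h'⟩
  obtain ⟨a, ha⟩ := odd_of_robotWalk_eq_none d f heven h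
  obtain ⟨b, hb⟩ := odd_of_robotWalk_eq_none d f heven h'
  have := Fin.val_ne_of_ne hr
  omega

lemma robotWalk_collisionFree (heven : ∀ j, Even (d j)) {r r' : Fin 2} (hr : r ≠ r') (t : ℕ) :
    robotWalk d f r t ≠ robotWalk d f r' t ∧
      ¬(robotWalk d f r (t + 1) = robotWalk d f r' t ∧
        robotWalk d f r' (t + 1) = robotWalk d f r t ∧
        robotWalk d f r t ≠ robotWalk d f r (t + 1)) := by
  have hcenter := not_both_robotWalk_eq_none d f heven hr t
  refine ⟨fun h => hcenter ⟨?_, ?_⟩, fun ⟨h₁, h₂, _⟩ => hcenter ⟨?_, ?_⟩⟩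
  · exact robotWalk_eq_none_of_eq d f hr h
  · exact robotWalk_eq_none_of_eq d f hr.symm h.symm
  · exact robotWalk_eq_none_of_eq d f hr h₂.symm
  · exact robotWalk_eq_none_of_eq d f hr.symm h₁.symm

end TwoRobots

end StarSchedule

open StarSchedule

theorem star_parity_schedule_general (m : ℕ) (d : Fin m → ℕ)
    (heven : ∀ j, 2 ∣ d j) (f : Fin m → Fin 2) :
    ∃ (w : Fin 2 → ℕ → Option (Fin m ⊕ Fin 2)) (L : Fin 2 → ℕ),
      (∀ r, w r 0 = some (Sum.inr r)) ∧
      (∀ r t, w r (t + 1) = w r t ∨ w r (t + 1) = none ∨ w r t = none) ∧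
      (∀ r t, L r ≤ t → w r t = w r (L r)) ∧
      (∀ (t : ℕ) (r r' : Fin 2), r ≠ r' →
        w r t ≠ w r' t ∧
        ¬(w r (t + 1) = w r' t ∧ w r' (t + 1) = w r t ∧ w r t ≠ w r (t + 1))) ∧
      w 1 1 = some (Sum.inr 1) ∧
      (∀ t, w 0 t = none → Odd t) ∧
      (∀ t, w 1 t = none → Even t) ∧
      (∀ j : Fin m, ∃ a, a + d j ≤ L (f j) ∧
        ∀ u ≤ d j, w (f j) (a + u) = some (Sum.inl j)) ∧
      L 0 = ∑ j ∈ Finset.univ.filter (fun j => f j = 0), (d j + 2) ∧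
      L 1 = 1 + ∑ j ∈ Finset.univ.filter (fun j => f j = 1), (d j + 2) := by
  have heven' : ∀ j, Even (d j) := fun j => even_iff_two_dvd.mpr (heven j)
  refine ⟨robotWalk d f, robotSpan d f, fun r => robotWalk_of_le d f r (Nat.zero_le _),
    isStarWalk_robotWalk d f, fun r _ => robotWalk_of_robotSpan_le d f r,
    fun t _ _ hr => robotWalk_collisionFree d f heven' hr t, robotWalk_of_le d f 1 le_rfl,
    fun t h => by simpa using odd_of_robotWalk_eq_none d f heven' h,
    fun t h => by simpa [Nat.odd_add_one] using odd_of_robotWalk_eq_none d f heven' h,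
    exists_robotWalk_visit d f, by simp [robotSpan_eq], robotSpan_eq d f 1⟩

/-- on the star graph (center `none`, task leaves `some (inl j)`
with task `j` of even duration `d j ≥ 2`, robot leaves `some (inr r)`), for any
assignment `f` of tasks to the two robots, there is a collision-free pair of
schedules in which (after robot `1` waits one initial timestep) robot `0`
occupies the center only at odd timesteps and robot `1` only at even ones, each
robot completing its assigned tasks, with time spans
`Σ_{f j = 0} (d j + 2)` and `1 + Σ_{f j = 1} (d j + 2)` respectively. -/
theorem star_parity_schedule (m : ℕ) (d : Fin m → ℕ)
    (hd2 : ∀ j, 2 ≤ d j) (heven : ∀ j, 2 ∣ d j) (f : Fin m → Fin 2) :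
    ∃ (w : Fin 2 → ℕ → Option (Fin m ⊕ Fin 2)) (L : Fin 2 → ℕ),
      (∀ r, w r 0 = some (Sum.inr r)) ∧
      (∀ r t, w r (t + 1) = w r t ∨ w r (t + 1) = none ∨ w r t = none) ∧
      (∀ r t, L r ≤ t → w r t = w r (L r)) ∧
      (∀ (t : ℕ) (r r' : Fin 2), r ≠ r' →
        w r t ≠ w r' t ∧
        ¬(w r (t + 1) = w r' t ∧ w r' (t + 1) = w r t ∧ w r t ≠ w r (t + 1))) ∧
      w 1 1 = some (Sum.inr 1) ∧
      (∀ t, w 0 t = none → Odd t) ∧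
      (∀ t, w 1 t = none → Even t) ∧
      (∀ j : Fin m, ∃ a, a + d j ≤ L (f j) ∧
        ∀ u ≤ d j, w (f j) (a + u) = some (Sum.inl j)) ∧
      L 0 = ∑ j ∈ Finset.univ.filter (fun j => f j = 0), (d j + 2) ∧
      L 1 = 1 + ∑ j ∈ Finset.univ.filter (fun j => f j = 1), (d j + 2) :=
  star_parity_schedule_general m d heven f
end
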